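/- arXiv:1912.08551 — 8 statements merged into one kernel-verified Lean document; each statement's English description precedes it below -/
import Mathlib

section
/- For every signed permutation π of {±1,…,±n} and every k with 1 ≤ k ≤ n, the width-k type-B inversion number of π equals the sum over all m ≥ 1 of the number of width-mk descents of π plus the number of width-mk negative descents of π; that is, inv_k^B(π) = Σ_{m≥1} (des_{mk}^B(π) + ndes_{mk}^B(π)). -/
open Finset

/-- The value function of the signed permutation determined by `σ` and sign vector `ε`:
`bval n σ ε i` is `π(i)` for `i ∈ {-n,…,n}`, with `π(0) = 0` and `π(-i) = -π(i)`. -/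
def bval (n : ℕ) (σ : Equiv.Perm (Fin n)) (ε : Fin n → Bool) : ℤ → ℤ := fun i =>
  if h : 1 ≤ i.natAbs ∧ i.natAbs ≤ n then
    (Int.sign i) *
      (if ε ⟨i.natAbs - 1, by omega⟩ then -((((σ ⟨i.natAbs - 1, by omega⟩ : Fin n) : ℕ) : ℤ) + 1)
       else (((σ ⟨i.natAbs - 1, by omega⟩ : Fin n) : ℕ) : ℤ) + 1)
  else 0

/-- width-`k` type-B descent number: `#{0 ≤ i ≤ n-k : π(i) > π(i+k)}`, `π(0)=0`. -/
def desB (n k : ℕ) (π : ℤ → ℤ) : ℕ :=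
  ((range (n - k + 1)).filter fun i : ℕ => π i > π ((i : ℤ) + k)).card

/-- width-`k` type-A descent number: `#{1 ≤ i ≤ n-k : π(i) > π(i+k)}`. -/
def desA (n k : ℕ) (π : ℤ → ℤ) : ℕ :=
  ((Icc 1 (n - k)).filter fun i : ℕ => π i > π ((i : ℤ) + k)).card

/-- width-`k` negative descent number: `#{1 ≤ i ≤ n-k : π(-i) > π(i+k)}`. -/
def ndesB (n k : ℕ) (π : ℤ → ℤ) : ℕ :=
  ((Icc 1 (n - k)).filter fun i : ℕ => π (-(i : ℤ)) > π ((i : ℤ) + k)).card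

/-- width-`k` inversion number: pairs `i < j` in `[n]` with `j - i` a positive multiple of `k`
and `π(i) > π(j)`. -/
def invAk (n k : ℕ) (π : ℤ → ℤ) : ℕ :=
  (((Icc 1 n) ×ˢ (Icc 1 n)).filter fun p : ℕ × ℕ =>
    p.1 < p.2 ∧ k ∣ (p.2 - p.1) ∧ π p.1 > π p.2).card

/-- width-`k` negative-entry statistic: `#{1 ≤ i ≤ ⌊n/k⌋ : π(ik) < 0}`. -/
def negk (n k : ℕ) (π : ℤ → ℤ) : ℕ :=
  ((Icc 1 (n / k)).filter fun i : ℕ => π ((i : ℤ) * k) < 0).card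

/-- width-`k` negative-sum-pair statistic. -/
def nspk (n k : ℕ) (π : ℤ → ℤ) : ℕ :=
  (((Icc 1 n) ×ˢ (Icc 1 n)).filter fun p : ℕ × ℕ =>
    p.1 < p.2 ∧ k ∣ (p.2 - p.1) ∧ π p.1 + π p.2 < 0).card

/-- width-`k` type-B inversion number. -/
def invBk (n k : ℕ) (π : ℤ → ℤ) : ℕ := invAk n k π + negk n k π + nspk n k π

/-!
Sorting the pairs `i < j` with `k ∣ j - i` by `m = (j - i) / k`, the inversions of width `k` become
the type-A descents of width `mk`, and the negative-sum pairs become the negative descents of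
width `mk`, since `π(-i) = -π(i)`. What a type-B descent of width `mk` adds to a type-A one is
the index `0`, a descent exactly when `π(mk) < 0` because `π(0) = 0`; these are the negative
entries counted by `neg_k`, as `π(mk) = 0` once `mk > n`.
-/

section WidthStatistics

variable {n k : ℕ} {π : ℤ → ℤ}

lemma card_filter_pairs_dvd_sub_eq_sum (hk : 0 < k) (P : ℕ → ℕ → Prop) [DecidableRel P] :
    (((Icc 1 n) ×ˢ (Icc 1 n)).filter fun p : ℕ × ℕ =>
      p.1 < p.2 ∧ k ∣ (p.2 - p.1) ∧ P p.1 p.2).card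
    = ∑ m ∈ Icc 1 n, ((Icc 1 (n - m * k)).filter fun i => P i (i + m * k)).card := by
  have eq_add_quot_mul : ∀ {i j : ℕ}, i < j → k ∣ j - i → j = i + (j - i) / k * k :=
    fun hlt hdvd => by rw [Nat.div_mul_cancel hdvd]; omega
  rw [card_eq_sum_card_fiberwise (f := fun p : ℕ × ℕ => (p.2 - p.1) / k) (t := Icc 1 n)]
  · refine sum_congr rfl fun m hm => ?_
    have hmk : 0 < m * k := Nat.mul_pos (mem_Icc.1 hm).1 hk
    apply card_nbij' Prod.fst (fun i => (i, i + m * k))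
    · rintro ⟨i, j⟩ hp
      simp only [mem_coe, mem_filter, mem_product, mem_Icc] at hp ⊢
      obtain ⟨⟨⟨⟨hi, -⟩, -, hj⟩, hlt, hdvd, hP⟩, rfl⟩ := hp
      have hj' := eq_add_quot_mul hlt hdvd
      exact ⟨⟨hi, by omega⟩, hj' ▸ hP⟩
    · intro i hi
      simp only [mem_coe, mem_filter, mem_product, mem_Icc] at hi ⊢
      have hsub : i + m * k - i = m * k := by omega
      refine ⟨⟨⟨⟨hi.1.1, by omega⟩, by omega, by omega⟩, by omega, ?_, hi.2⟩, ?_⟩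
      · rw [hsub]; exact Dvd.intro_left m rfl
      · rw [hsub, Nat.mul_div_cancel _ hk]
    · rintro ⟨i, j⟩ hp
      simp only [mem_coe, mem_filter] at hp
      obtain ⟨⟨-, hlt, hdvd, -⟩, rfl⟩ := hp
      exact Prod.ext rfl (eq_add_quot_mul hlt hdvd).symm
    · intro i _
      rfl
  · rintro ⟨i, j⟩ hp
    simp only [mem_coe, mem_filter, mem_product, mem_Icc] at hp ⊢
    obtain ⟨⟨-, -, hjn⟩, hlt, hdvd, -⟩ := hp
    exact ⟨Nat.div_pos (Nat.le_of_dvd (by omega) hdvd) hk,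
      (Nat.div_le_self _ _).trans (by omega)⟩

lemma invAk_eq_sum_desA (hk : 0 < k) :
    invAk n k π = ∑ m ∈ Icc 1 n, desA n (m * k) π := by
  rw [invAk, card_filter_pairs_dvd_sub_eq_sum hk fun i j => π i > π j]
  simp only [desA, Nat.cast_add]

lemma nspk_eq_sum_ndesB (hk : 0 < k) (hπ : Function.Odd π) :
    nspk n k π = ∑ m ∈ Icc 1 n, ndesB n (m * k) π := by
  rw [nspk, card_filter_pairs_dvd_sub_eq_sum hk fun i j => π i + π j < 0]
  refine sum_congr rfl fun m _ => congrArg card (filter_congr fun i _ => ?_)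
  rw [hπ, Nat.cast_add]
  constructor <;> intro h <;> linarith

lemma desB_eq_desA_add_ite (hπ : π 0 = 0) (K : ℕ) :
    desB n K π = desA n K π + if π K < 0 then 1 else 0 := by
  have hrange : range (n - K + 1) = insert 0 (Icc 1 (n - K)) := by
    ext j
    simp only [mem_range, mem_insert, mem_Icc]
    omega
  rw [desB, desA, hrange, filter_insert]
  simp only [Nat.cast_zero, zero_add, hπ, gt_iff_lt]
  split_ifs
  · exact card_insert_of_notMem (by simp)
  · rfl

lemma negk_eq_sum_ite (hk : 0 < k) (hπ : ∀ x : ℤ, n < x.natAbs → π x = 0) :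
    negk n k π = ∑ m ∈ Icc 1 n, if π ↑(m * k) < 0 then 1 else 0 := by
  rw [negk, ← card_filter]
  congr 1
  ext m
  simp only [mem_filter, mem_Icc, Nat.cast_mul]
  constructor
  · rintro ⟨⟨hm, hmn⟩, hneg⟩
    exact ⟨⟨hm, hmn.trans (Nat.div_le_self n k)⟩, hneg⟩
  · rintro ⟨⟨hm, -⟩, hneg⟩
    have hmk : m * k ≤ n := by
      by_contra! hlt
      refine hneg.ne (hπ _ ?_)
      rw [← Nat.cast_mul, Int.natAbs_natCast]
      exact hlt
    exact ⟨⟨hm, (Nat.le_div_iff_mul_le hk).2 hmk⟩, hneg⟩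

theorem invBk_eq_sum_desB_add_ndesB (hk : 0 < k) (hπ : Function.Odd π)
    (hπn : ∀ x : ℤ, n < x.natAbs → π x = 0) :
    invBk n k π = ∑ m ∈ Icc 1 n, (desB n (m * k) π + ndesB n (m * k) π) := by
  rw [invBk, invAk_eq_sum_desA hk, nspk_eq_sum_ndesB hk hπ, negk_eq_sum_ite hk hπn,
    ← sum_add_distrib, ← sum_add_distrib]
  exact sum_congr rfl fun m _ => by rw [desB_eq_desA_add_ite hπ.map_zero, add_right_comm]

end WidthStatistics

lemma bval_odd (n : ℕ) (σ : Equiv.Perm (Fin n)) (ε : Fin n → Bool) :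
    Function.Odd (bval n σ ε) := fun x => by
  unfold bval
  simp only [Int.natAbs_neg, Int.sign_neg]
  split_ifs <;> ring

lemma bval_eq_zero_of_lt_natAbs (n : ℕ) (σ : Equiv.Perm (Fin n)) (ε : Fin n → Bool) (x : ℤ)
    (hx : n < x.natAbs) : bval n σ ε x = 0 :=
  dif_neg (by omega)

theorem stmt0_general (n k : ℕ) (hk : 1 ≤ k)
    (σ : Equiv.Perm (Fin n)) (ε : Fin n → Bool) :
    invBk n k (bval n σ ε) =
      ∑ m ∈ Finset.Icc 1 n,
        (desB n (m * k) (bval n σ ε) + ndesB n (m * k) (bval n σ ε)) :=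
  invBk_eq_sum_desB_add_ndesB hk (bval_odd n σ ε) (bval_eq_zero_of_lt_natAbs n σ ε)

/-- Proposition 4: for any signed permutation `π ∈ B_n` and `1 ≤ k ≤ n`,
`inv_k^B(π) = Σ_{m ≥ 1} (des_{mk}^B(π) + ndes_{mk}^B(π))`; all terms with `m > n` vanish,
so the sum is taken over `1 ≤ m ≤ n`. -/
theorem stmt0 (n k : ℕ) (hk : 1 ≤ k) (hkn : k ≤ n)
    (σ : Equiv.Perm (Fin n)) (ε : Fin n → Bool) :
    invBk n k (bval n σ ε) =
      ∑ m ∈ Finset.Icc 1 n,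
        (desB n (m * k) (bval n σ ε) + ndesB n (m * k) (bval n σ ε)) :=
  stmt0_general n k hk σ ε
end

section
/- For every nonempty subset K of [n] and every signed permutation π in B_n, inv_K^B(π) = Σ over nonempty subsets K' of K of (-1)^{|K'|+1} inv_{lcm(K')}^B(π), where inv_m^B(π) is set to 0 whenever lcm(K') ≥ n+1. -/
open Finset

/-- The set `Inv_k^B(π)` of width-`k` type-B inversions of `π ∈ B_n`: pairs `(i, i+mk)`
with `0 ≤ i` and `π(i) > π(i+mk)`, or `(-i, i+mk)` with `π(-i) > π(i+mk)`, `m > 0`. -/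
noncomputable def InvBSet (n k : ℕ) (π : ℤ → ℤ) : Finset (ℤ × ℤ) :=
  ((Finset.Icc (-(n : ℤ)) (n : ℤ)) ×ˢ (Finset.Icc (1 : ℤ) (n : ℤ))).filter fun p =>
    π p.1 > π p.2 ∧
      ((0 ≤ p.1 ∧ p.1 < p.2 ∧ (k : ℤ) ∣ (p.2 - p.1)) ∨
       (p.1 < 0 ∧ -p.1 < p.2 ∧ (k : ℤ) ∣ (p.2 + p.1)))

/-!
A pair `(i, j)` is an inversion of width `k` exactly when it is an inversion of `π` with
`|i| < j` and `k ∣ j - |i|`. Hence a pair lies in `Inv_k^B(π)` for every `k ∈ K'` iff it lies in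
`Inv_{lcm K'}^B(π)`, and inclusion–exclusion over the union `⋃_{k ∈ K} Inv_k^B(π)` gives the
formula. For `lcm K' > n` the set is empty, since `0 < j - |i| ≤ n`.
-/

lemma mem_InvBSet {n k : ℕ} {π : ℤ → ℤ} {p : ℤ × ℤ} :
    p ∈ InvBSet n k π ↔
      (p.1 ∈ Icc (-(n : ℤ)) n ∧ p.2 ∈ Icc 1 (n : ℤ)) ∧ π p.1 > π p.2 ∧
        |p.1| < p.2 ∧ (k : ℤ) ∣ p.2 - |p.1| := by
  rw [InvBSet, mem_filter, mem_product]
  rcases le_or_gt 0 p.1 with h | h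
  · rw [abs_of_nonneg h]
    grind
  · rw [abs_of_neg h, sub_neg_eq_add]
    grind

lemma InvBSet_eq_empty_of_lt {n m : ℕ} (π : ℤ → ℤ) (h : n < m) : InvBSet n m π = ∅ := by
  refine eq_empty_of_forall_notMem fun p hp => ?_
  obtain ⟨⟨-, hp₂⟩, -, hlt, hdvd⟩ := mem_InvBSet.1 hp
  have := Int.le_of_dvd (by omega) hdvd
  have := abs_nonneg p.1
  simp only [mem_Icc] at hp₂
  omega

lemma inf'_InvBSet_eq_InvBSet_lcm (n : ℕ) (π : ℤ → ℤ) {s : Finset ℕ} (hs : s.Nonempty) :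
    s.inf' hs (InvBSet n · π) = InvBSet n (s.lcm id) π := by
  ext p
  have hlcm : ((s.lcm id : ℕ) : ℤ) ∣ p.2 - |p.1| ↔ ∀ k ∈ s, (k : ℤ) ∣ p.2 - |p.1| := by
    simp only [Int.natCast_dvd, Finset.lcm_dvd_iff, id]
  simp only [mem_inf', mem_InvBSet, hlcm]
  obtain ⟨k₀, hk₀⟩ := hs
  exact ⟨fun h => ⟨(h k₀ hk₀).1, (h k₀ hk₀).2.1, (h k₀ hk₀).2.2.1, fun k hk => (h k hk).2.2.2⟩,
    fun ⟨hp, hπ, hlt, hdvd⟩ k hk => ⟨hp, hπ, hlt, hdvd k hk⟩⟩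

theorem card_biUnion_InvBSet (n : ℕ) (K : Finset ℕ) (π : ℤ → ℤ) :
    ((K.biUnion fun k => InvBSet n k π).card : ℤ) =
      ∑ K' ∈ K.powerset.filter Finset.Nonempty,
        (-1 : ℤ) ^ (K'.card + 1) * ((InvBSet n (K'.lcm id) π).card : ℤ) := by
  rw [inclusion_exclusion_card_biUnion]
  simp_rw [inf'_InvBSet_eq_InvBSet_lcm]
  exact sum_coe_sort _ fun K' : Finset ℕ =>
    (-1 : ℤ) ^ (K'.card + 1) * ((InvBSet n (K'.lcm id) π).card : ℤ)

theorem stmt1_general (n : ℕ) (K : Finset ℕ)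
    (σ : Equiv.Perm (Fin n)) (ε : Fin n → Bool) :
    ((K.biUnion fun k => InvBSet n k (bval n σ ε)).card : ℤ) =
      ∑ K' ∈ K.powerset.filter Finset.Nonempty,
        (-1 : ℤ) ^ (K'.card + 1) *
          (if n + 1 ≤ K'.lcm id then 0
           else ((InvBSet n (K'.lcm id) (bval n σ ε)).card : ℤ)) := by
  rw [card_biUnion_InvBSet]
  refine sum_congr rfl fun K' _ => ?_
  split_ifs with h
  · rw [InvBSet_eq_empty_of_lt _ h, card_empty, Nat.cast_zero]
  · rfl

/-- Proposition 5: inclusion–exclusion for `inv_K^B`. -/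
theorem stmt1 (n : ℕ) (K : Finset ℕ) (hK : K.Nonempty) (hKn : K ⊆ Finset.Icc 1 n)
    (σ : Equiv.Perm (Fin n)) (ε : Fin n → Bool) :
    ((K.biUnion fun k => InvBSet n k (bval n σ ε)).card : ℤ) =
      ∑ K' ∈ K.powerset.filter Finset.Nonempty,
        (-1 : ℤ) ^ (K'.card + 1) *
          (if n + 1 ≤ K'.lcm id then 0
           else ((InvBSet n (K'.lcm id) (bval n σ ε)).card : ℤ)) :=
  stmt1_general n K σ ε
end

section
/- For all n ≥ 1, the joint generating function over signed permutations satisfies Σ_{π ∈ B_n} x^{inv^A(π) + nsp(π)} t^{neg(π)} = [n]_x! · Π_{i=0}^{n-1} (1 + t x^i), where [n]_x! = Π_{j=1}^n (1 + x + ⋯ + x^{j-1}). -/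
open Finset

namespace Stmt2Aux

open Equiv Fin

variable {n : ℕ}

/-- left-inversion code entry -/
def C {n : ℕ} (σ : Equiv.Perm (Fin n)) (j : Fin n) : ℕ :=
  (Finset.univ.filter fun i : Fin n => i < j ∧ σ j < σ i).card

lemma card_filter_lt' (m : ℕ) : ((Finset.univ : Finset (Fin n)).filter
    fun i : Fin n => (i : ℕ) < m).card = min m n := by
  rw [Finset.card_filter, Fin.sum_univ_eq_sum_range (fun i => if i < m then 1 else 0) n,
    ← Finset.card_filter]
  have : (Finset.range n).filter (fun i => i < m) = Finset.range (min m n) := by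
    ext a; simp; omega
  rw [this, Finset.card_range]

lemma card_filter_le' (m : ℕ) (hm : m ≤ n) : ((Finset.univ : Finset (Fin n)).filter
    fun i : Fin n => m ≤ (i : ℕ)).card = n - m := by
  have h1 := Finset.card_filter_add_card_filter_not (s := (Finset.univ : Finset (Fin n)))
    (p := fun i : Fin n => (i : ℕ) < m)
  have h2 : ((Finset.univ : Finset (Fin n)).filter fun i : Fin n => ¬ (i : ℕ) < m)
      = (Finset.univ.filter fun i : Fin n => m ≤ (i : ℕ)) := by
    apply Finset.filter_congr; intro i _; simp
  rw [card_filter_lt' m, h2, Finset.card_univ, Fintype.card_fin] at h1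
  omega

lemma card_filter_lt (j : Fin n) :
    ((Finset.univ : Finset (Fin n)).filter fun i : Fin n => i < j).card = (j : ℕ) := by
  have h2 : ((Finset.univ : Finset (Fin n)).filter fun i : Fin n => i < j)
      = (Finset.univ.filter fun i : Fin n => (i : ℕ) < (j : ℕ)) := by
    apply Finset.filter_congr; intro i _; simp only [Fin.lt_def]
  rw [h2, card_filter_lt']
  omega

lemma C_le (σ : Equiv.Perm (Fin n)) (j : Fin n) : C σ j ≤ (j : ℕ) := by
  rw [← card_filter_lt j]
  apply Finset.card_le_card
  intro i hi
  simp only [Finset.mem_filter] at hi ⊢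
  exact ⟨hi.1, hi.2.1⟩

lemma C_add_card (σ : Equiv.Perm (Fin n)) (j : Fin n) :
    C σ j + ((Finset.univ : Finset (Fin n)).filter fun i => i < j ∧ σ i < σ j).card = (j : ℕ) := by
  rw [← card_filter_lt j, C, ← Finset.card_union_of_disjoint]
  · congr 1
    ext i
    simp only [Finset.mem_union, Finset.mem_filter, Finset.mem_univ, true_and]
    constructor
    · rintro (⟨h, _⟩ | ⟨h, _⟩) <;> exact h
    · intro h
      have : σ i ≠ σ j := fun hc => (ne_of_lt h) (σ.injective hc)
      rcases lt_or_gt_of_ne this with h' | h'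
      · right; exact ⟨h, h'⟩
      · left; exact ⟨h, h'⟩
  · rw [Finset.disjoint_left]
    intro a ha hb
    simp only [Finset.mem_filter] at ha hb
    exact absurd hb.2.2 (not_lt_of_gt ha.2.2)

lemma card_filter_castSucc (P : Fin (n + 1) → Prop) [DecidablePred P]
    (hP : ∀ i, P i → i ≠ Fin.last n) :
    ((Finset.univ : Finset (Fin (n + 1))).filter P).card
      = ((Finset.univ : Finset (Fin n)).filter fun i => P (Fin.castSucc i)).card := by
  apply Finset.card_bij' (fun a ha => a.castPred (hP a (by simpa using ha)))
    (fun b _ => Fin.castSucc b)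
  · intro a ha
    simp only [Finset.mem_filter, Finset.mem_univ, true_and] at ha ⊢
    rwa [Fin.castSucc_castPred]
  · intro b hb
    rw [Fin.castSucc_castPred]
  · intro a ha
    rw [Fin.castPred_castSucc]
  · intro b hb
    simp only [Finset.mem_filter, Finset.mem_univ, true_and] at hb ⊢
    exact hb

lemma card_filter_perm (e : Equiv.Perm (Fin n)) (Q : Fin n → Prop) [DecidablePred Q] :
    ((Finset.univ : Finset (Fin n)).filter fun i => Q (e i)).card
      = ((Finset.univ : Finset (Fin n)).filter Q).card := by
  apply Finset.card_nbij (fun i => e i)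
  · intro a ha; simp only [Finset.mem_coe, Finset.mem_filter, Finset.mem_univ, true_and] at ha ⊢; exact ha
  · exact e.injective.injOn
  · intro b hb
    simp only [Finset.coe_filter, Set.mem_setOf_eq, Finset.mem_univ, true_and] at hb
    exact ⟨e.symm b, by simp [hb], by simp⟩


/-- inserts value `v` at the last position. -/
def ins (v : Fin (n + 1)) (e : Equiv.Perm (Fin n)) : Equiv.Perm (Fin (n + 1)) :=
  (finSuccEquiv' (Fin.last n)).trans ((Equiv.optionCongr e).trans (finSuccEquiv' v).symm)

lemma ins_last (v : Fin (n + 1)) (e : Equiv.Perm (Fin n)) : ins v e (Fin.last n) = v := by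
  simp [ins]

lemma ins_castSucc (v : Fin (n + 1)) (e : Equiv.Perm (Fin n)) (i : Fin n) :
    ins v e (Fin.castSucc i) = v.succAbove (e i) := by
  rw [ins, Equiv.trans_apply, Equiv.trans_apply,
    show Fin.castSucc i = (Fin.last n).succAbove i from by rw [Fin.succAbove_last],
    finSuccEquiv'_succAbove]
  simp

lemma ins_bijective :
    Function.Bijective (fun p : Fin (n + 1) × Equiv.Perm (Fin n) => ins p.1 p.2) := by
  rw [Fintype.bijective_iff_injective_and_card]
  constructor
  · rintro ⟨v, e⟩ ⟨v', e'⟩ h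
    simp only at h
    have hv : v = v' := by rw [← ins_last v e, h, ins_last]
    subst hv
    have he : e = e' := by
      apply Equiv.ext
      intro i
      apply Fin.succAbove_right_injective (p := v)
      rw [← ins_castSucc v e i, h, ins_castSucc]
    rw [he]
  · simp [Fintype.card_perm, Nat.factorial_succ]

lemma C_ins_last (v : Fin (n + 1)) (e : Equiv.Perm (Fin n)) :
    C (ins v e) (Fin.last n) = n - (v : ℕ) := by
  rw [C, card_filter_castSucc _ (fun i hi => ne_of_lt hi.1)]
  have h1 : ((Finset.univ : Finset (Fin n)).filter
        fun i => Fin.castSucc i < Fin.last n ∧ (ins v e) (Fin.last n) < (ins v e) (Fin.castSucc i))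
      = (Finset.univ.filter fun i => (v : ℕ) ≤ ((e i : Fin n) : ℕ)) := by
    apply Finset.filter_congr
    intro i _
    rw [ins_last, ins_castSucc]
    simp only [Fin.castSucc_lt_last, true_and]
    rw [Fin.lt_succAbove_iff_le_castSucc, Fin.le_def, Fin.coe_castSucc]
  rw [h1, card_filter_perm e (fun w => (v : ℕ) ≤ (w : ℕ)), card_filter_le' _ (by omega)]

lemma C_ins_castSucc (v : Fin (n + 1)) (e : Equiv.Perm (Fin n)) (j : Fin n) :
    C (ins v e) (Fin.castSucc j) = C e j := by
  rw [C, card_filter_castSucc _ (fun i hi => ne_of_lt (lt_of_lt_of_le hi.1 (Fin.le_last _)))]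
  rw [C]
  congr 1
  apply Finset.filter_congr
  intro i _
  rw [ins_castSucc, ins_castSucc, Fin.castSucc_lt_castSucc_iff, Fin.succAbove_lt_succAbove_iff]

theorem sum_perm_prod {R : Type*} [CommSemiring R] :
    ∀ (n : ℕ) (h : Fin n → ℕ → R),
    ∑ σ : Equiv.Perm (Fin n), ∏ j, h j (C σ j)
      = ∏ j : Fin n, ∑ c ∈ Finset.range ((j : ℕ) + 1), h j c := by
  intro n
  induction n with
  | zero =>
    intro h
    have h1 : ∀ σ : Equiv.Perm (Fin 0), (∏ j : Fin 0, h j (C σ j)) = 1 := fun σ => by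
      rw [Finset.univ_eq_empty, Finset.prod_empty]
    have h2 : (∏ j : Fin 0, ∑ c ∈ Finset.range ((j : ℕ) + 1), h j c) = 1 := by
      rw [Finset.univ_eq_empty, Finset.prod_empty]
    rw [h2, Finset.sum_congr rfl (fun σ _ => h1 σ), Finset.sum_const, Finset.card_univ,
      Fintype.card_perm]
    simp
  | succ n ih =>
    intro h
    rw [← Fintype.sum_bijective _ ins_bijective
      (fun p : Fin (n + 1) × Equiv.Perm (Fin n) => ∏ j, h j (C (ins p.1 p.2) j))
      (fun σ => ∏ j, h j (C σ j)) (fun p => rfl)]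
    rw [Fintype.sum_prod_type]
    have key : ∀ (v : Fin (n + 1)) (e : Equiv.Perm (Fin n)),
        (∏ j, h j (C (ins v e) j))
          = (∏ j : Fin n, h (Fin.castSucc j) (C e j)) * h (Fin.last n) (n - (v : ℕ)) := by
      intro v e
      rw [Fin.prod_univ_castSucc]
      congr 1
      · exact Finset.prod_congr rfl fun j _ => by rw [C_ins_castSucc]
      · rw [C_ins_last]
    calc ∑ v : Fin (n + 1), ∑ e : Equiv.Perm (Fin n), ∏ j, h j (C (ins v e) j)
        = ∑ v : Fin (n + 1), (∑ e : Equiv.Perm (Fin n),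
            ∏ j : Fin n, h (Fin.castSucc j) (C e j)) * h (Fin.last n) (n - (v : ℕ)) := by
          apply Finset.sum_congr rfl; intro v _
          rw [Finset.sum_congr rfl (fun e _ => key v e), ← Finset.sum_mul]
      _ = (∏ j : Fin n, ∑ c ∈ Finset.range ((j : ℕ) + 1), h (Fin.castSucc j) c) *
            ∑ v : Fin (n + 1), h (Fin.last n) (n - (v : ℕ)) := by
          rw [ih (fun j c => h (Fin.castSucc j) c), ← Finset.mul_sum]
      _ = ∏ j : Fin (n + 1), ∑ c ∈ Finset.range ((j : ℕ) + 1), h j c := by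
          rw [Fin.prod_univ_castSucc (fun j : Fin (n + 1) =>
            ∑ c ∈ Finset.range ((j : ℕ) + 1), h j c)]
          simp only [Fin.coe_castSucc, Fin.val_last]
          congr 1
          rw [Fin.sum_univ_eq_sum_range (fun v => h (Fin.last n) (n - v)) (n + 1),
            ← Finset.sum_range_reflect (fun c => h (Fin.last n) c) (n + 1)]
          apply Finset.sum_congr rfl
          intro c hc
          simp only [Finset.mem_range] at hc
          congr 1

lemma bval_coe (n : ℕ) (σ : Equiv.Perm (Fin n)) (ε : Fin n → Bool) (j : Fin n) :
    bval n σ ε (((j : ℕ) + 1 : ℕ) : ℤ) =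
      if ε j then -(((σ j : ℕ) : ℤ) + 1) else ((σ j : ℕ) : ℤ) + 1 := by
  have hlt := j.isLt
  simp only [bval, Int.natAbs_natCast]
  rw [dif_pos (by omega : 1 ≤ (j : ℕ) + 1 ∧ (j : ℕ) + 1 ≤ n)]
  simp only [Nat.add_sub_cancel, Fin.eta]
  have h3 : Int.sign ((((j : ℕ) + 1 : ℕ)) : ℤ) = 1 :=
    Int.sign_eq_one_of_pos (by exact_mod_cast Nat.succ_pos _)
  rw [h3, one_mul]

lemma pair_count (n : ℕ) (σ : Equiv.Perm (Fin n)) (ε : Fin n → Bool) (i j : Fin n)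
    (hij : i ≠ j) :
    (((if bval n σ ε (((i : ℕ) + 1 : ℕ) : ℤ) > bval n σ ε (((j : ℕ) + 1 : ℕ) : ℤ)
        then 1 else 0) +
      (if bval n σ ε (((i : ℕ) + 1 : ℕ) : ℤ) + bval n σ ε (((j : ℕ) + 1 : ℕ) : ℤ) < 0
        then 1 else 0)) : ℕ) =
      if ε j then (1 + if σ i < σ j then 1 else 0) else (if σ j < σ i then 1 else 0) := by
  have hs : ((σ i : ℕ) : ℤ) ≠ ((σ j : ℕ) : ℤ) := by
    have h : σ i ≠ σ j := fun h => hij (σ.injective h)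
    intro hc
    exact h (Fin.ext (by exact_mod_cast hc))
  rw [bval_coe, bval_coe]
  cases hi : ε i <;> cases hj : ε j <;>
    simp only [hi, hj, Bool.false_eq_true, if_false, if_true, Fin.lt_def] <;>
    split_ifs <;> omega

lemma sum_Icc_fin {M : Type*} [AddCommMonoid M] (n : ℕ) (f : ℕ → M) :
    ∑ i ∈ Finset.Icc 1 n, f i = ∑ j : Fin n, f ((j : ℕ) + 1) := by
  rw [Fin.sum_univ_eq_sum_range (fun j => f (j + 1)) n, ← Finset.Ico_add_one_right_eq_Icc,
    Finset.sum_Ico_eq_sum_range]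
  exact Finset.sum_congr (by norm_num) fun i _ => by rw [add_comm]

lemma neg_eq (n : ℕ) (σ : Equiv.Perm (Fin n)) (ε : Fin n → Bool) :
    negk n 1 (bval n σ ε) = ∑ j : Fin n, (if ε j then 1 else 0) := by
  rw [negk, Nat.div_one, Finset.card_filter, sum_Icc_fin]
  apply Finset.sum_congr rfl
  intro j _
  have harg : ((((j : ℕ) + 1 : ℕ)) : ℤ) * ((1 : ℕ) : ℤ) = ((((j : ℕ) + 1 : ℕ)) : ℤ) := by
    simp
  rw [harg, bval_coe]
  cases hj : ε j <;> simp only [hj, Bool.false_eq_true, if_false, if_true]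
  · rw [if_neg (by omega : ¬ ((((σ j : ℕ) : ℤ)) + 1 < 0))]
  · rw [if_pos (by omega : -((((σ j : ℕ) : ℤ)) + 1) < 0)]

lemma stat_eq (n : ℕ) (σ : Equiv.Perm (Fin n)) (ε : Fin n → Bool) :
    invAk n 1 (bval n σ ε) + nspk n 1 (bval n σ ε)
      = ∑ j : Fin n, (if ε j then 2 * (j : ℕ) - C σ j else C σ j) := by
  rw [invAk, nspk, Finset.card_filter, Finset.card_filter, ← Finset.sum_add_distrib]
  rw [Finset.sum_product_right]
  rw [sum_Icc_fin]
  apply Finset.sum_congr rfl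
  intro j _
  rw [sum_Icc_fin]
  have key : ∀ i : Fin n,
      ((if ((i : ℕ) + 1, (j : ℕ) + 1).1 < ((i : ℕ) + 1, (j : ℕ) + 1).2 ∧
          1 ∣ (((i : ℕ) + 1, (j : ℕ) + 1).2 - ((i : ℕ) + 1, (j : ℕ) + 1).1) ∧
          bval n σ ε (((i : ℕ) + 1, (j : ℕ) + 1).1 : ℕ) >
            bval n σ ε (((i : ℕ) + 1, (j : ℕ) + 1).2 : ℕ) then 1 else 0) +
       (if ((i : ℕ) + 1, (j : ℕ) + 1).1 < ((i : ℕ) + 1, (j : ℕ) + 1).2 ∧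
          1 ∣ (((i : ℕ) + 1, (j : ℕ) + 1).2 - ((i : ℕ) + 1, (j : ℕ) + 1).1) ∧
          bval n σ ε (((i : ℕ) + 1, (j : ℕ) + 1).1 : ℕ) +
            bval n σ ε (((i : ℕ) + 1, (j : ℕ) + 1).2 : ℕ) < 0 then 1 else 0) : ℕ)
      = if i < j then (if ε j then (1 + if σ i < σ j then 1 else 0)
          else (if σ j < σ i then 1 else 0)) else 0 := by
    intro i
    simp only
    by_cases hij : i < j
    · have h1 : ((i : ℕ) + 1) < ((j : ℕ) + 1) := by
        have := (Fin.lt_def).mp hij; omega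
      simp only [eq_true h1, eq_true (one_dvd (((j : ℕ) + 1) - ((i : ℕ) + 1))), true_and,
        if_pos hij]
      exact pair_count n σ ε i j (ne_of_lt hij)
    · have h1 : ¬ (((i : ℕ) + 1) < ((j : ℕ) + 1)) := by
        rw [Fin.lt_def] at hij; omega
      simp only [eq_false h1, false_and, if_false, if_neg hij]
  rw [Finset.sum_congr rfl (fun i _ => key i)]
  by_cases hε : ε j
  · simp only [hε, if_true]
    rw [← Finset.sum_filter, Finset.sum_add_distrib, Finset.sum_const, card_filter_lt j,
      smul_eq_mul, mul_one, ← Finset.card_filter, Finset.filter_filter]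
    have h1 := C_add_card σ j
    have h2 := C_le σ j
    omega
  · simp only [hε, Bool.false_eq_true, if_false]
    rw [← Finset.sum_filter, ← Finset.card_filter, Finset.filter_filter]
    rfl

end Stmt2Aux

/-- Proposition 9:
`Σ_{π ∈ B_n} x^{inv^A(π)+nsp(π)} t^{neg(π)} = [n]_x! Π_{i=0}^{n-1} (1 + t xⁱ)`,
as a polynomial identity (stated over an arbitrary commutative ring). -/
theorem stmt2 (n : ℕ) (hn : 1 ≤ n) (R : Type*) [CommRing R] (x t : R) :
    ∑ σ : Equiv.Perm (Fin n), ∑ ε : Fin n → Bool,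
        x ^ (invAk n 1 (bval n σ ε) + nspk n 1 (bval n σ ε)) * t ^ negk n 1 (bval n σ ε) =
      (∏ j ∈ Finset.Icc 1 n, ∑ i ∈ Finset.range j, x ^ i) *
        ∏ i ∈ Finset.range n, (1 + t * x ^ i) := by
  classical
  have step1 : ∀ (σ : Equiv.Perm (Fin n)) (ε : Fin n → Bool),
      x ^ (invAk n 1 (bval n σ ε) + nspk n 1 (bval n σ ε)) * t ^ negk n 1 (bval n σ ε)
        = ∏ j : Fin n, (if ε j then t * x ^ (2 * (j : ℕ) - Stmt2Aux.C σ j)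
            else x ^ (Stmt2Aux.C σ j)) := by
    intro σ ε
    rw [Stmt2Aux.stat_eq, Stmt2Aux.neg_eq, ← Finset.prod_pow_eq_pow_sum,
      ← Finset.prod_pow_eq_pow_sum, ← Finset.prod_mul_distrib]
    apply Finset.prod_congr rfl
    intro j _
    by_cases hε : ε j <;>
      simp only [hε, Bool.false_eq_true, if_true, if_false, pow_zero, pow_one, mul_one] <;>
      ring
  rw [Finset.sum_congr rfl (fun σ _ => Finset.sum_congr rfl (fun ε _ => step1 σ ε))]
  have step2 : ∀ σ : Equiv.Perm (Fin n),
      (∑ ε : Fin n → Bool, ∏ j : Fin n,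
          (if ε j then t * x ^ (2 * (j : ℕ) - Stmt2Aux.C σ j) else x ^ (Stmt2Aux.C σ j)))
        = ∏ j : Fin n,
            (t * x ^ (2 * (j : ℕ) - Stmt2Aux.C σ j) + x ^ (Stmt2Aux.C σ j)) := by
    intro σ
    rw [← Fintype.prod_sum (fun (j : Fin n) (b : Bool) =>
      if b then t * x ^ (2 * (j : ℕ) - Stmt2Aux.C σ j) else x ^ (Stmt2Aux.C σ j))]
    exact Finset.prod_congr rfl fun j _ => by
      rw [Fintype.sum_bool]
      simp
  rw [Finset.sum_congr rfl (fun σ _ => step2 σ)]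
  rw [Stmt2Aux.sum_perm_prod n (fun j c => t * x ^ (2 * (j : ℕ) - c) + x ^ c)]
  have step3 : ∀ j : Fin n,
      (∑ c ∈ Finset.range ((j : ℕ) + 1), (t * x ^ (2 * (j : ℕ) - c) + x ^ c))
        = (∑ c ∈ Finset.range ((j : ℕ) + 1), x ^ c) * (1 + t * x ^ (j : ℕ)) := by
    intro j
    rw [Finset.sum_add_distrib, ← Finset.mul_sum]
    have hr : (∑ c ∈ Finset.range ((j : ℕ) + 1), x ^ (2 * (j : ℕ) - c))
        = ∑ c ∈ Finset.range ((j : ℕ) + 1), x ^ ((j : ℕ) + c) := by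
      rw [← Finset.sum_range_reflect (fun c => x ^ ((j : ℕ) + c)) ((j : ℕ) + 1)]
      apply Finset.sum_congr rfl
      intro c hc
      simp only [Finset.mem_range] at hc
      congr 1
      omega
    rw [hr, Finset.sum_congr rfl (fun c _ => pow_add x (j : ℕ) c), ← Finset.mul_sum]
    ring
  rw [Finset.prod_congr rfl (fun j _ => step3 j), Finset.prod_mul_distrib]
  congr 1
  · rw [Fin.prod_univ_eq_prod_range (fun j => ∑ c ∈ Finset.range (j + 1), x ^ c) n,
      ← Finset.Ico_add_one_right_eq_Icc, Finset.prod_Ico_eq_prod_range]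
    exact Finset.prod_congr (by norm_num) fun i _ => by rw [add_comm 1 i]
  · rw [Fin.prod_univ_eq_prod_range (fun i => 1 + t * x ^ i) n]
end

section
/- For all n ≥ 1, Σ_{π ∈ B_n} x^{inv^A(π) + nsp(π)} = 2 [n]_x · Π_{i=1}^{n-1} [2i]_x, i.e., the generating function equals 2[n]_x [2(n-1)]_x!! where [2m]_x!! = Π_{i=1}^m [2i]_x. -/
open Finset

/-!
Write `π(j) = ±(σ(j) + 1)`, the sign being `ε(j)`. A pair `i < j` contributes
`[σ(i) > σ(j)]` to `inv^A + nsp`, plus `2 [σ(i) < σ(j)]` when `π(j) < 0`. So the statistic is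
`∑_j (L_j + 2 ε_j S_j)`, where `L_j`, `S_j` count the earlier entries of `σ` greater, resp.
smaller, than `σ(j)`, and `L_j + S_j = j`. Summing over `ε` gives `∏_j (x^(2j - L_j) + x^L_j)`.
The Lehmer code `(L_j)_j` runs bijectively over `∏_j {0, …, j}`, so summing over `σ` gives
`∏_j ∑_{l ≤ j} (x^(2j - l) + x^l) = ∏_j (1 + x^j) [j + 1]_x`, which regroups into the
right-hand side through `[2i]_x = (1 + x^i) [i]_x`.
-/

namespace Equiv.Perm

variable {n : ℕ}

def leftGreaterCount (σ : Perm (Fin n)) (j : Fin n) : ℕ := #{i | i < j ∧ σ j < σ i}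

def leftSmallerCount (σ : Perm (Fin n)) (j : Fin n) : ℕ := #{i | i < j ∧ σ i < σ j}

theorem leftGreaterCount_add_leftSmallerCount (σ : Perm (Fin n)) (j : Fin n) :
    σ.leftGreaterCount j + σ.leftSmallerCount j = j := by
  rw [leftGreaterCount, leftSmallerCount, ← card_union_of_disjoint, ← Fin.card_Iio]
  · congr 1
    ext i
    simp only [mem_union, mem_filter, mem_univ, true_and, mem_Iio, ← and_or_left,
      and_iff_left_iff_imp]
    exact fun hij => (σ.injective.ne hij.ne').lt_or_gt
  · exact disjoint_filter.2 fun i _ h h' => h.2.asymm h'.2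

theorem leftGreaterCount_last (σ : Perm (Fin (n + 1))) :
    σ.leftGreaterCount (Fin.last n) = n - σ (Fin.last n) := by
  have key : ({i | i < Fin.last n ∧ σ (Fin.last n) < σ i} : Finset _)
      = (Ioi (σ (Fin.last n))).map (σ.symm.toEmbedding) := by
    ext i
    simp only [mem_filter, mem_univ, true_and, mem_map_equiv, symm_symm, mem_Ioi,
      and_iff_right_iff_imp]
    exact fun h => Fin.lt_last_iff_ne_last.2 fun hi => h.ne (by rw [hi])
  rw [leftGreaterCount, key, card_map, Fin.card_Ioi]
  rfl

def extendLast (p : Fin (n + 1)) (τ : Perm (Fin n)) : Perm (Fin (n + 1)) :=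
  finSuccEquivLast.trans (τ.optionCongr.trans (finSuccEquiv' p).symm)

@[simp]
theorem extendLast_last (p : Fin (n + 1)) (τ : Perm (Fin n)) :
    extendLast p τ (Fin.last n) = p := by
  simp [extendLast, finSuccEquiv'_symm_none]

@[simp]
theorem extendLast_castSucc (p : Fin (n + 1)) (τ : Perm (Fin n)) (i : Fin n) :
    extendLast p τ i.castSucc = p.succAbove (τ i) := by
  simp [extendLast, finSuccEquiv'_symm_some]

theorem extendLast_bijective :
    Function.Bijective fun q : Fin (n + 1) × Perm (Fin n) => extendLast q.1 q.2 := by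
  refine (Fintype.bijective_iff_injective_and_card _).2 ⟨?_, ?_⟩
  · rintro ⟨p, τ⟩ ⟨p', τ'⟩ h
    simp only at h
    obtain rfl : p = p' := by rw [← extendLast_last p τ, h, extendLast_last]
    have : τ = τ' := Equiv.ext fun i => Fin.succAbove_right_injective (p := p) <| by
      rw [← extendLast_castSucc, h, extendLast_castSucc]
    rw [this]
  · simp [Fintype.card_perm, Nat.factorial_succ]

theorem leftGreaterCount_extendLast_castSucc (p : Fin (n + 1)) (τ : Perm (Fin n)) (j : Fin n) :
    (extendLast p τ).leftGreaterCount j.castSucc = τ.leftGreaterCount j := by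
  rw [leftGreaterCount, leftGreaterCount, card_filter, card_filter, Fin.sum_univ_castSucc,
    if_neg fun h => (Fin.castSucc_lt_last j).asymm h.1, add_zero]
  simp only [extendLast_castSucc, Fin.castSucc_lt_castSucc_iff, Fin.succAbove_lt_succAbove_iff]

theorem sum_prod_leftGreaterCount {R : Type*} [CommSemiring R] (n : ℕ) (h : ℕ → ℕ → R) :
    ∑ σ : Perm (Fin n), ∏ j : Fin n, h j (σ.leftGreaterCount j) =
      ∏ j : Fin n, ∑ l ∈ range (j + 1), h j l := by
  induction n with
  | zero => simp
  | succ n ih =>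
    have sum_last : ∑ p : Fin (n + 1), h n (n - p) = ∑ l ∈ range (n + 1), h n l := by
      rw [← Fin.sum_univ_eq_sum_range (h n), ← Equiv.sum_comp Fin.revPerm]
      simp [Fin.val_rev, Nat.sub_sub_self, Fin.is_le]
    rw [← extendLast_bijective.sum_comp, Fintype.sum_prod_type]
    simp only [Fin.prod_univ_castSucc, Fin.val_castSucc, Fin.val_last, ← ih, ← sum_last,
      sum_mul_sum, leftGreaterCount_extendLast_castSucc, leftGreaterCount_last, extendLast_last]
    exact sum_comm

end Equiv.Perm

theorem Finset.sum_Icc_one_eq_sum_fin {M : Type*} [AddCommMonoid M] (n : ℕ) (f : ℕ → M) :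
    ∑ i ∈ Icc 1 n, f i = ∑ i : Fin n, f (i + 1) := by
  rw [Fin.sum_univ_eq_sum_range (fun i => f (i + 1)), ← Ico_add_one_right_eq_Icc,
    sum_Ico_eq_sum_range]
  simp [add_comm]

theorem invAk_one_add_nspk_one (n : ℕ) (π : ℤ → ℤ) :
    invAk n 1 π + nspk n 1 π = ∑ i : Fin n, ∑ j : Fin n,
      if i < j then
        (if π ((j + 1 : ℕ) : ℤ) < π ((i + 1 : ℕ) : ℤ) then 1 else 0) +
          (if π ((i + 1 : ℕ) : ℤ) + π ((j + 1 : ℕ) : ℤ) < 0 then 1 else 0)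
      else 0 := by
  rw [invAk, nspk, card_filter, card_filter, ← sum_add_distrib, sum_product,
    sum_Icc_one_eq_sum_fin]
  refine sum_congr rfl fun i _ => ?_
  rw [sum_Icc_one_eq_sum_fin]
  refine sum_congr rfl fun j _ => ?_
  by_cases hij : i < j <;> simp [hij]

theorem bval_natCast_succ {n : ℕ} (σ : Equiv.Perm (Fin n)) (ε : Fin n → Bool) (j : Fin n) :
    bval n σ ε ((j + 1 : ℕ) : ℤ) =
      if ε j then -((σ j : ℤ) + 1) else (σ j : ℤ) + 1 := by
  have hj : ((j + 1 : ℕ) : ℤ).natAbs = j + 1 := Int.natAbs_natCast _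
  rw [bval, dif_pos (by omega)]
  simp only [hj, Nat.add_sub_cancel, Fin.eta]
  simp

theorem pair_contribution (a b : ℤ) (ha : 0 < a) (hb : 0 < b) (hab : a ≠ b) (s t : Bool) :
    (if (if t then -b else b) < (if s then -a else a) then 1 else 0) +
        (if (if s then -a else a) + (if t then -b else b) < 0 then 1 else 0) =
      (if b < a then 1 else 0) + if t then 2 * (if a < b then 1 else 0) else 0 := by
  cases s <;> cases t <;> split_ifs <;> omega

theorem invAk_one_add_nspk_one_bval {n : ℕ} (σ : Equiv.Perm (Fin n)) (ε : Fin n → Bool) :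
    invAk n 1 (bval n σ ε) + nspk n 1 (bval n σ ε) =
      ∑ j, (σ.leftGreaterCount j + if ε j then 2 * σ.leftSmallerCount j else 0) := by
  rw [invAk_one_add_nspk_one, sum_comm]
  refine sum_congr rfl fun j _ => ?_
  set π := bval n σ ε with hπ
  have term (i : Fin n) : (if i < j then
        (if π ((j + 1 : ℕ) : ℤ) < π ((i + 1 : ℕ) : ℤ) then 1 else 0) +
          (if π ((i + 1 : ℕ) : ℤ) + π ((j + 1 : ℕ) : ℤ) < 0 then 1 else 0)
      else 0) = (if i < j ∧ σ j < σ i then 1 else 0) +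
        if ε j then 2 * (if i < j ∧ σ i < σ j then 1 else 0) else 0 := by
    by_cases hij : i < j
    · have hne : (σ i : ℤ) + 1 ≠ (σ j : ℤ) + 1 := by
        simpa [Fin.val_eq_val] using σ.injective.ne hij.ne
      simp only [hij, true_and, if_true, hπ, bval_natCast_succ]
      rw [pair_contribution _ _ (by positivity) (by positivity) hne]
      simp
    · simp [hij]
  simp only [term, sum_add_distrib, Equiv.Perm.leftGreaterCount, Equiv.Perm.leftSmallerCount,
    card_filter]
  cases ε j <;> simp [sum_ite, mul_comm]

section Algebra

variable {R : Type*} [CommSemiring R]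

theorem sum_pow_sum_add_ite_bool {ι : Type*} [Fintype ι] [DecidableEq ι] (x : R)
    (L M : ι → ℕ) :
    ∑ ε : ι → Bool, x ^ ∑ j, (L j + if ε j then M j else 0) =
      ∏ j, (x ^ (L j + M j) + x ^ L j) := by
  have h (j : ι) : x ^ (L j + M j) + x ^ L j = ∑ b : Bool, x ^ (L j + if b then M j else 0) := by
    simp
  simp only [h, Fintype.prod_sum, prod_pow_eq_pow_sum]

theorem sum_range_succ_pow_two_mul_sub_add_pow (x : R) (j : ℕ) :
    ∑ l ∈ range (j + 1), (x ^ (2 * j - l) + x ^ l) =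
      (1 + x ^ j) * ∑ l ∈ range (j + 1), x ^ l := by
  have reflect :
      ∑ l ∈ range (j + 1), x ^ (2 * j - l) = x ^ j * ∑ l ∈ range (j + 1), x ^ l := by
    rw [← sum_range_reflect, mul_sum]
    refine sum_congr rfl fun l hl => ?_
    rw [← pow_add]
    congr 1
    have := mem_range.1 hl
    omega
  rw [sum_add_distrib, reflect]
  ring

theorem sum_range_two_mul_pow (x : R) (i : ℕ) :
    ∑ l ∈ range (2 * i), x ^ l = (1 + x ^ i) * ∑ l ∈ range i, x ^ l := by
  simp only [two_mul, sum_range_add, pow_add, ← mul_sum]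
  ring

theorem prod_range_succ_one_add_pow_mul_geom_sum (x : R) (m : ℕ) :
    ∏ j ∈ range (m + 1), ((1 + x ^ j) * ∑ l ∈ range (j + 1), x ^ l) =
      2 * (∑ i ∈ range (m + 1), x ^ i) * ∏ i ∈ Icc 1 m, ∑ l ∈ range (2 * i), x ^ l := by
  induction m with
  | zero => norm_num
  | succ m ih =>
    rw [prod_range_succ, ih, prod_Icc_succ_top (by omega), sum_range_two_mul_pow,
      sum_range_succ _ (m + 1)]
    ring

end Algebra

/-- `Σ_{π ∈ B_n} x^{inv^A(π)+nsp(π)} = 2 [n]_x [2(n-1)]_x!!`. -/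
theorem stmt3 (n : ℕ) (hn : 1 ≤ n) (R : Type*) [CommRing R] (x : R) :
    ∑ σ : Equiv.Perm (Fin n), ∑ ε : Fin n → Bool,
        x ^ (invAk n 1 (bval n σ ε) + nspk n 1 (bval n σ ε)) =
      2 * (∑ i ∈ Finset.range n, x ^ i) *
        ∏ i ∈ Finset.Icc 1 (n - 1), ∑ j ∈ Finset.range (2 * i), x ^ j := by
  obtain ⟨m, rfl⟩ := Nat.exists_eq_add_of_le' hn
  have exponent (σ : Equiv.Perm (Fin (m + 1))) (j : Fin (m + 1)) :
      σ.leftGreaterCount j + 2 * σ.leftSmallerCount j = 2 * j - σ.leftGreaterCount j := by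
    have := σ.leftGreaterCount_add_leftSmallerCount j
    omega
  simp only [invAk_one_add_nspk_one_bval, sum_pow_sum_add_ite_bool, exponent]
  rw [Equiv.Perm.sum_prod_leftGreaterCount _ fun j l => x ^ (2 * j - l) + x ^ l]
  simp only [sum_range_succ_pow_two_mul_sub_add_pow]
  rw [Fin.prod_univ_eq_prod_range (fun j => (1 + x ^ j) * ∑ l ∈ range (j + 1), x ^ l),
    prod_range_succ_one_add_pow_mul_geom_sum, Nat.add_sub_cancel]
end

section
/- For all n ≥ 1 and 1 ≤ k ≤ n-1, the width-k Eulerian polynomial of type A factors as Σ_{σ ∈ S_n} x^{des_k^A(σ)} = M_{n,k} · A_{d+1}(x)^r · A_d(x)^{k-r}, where n = dk + r with 0 ≤ r < k, M_{n,k} is the multinomial coefficient n! / ((d+1)!^r · d!^{k-r}), and A_m(x) = Σ_{σ ∈ S_m} x^{des^A(σ)} is the classical Eulerian polynomial. -/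
open Finset

/-- The classical Eulerian polynomial `A_m(x) = Σ_{σ ∈ S_m} x^{des^A(σ)}`, evaluated at `x`. -/
def EulA {R : Type*} [CommRing R] (m : ℕ) (x : R) : R :=
  ∑ σ : Equiv.Perm (Fin m), x ^ desA m 1 (bval m σ fun _ => false)

/-- The type-B Eulerian polynomial `B_m(x) = Σ_{π ∈ B_m} x^{des^B(π)}`, evaluated at `x`. -/
def EulB {R : Type*} [CommRing R] (m : ℕ) (x : R) : R :=
  ∑ σ : Equiv.Perm (Fin m), ∑ ε : Fin m → Bool, x ^ desB m 1 (bval m σ ε)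

/-- The multinomial coefficient `M_{n,k} = n! / ((d+1)!^r d!^{k-r})` where `n = dk + r`. -/
def Mnk (n k : ℕ) : ℕ :=
  n.factorial / ((n / k + 1).factorial ^ (n % k) * (n / k).factorial ^ (k - n % k))


/-- size of class `c` -/
def mcl (n k c : ℕ) : ℕ := n / k + (if c < n % k then 1 else 0)

lemma mcl_iff {n k : ℕ} (hk : 0 < k) {c : ℕ} (hc : c < k) (j : ℕ) :
    c + j * k < n ↔ j < mcl n k c := by
  have e := Nat.div_add_mod n k
  have e2 : k * (n / k) = (n / k) * k := Nat.mul_comm _ _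
  have hr : n % k < k := Nat.mod_lt _ hk
  unfold mcl
  constructor
  · intro h
    split
    · by_contra hj
      push_neg at hj
      have h1 : (n / k + 1) * k ≤ j * k := Nat.mul_le_mul_right _ (by omega)
      rw [Nat.add_mul, one_mul] at h1
      omega
    · by_contra hj
      push_neg at hj
      have h1 : (n / k) * k ≤ j * k := Nat.mul_le_mul_right _ (by omega)
      omega
  · intro h
    split at h
    · have h1 : j * k ≤ (n / k) * k := Nat.mul_le_mul_right _ (by omega)
      omega
    · have h1 : (j + 1) * k ≤ (n / k) * k := Nat.mul_le_mul_right _ (by omega)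
      rw [Nat.add_mul, one_mul] at h1
      omega

/-- the value sequence of a permutation, as `ℕ → ℕ` -/
def pval {N : ℕ} (σ : Equiv.Perm (Fin N)) : ℕ → ℕ :=
  fun i => if h : i < N then (σ ⟨i, h⟩ : ℕ) else 0

lemma pval_lt {N : ℕ} (σ : Equiv.Perm (Fin N)) {i : ℕ} (h : i < N) :
    pval σ i = (σ ⟨i, h⟩ : ℕ) := dif_pos h

lemma bval_nat {N : ℕ} (σ : Equiv.Perm (Fin N)) {i : ℕ} (h1 : 1 ≤ i) (h2 : i ≤ N) :
    bval N σ (fun _ => false) ((i : ℕ) : ℤ) = (pval σ (i - 1) : ℤ) + 1 := by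
  unfold bval
  rw [dif_pos (by simp; omega)]
  have hs : Int.sign ((i : ℕ) : ℤ) = 1 := Int.sign_eq_one_of_pos (by exact_mod_cast h1)
  rw [hs, if_neg (by decide : ¬(false = true)), one_mul]
  simp only [Int.natAbs_natCast]
  rw [pval_lt σ (by omega)]

/-- rewrite `desA` of a `bval` in terms of `pval` -/
lemma desA_eq {N K : ℕ} (hK : 1 ≤ K) (σ : Equiv.Perm (Fin N)) :
    desA N K (bval N σ fun _ => false)
      = ((range (N - K)).filter fun i => pval σ (i + K) < pval σ i).card := by
  unfold desA
  apply Finset.card_nbij' (fun i => i - 1) (fun i => i + 1)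
  · intro a ha
    simp only [Finset.mem_coe, mem_filter, mem_Icc] at ha
    simp only [Finset.mem_coe, mem_filter, mem_range]
    obtain ⟨⟨h1, h2⟩, h3⟩ := ha
    rcases le_or_gt K N with hKN | hKN
    · refine ⟨by omega, ?_⟩
      rw [show ((a : ℤ) + (K:ℕ)) = (((a + K : ℕ) : ℕ) : ℤ) by push_cast; ring] at h3
      rw [bval_nat σ h1 (by omega), bval_nat σ (by omega) (by omega)] at h3
      have : a - 1 + K = a + K - 1 := by omega
      rw [this]
      omega
    · omega
  · intro a ha
    simp only [Finset.mem_coe, mem_filter, mem_range] at ha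
    simp only [Finset.mem_coe, mem_filter, mem_Icc]
    obtain ⟨h1, h2⟩ := ha
    refine ⟨⟨by omega, by omega⟩, ?_⟩
    rw [show ((a + 1 : ℕ) : ℤ) + (K:ℕ) = (((a + 1 + K : ℕ) : ℕ) : ℤ) by push_cast; ring]
    rw [bval_nat σ (by omega) (by omega), bval_nat σ (by omega) (by omega)]
    simp only [Nat.add_sub_cancel]
    have : a + 1 + K - 1 = a + K := by omega
    rw [this]
    omega
  · intro a ha
    simp only [Finset.mem_coe, mem_filter, mem_Icc] at ha
    dsimp only; omega
  · intro a ha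
    simp only [Finset.mem_coe, mem_filter, mem_range] at ha
    dsimp only; omega

/-- descent number of `τ` directly as count on values -/
def dd {M : ℕ} (τ : Equiv.Perm (Fin M)) : ℕ :=
  ((range (M - 1)).filter fun j => pval τ (j + 1) < pval τ j).card

lemma EulA_eq {R : Type*} [CommRing R] (M : ℕ) (x : R) :
    EulA M x = ∑ τ : Equiv.Perm (Fin M), x ^ dd τ := by
  unfold EulA
  refine Finset.sum_congr rfl fun τ _ => ?_
  rw [desA_eq le_rfl]
  rfl

/-- fiber split of a filtered count over residues mod `k` -/
lemma fiber_split {n k : ℕ} (hk : 0 < k) (P : ℕ → Prop) [DecidablePred P] :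
    ((range (n - k)).filter P).card
      = ∑ c ∈ range k, ((range (mcl n k c - 1)).filter fun j => P (c + j * k)).card := by
  classical
  rw [← Finset.card_sigma]
  apply Finset.card_nbij' (fun i => ⟨i % k, i / k⟩) (fun p => p.1 + p.2 * k)
  · intro a ha
    simp only [Finset.mem_coe, mem_filter, mem_range] at ha
    simp only [Finset.mem_coe, Finset.mem_sigma, mem_filter, mem_range]
    have h1 : a % k < k := Nat.mod_lt _ hk
    have h2 : a % k + a / k * k = a := Nat.mod_add_div' a k
    have h3 : a % k + (a / k + 1) * k < n := by
      rw [Nat.add_mul, one_mul]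
      omega
    rw [mcl_iff hk h1] at h3
    exact ⟨h1, by omega, by rw [h2]; exact ha.2⟩
  · intro p hp
    simp only [Finset.mem_coe, Finset.mem_sigma, mem_filter, mem_range] at hp
    simp only [Finset.mem_coe, mem_filter, mem_range]
    obtain ⟨hc, hj, hP⟩ := hp
    have h3 : p.1 + (p.2 + 1) * k < n := by
      rw [mcl_iff hk hc]
      omega
    rw [Nat.add_mul, one_mul] at h3
    exact ⟨by omega, hP⟩
  · intro a ha
    exact Nat.mod_add_div' a k
  · intro p hp
    simp only [Finset.mem_coe, Finset.mem_sigma, mem_filter, mem_range] at hp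
    obtain ⟨hc, hj, hP⟩ := hp
    have h1 : (p.1 + p.2 * k) % k = p.1 := by
      rw [Nat.add_mul_mod_self_right, Nat.mod_eq_of_lt hc]
    have h2 : (p.1 + p.2 * k) / k = p.2 := by
      rw [Nat.add_mul_div_right _ _ hk, Nat.div_eq_of_lt hc, Nat.zero_add]
    obtain ⟨c, j⟩ := p
    simp only at h1 h2 ⊢
    simp [h1, h2]

section Main

variable {n k : ℕ}

/-- the encoding map from sigma type of classes to positions -/
noncomputable def encF (hk : 0 < k) (hkn : k ≤ n) : (Σ c : Fin k, Fin (mcl n k c)) ≃ Fin n := by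
  refine Equiv.ofBijective
    (fun p => ⟨p.1 + p.2 * k, (mcl_iff hk p.1.2 p.2.1).2 p.2.2⟩) ⟨?_, ?_⟩
  · rintro ⟨⟨c, hc⟩, ⟨j, hj⟩⟩ ⟨⟨c', hc'⟩, ⟨j', hj'⟩⟩ h
    simp only [Fin.mk.injEq] at h
    have h1 : (c + j * k) % k = c := by
      rw [Nat.add_mul_mod_self_right, Nat.mod_eq_of_lt hc]
    have h2 : (c' + j' * k) % k = c' := by
      rw [Nat.add_mul_mod_self_right, Nat.mod_eq_of_lt hc']
    have hcc : c = c' := by rw [← h1, ← h2, h]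
    subst hcc
    have hjj : j = j' := Nat.eq_of_mul_eq_mul_right hk (by omega)
    subst hjj
    rfl
  · rintro ⟨i, hi⟩
    have h1 : i % k < k := Nat.mod_lt _ hk
    have h2 : i % k + i / k * k = i := Nat.mod_add_div' i k
    refine ⟨⟨⟨i % k, h1⟩, ⟨i / k, ?_⟩⟩, ?_⟩
    · rw [← mcl_iff hk h1, h2]; exact hi
    · simp only [Fin.mk.injEq]; exact h2

/-- embedding a family of class permutations into `Perm (Fin n)` -/
noncomputable def iot (hk : 0 < k) (hkn : k ≤ n) (τ : ∀ c : Fin k, Equiv.Perm (Fin (mcl n k (c : ℕ)))) :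
    Equiv.Perm (Fin n) :=
  (encF hk hkn).permCongr (Equiv.sigmaCongrRight τ)

lemma encF_apply (hk : 0 < k) (hkn : k ≤ n) (c : Fin k) (j : Fin (mcl n k (c : ℕ))) :
    encF hk hkn ⟨c, j⟩ = ⟨c + j * k, (mcl_iff hk c.2 j.1).2 j.2⟩ := rfl

lemma iot_apply (hk : 0 < k) (hkn : k ≤ n)
    (τ : ∀ c : Fin k, Equiv.Perm (Fin (mcl n k (c : ℕ)))) (c : Fin k) (j : Fin (mcl n k (c : ℕ))) :
    iot hk hkn τ ⟨c + j * k, (mcl_iff hk c.2 j.1).2 j.2⟩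
      = ⟨c + (τ c j : ℕ) * k, (mcl_iff hk c.2 _).2 (τ c j).2⟩ := by
  unfold iot
  rw [Equiv.permCongr_apply]
  rw [show (⟨(c : ℕ) + j * k, _⟩ : Fin n) = encF hk hkn ⟨c, j⟩ from rfl]
  rw [Equiv.symm_apply_apply]
  rfl

/-- `pval` of a composed permutation along class positions -/
lemma pval_comp (hk : 0 < k) (hkn : k ≤ n) (σ : Equiv.Perm (Fin n))
    (τ : ∀ c : Fin k, Equiv.Perm (Fin (mcl n k (c : ℕ)))) (c : Fin k) (j : ℕ)
    (hj : j < mcl n k (c : ℕ)) :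
    pval (σ * iot hk hkn τ) ((c : ℕ) + j * k)
      = pval σ ((c : ℕ) + (τ c ⟨j, hj⟩ : ℕ) * k) := by
  have h1 : (c : ℕ) + j * k < n := (mcl_iff hk c.2 j).2 hj
  have h2 : (c : ℕ) + (τ c ⟨j, hj⟩ : ℕ) * k < n := (mcl_iff hk c.2 _).2 (τ c ⟨j, hj⟩).2
  rw [pval_lt _ h1, pval_lt _ h2]
  rw [Equiv.Perm.mul_apply]
  exact congrArg (fun z => ((σ z : Fin n) : ℕ)) (iot_apply hk hkn τ c ⟨j, hj⟩)

/-- increasing along each class -/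
def IncOn (n k : ℕ) (σ : Equiv.Perm (Fin n)) : Prop :=
  ∀ c < k, ∀ j, c + (j + 1) * k < n → pval σ (c + j * k) < pval σ (c + (j + 1) * k)

lemma IncOn.mono {σ : Equiv.Perm (Fin n)} (hσ : IncOn n k σ) {c : ℕ} (hc : c < k)
    {j j' : ℕ} (hjj : j < j') (hj' : c + j' * k < n) :
    pval σ (c + j * k) < pval σ (c + j' * k) := by
  induction j' with
  | zero => omega
  | succ m ih =>
    rcases Nat.lt_or_ge j m with h | h
    · have hm : c + m * k < n := by
        have : m * k ≤ (m+1) * k := Nat.mul_le_mul_right _ (by omega)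
        omega
      exact (ih h hm).trans (hσ c hc m hj')
    · have : j = m := by omega
      subst this
      exact hσ c hc j hj'

lemma iot_encF (hk : 0 < k) (hkn : k ≤ n)
    (τ : ∀ c : Fin k, Equiv.Perm (Fin (mcl n k (c : ℕ)))) (p : Σ c : Fin k, Fin (mcl n k (c : ℕ))) :
    iot hk hkn τ (encF hk hkn p) = encF hk hkn ⟨p.1, τ p.1 p.2⟩ := by
  unfold iot
  rw [Equiv.permCongr_apply, Equiv.symm_apply_apply]
  rfl

lemma iot_mul (hk : 0 < k) (hkn : k ≤ n)
    (τ τ' : ∀ c : Fin k, Equiv.Perm (Fin (mcl n k (c : ℕ)))) :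
    iot hk hkn τ * iot hk hkn τ' = iot hk hkn (fun c => τ c * τ' c) := by
  ext i
  obtain ⟨p, rfl⟩ := (encF hk hkn).surjective i
  rw [Equiv.Perm.mul_apply, iot_encF, iot_encF, iot_encF]
  rfl

lemma iot_one (hk : 0 < k) (hkn : k ≤ n) :
    iot hk hkn (fun c => 1) = 1 := by
  ext i
  obtain ⟨p, rfl⟩ := (encF hk hkn).surjective i
  rw [iot_encF]
  rfl

/-- class value function -/
noncomputable def vfun (hk : 0 < k) (hkn : k ≤ n) (σ : Equiv.Perm (Fin n)) (c : Fin k) :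
    Fin (mcl n k (c : ℕ)) → Fin n := fun j => σ (encF hk hkn ⟨c, j⟩)

lemma vfun_inj (hk : 0 < k) (hkn : k ≤ n) (σ : Equiv.Perm (Fin n)) (c : Fin k) :
    Function.Injective (vfun hk hkn σ c) := by
  intro a b h
  have := (encF hk hkn).injective (σ.injective h)
  simpa using this

lemma vfun_strictMono (hk : 0 < k) (hkn : k ≤ n) {σ : Equiv.Perm (Fin n)}
    (hσ : IncOn n k σ) (c : Fin k) : StrictMono (vfun hk hkn σ c) := by
  intro a b hab
  have h1 : pval σ ((c : ℕ) + a * k) < pval σ ((c : ℕ) + b * k) :=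
    hσ.mono c.2 hab ((mcl_iff hk c.2 _).2 b.2)
  rw [pval_lt _ ((mcl_iff hk c.2 _).2 a.2), pval_lt _ ((mcl_iff hk c.2 _).2 b.2)] at h1
  exact h1

lemma vfun_comp (hk : 0 < k) (hkn : k ≤ n) (σ : Equiv.Perm (Fin n))
    (τ : ∀ c : Fin k, Equiv.Perm (Fin (mcl n k (c : ℕ)))) (c : Fin k) :
    vfun hk hkn (σ * iot hk hkn τ) c = vfun hk hkn σ c ∘ (τ c) := by
  funext j
  show (σ * iot hk hkn τ) (encF hk hkn ⟨c, j⟩) = _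
  rw [Equiv.Perm.mul_apply, iot_encF]
  rfl

/-- the big bijection -/
noncomputable def bigF (hk : 0 < k) (hkn : k ≤ n)
    (p : {σ : Equiv.Perm (Fin n) // IncOn n k σ}
      × ∀ c : Fin k, Equiv.Perm (Fin (mcl n k (c : ℕ)))) : Equiv.Perm (Fin n) :=
  p.1.1 * iot hk hkn p.2

lemma bigF_bijective (hk : 0 < k) (hkn : k ≤ n) :
    Function.Bijective (bigF (n := n) hk hkn) := by
  constructor
  · rintro ⟨⟨σ₀, hσ₀⟩, τ⟩ ⟨⟨σ₀', hσ₀'⟩, τ'⟩ h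
    simp only [bigF] at h
    -- the class value functions agree
    have hv : ∀ c : Fin k, vfun hk hkn σ₀ c = vfun hk hkn σ₀' c := by
      intro c
      have him : Finset.image (vfun hk hkn σ₀ c) univ = Finset.image (vfun hk hkn σ₀' c) univ := by
        have h1 : Finset.image (vfun hk hkn (σ₀ * iot hk hkn τ) c) univ
            = Finset.image (vfun hk hkn σ₀ c) univ := by
          rw [vfun_comp]
          rw [← Finset.image_image]
          congr 1
          exact Finset.image_univ_equiv (τ c)
        have h2 : Finset.image (vfun hk hkn (σ₀' * iot hk hkn τ') c) univ
            = Finset.image (vfun hk hkn σ₀' c) univ := by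
          rw [vfun_comp]
          rw [← Finset.image_image]
          congr 1
          exact Finset.image_univ_equiv (τ' c)
        rw [← h1, ← h2, h]
      have hcard : (Finset.image (vfun hk hkn σ₀ c) univ).card = mcl n k (c : ℕ) := by
        rw [Finset.card_image_of_injective _ (vfun_inj hk hkn σ₀ c), Finset.card_univ,
          Fintype.card_fin]
      have e1 := Finset.orderEmbOfFin_unique hcard
        (f := vfun hk hkn σ₀ c) (fun j => Finset.mem_image_of_mem _ (mem_univ j))
        (vfun_strictMono hk hkn hσ₀ c)
      have hcard' : (Finset.image (vfun hk hkn σ₀ c) univ).card = mcl n k (c : ℕ) := hcard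
      have e2 := Finset.orderEmbOfFin_unique hcard
        (f := vfun hk hkn σ₀' c) (fun j => him ▸ Finset.mem_image_of_mem _ (mem_univ j))
        (vfun_strictMono hk hkn hσ₀' c)
      rw [e1, e2]
    have hσeq : σ₀ = σ₀' := by
      ext i
      obtain ⟨p, rfl⟩ := (encF hk hkn).surjective i
      have := congrFun (hv p.1) p.2
      simp only [vfun] at this
      exact congrArg Fin.val this
    subst hσeq
    have hiot : iot hk hkn τ = iot hk hkn τ' := by
      have := mul_left_cancel h
      exact this
    have hτ : τ = τ' := by
      funext c
      ext j
      have h3 := congrArg (fun (g : Equiv.Perm (Fin n)) => g (encF hk hkn ⟨c, j⟩)) hiot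
      simp only [iot_encF] at h3
      have h4 := (encF hk hkn).injective h3
      have h5 := eq_of_heq (Sigma.ext_iff.1 h4).2
      exact congrArg Fin.val h5
    rw [hτ]
  · intro σ
    set s : ∀ c : Fin k, Equiv.Perm (Fin (mcl n k (c : ℕ))) :=
      fun c => Tuple.sort (vfun hk hkn σ c) with hs
    have hinc : IncOn n k (σ * iot hk hkn s) := by
      intro c hc j hj
      set cf : Fin k := ⟨c, hc⟩
      have hj1 : j + 1 < mcl n k c := by
        rw [← mcl_iff hk hc]; exact hj
      have hj0 : j < mcl n k c := by omega
      rw [pval_comp hk hkn σ s cf j hj0, pval_comp hk hkn σ s cf (j+1) hj1]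
      have hmono := Tuple.monotone_sort (vfun hk hkn σ cf)
      have hle : (vfun hk hkn σ cf ∘ Tuple.sort (vfun hk hkn σ cf)) ⟨j, hj0⟩
          ≤ (vfun hk hkn σ cf ∘ Tuple.sort (vfun hk hkn σ cf)) ⟨j+1, hj1⟩ :=
        hmono (by simp [Fin.le_def])
      have hne : (vfun hk hkn σ cf ∘ Tuple.sort (vfun hk hkn σ cf)) ⟨j, hj0⟩
          ≠ (vfun hk hkn σ cf ∘ Tuple.sort (vfun hk hkn σ cf)) ⟨j+1, hj1⟩ := by
        intro hcon
        have := (Tuple.sort (vfun hk hkn σ cf)).injective (vfun_inj hk hkn σ cf hcon)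
        simp [Fin.ext_iff] at this
      have hlt : (vfun hk hkn σ cf ∘ Tuple.sort (vfun hk hkn σ cf)) ⟨j, hj0⟩
          < (vfun hk hkn σ cf ∘ Tuple.sort (vfun hk hkn σ cf)) ⟨j+1, hj1⟩ :=
        lt_of_le_of_ne hle hne
      -- translate to pval
      rw [pval_lt _ ((mcl_iff hk hc _).2 (s cf ⟨j, hj0⟩).2),
        pval_lt _ ((mcl_iff hk hc _).2 (s cf ⟨j+1, hj1⟩).2)]
      exact hlt
    refine ⟨⟨⟨σ * iot hk hkn s, hinc⟩, fun c => (s c)⁻¹⟩, ?_⟩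
    show σ * iot hk hkn s * iot hk hkn (fun c => (s c)⁻¹) = σ
    rw [mul_assoc, iot_mul]
    simp only [mul_inv_cancel]
    rw [iot_one, mul_one]

lemma class_card (hk : 0 < k) (hkn : k ≤ n) {σ₀ : Equiv.Perm (Fin n)} (hσ₀ : IncOn n k σ₀)
    (τ : ∀ c : Fin k, Equiv.Perm (Fin (mcl n k (c : ℕ)))) (c : Fin k) :
    ((range (mcl n k (c : ℕ) - 1)).filter fun j =>
        pval (σ₀ * iot hk hkn τ) ((c : ℕ) + (j + 1) * k)
          < pval (σ₀ * iot hk hkn τ) ((c : ℕ) + j * k)).card = dd (τ c) := by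
  unfold dd
  congr 1
  apply Finset.filter_congr
  intro j hj
  rw [mem_range] at hj
  have hj1 : j + 1 < mcl n k (c : ℕ) := by omega
  have hj0 : j < mcl n k (c : ℕ) := by omega
  rw [pval_comp hk hkn σ₀ τ c j hj0, pval_comp hk hkn σ₀ τ c (j + 1) hj1]
  rw [pval_lt (τ c) (show j + 1 < mcl n k (c : ℕ) from hj1),
    pval_lt (τ c) (show j < mcl n k (c : ℕ) from hj0)]
  set a := τ c ⟨j, hj0⟩
  set b := τ c ⟨j + 1, hj1⟩
  have hab : a ≠ b := by
    intro hcon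
    have := (τ c).injective hcon
    simp [Fin.ext_iff] at this
  constructor
  · intro hlt
    by_contra hge
    push_neg at hge
    have hba : (a : ℕ) < (b : ℕ) := by
      rcases lt_or_eq_of_le hge with h | h
      · exact h
      · exact absurd (Fin.ext h) hab
    have := hσ₀.mono c.2 hba ((mcl_iff hk c.2 _).2 b.2)
    omega
  · intro hlt
    exact hσ₀.mono c.2 hlt ((mcl_iff hk c.2 _).2 a.2)

lemma card_filter_lt {N r : ℕ} (hr : r ≤ N) :
    ((univ : Finset (Fin N)).filter fun c : Fin N => (c : ℕ) < r).card = r := by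
  have h : ((univ : Finset (Fin N)).filter fun c : Fin N => (c : ℕ) < r).card = (range r).card := by
    apply Finset.card_nbij (fun c : Fin N => (c : ℕ))
    · intro a ha
      simp only [Finset.mem_coe, mem_filter] at ha
      simpa using ha.2
    · intro a _ b _ hab
      simpa [Fin.ext_iff] using hab
    · intro a ha
      simp only [Finset.coe_range, Set.mem_Iio] at ha
      exact ⟨⟨a, by omega⟩, by simp [ha], rfl⟩
  rw [h, Finset.card_range]

lemma prod_split {M : Type*} [CommMonoid M] (hk : 0 < k) (g : ℕ → M) :
    ∏ c : Fin k, g (mcl n k (c : ℕ)) = g (n / k + 1) ^ (n % k) * g (n / k) ^ (k - n % k) := by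
  have hr : n % k < k := Nat.mod_lt _ hk
  have h1 : ∀ c : Fin k, g (mcl n k (c : ℕ))
      = if (c : ℕ) < n % k then g (n / k + 1) else g (n / k) := by
    intro c
    unfold mcl
    split <;> simp
  rw [Finset.prod_congr rfl fun c _ => h1 c, Finset.prod_ite, Finset.prod_const,
    Finset.prod_const, card_filter_lt (le_of_lt hr)]
  congr 2
  have := Finset.card_filter_add_card_filter_not
    (s := (univ : Finset (Fin k))) (p := fun c => (c : ℕ) < n % k)
  rw [card_filter_lt (le_of_lt hr), Finset.card_univ, Fintype.card_fin] at this
  omega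

end Main

/-- Proposition 11: the width-`k` type-A Eulerian polynomial factors as
`Σ_{σ ∈ S_n} x^{des_k^A(σ)} = M_{n,k} A_{d+1}(x)^r A_d(x)^{k-r}` with `n = dk + r`. -/
theorem stmt5 (n k : ℕ) (hn : 1 ≤ n) (hk : 1 ≤ k) (hkn : k ≤ n - 1)
    (R : Type*) [CommRing R] (x : R) :
    ∑ σ : Equiv.Perm (Fin n), x ^ desA n k (bval n σ fun _ => false) =
      (Mnk n k : R) * (EulA (n / k + 1) x) ^ (n % k) * (EulA (n / k) x) ^ (k - n % k) := by
  classical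
  have hk0 : 0 < k := hk
  have hkn' : k ≤ n := by omega
  have stepA : ∀ σ : Equiv.Perm (Fin n), desA n k (bval n σ fun _ => false)
      = ∑ c : Fin k, ((range (mcl n k (c : ℕ) - 1)).filter fun j =>
          pval σ ((c : ℕ) + (j + 1) * k) < pval σ ((c : ℕ) + j * k)).card := by
    intro σ
    rw [desA_eq hk, fiber_split hk0 (fun i => pval σ (i + k) < pval σ i),
      ← Fin.sum_univ_eq_sum_range]
    apply Finset.sum_congr rfl
    intro c _
    congr 1
    apply Finset.filter_congr
    intro j _
    have h : (c : ℕ) + j * k + k = (c : ℕ) + (j + 1) * k := by ring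
    rw [h]
  have hbij := bigF_bijective (n := n) hk0 hkn'
  have e1 := Fintype.sum_bijective _ hbij
    (fun p : {σ₀ : Equiv.Perm (Fin n) // IncOn n k σ₀}
        × (∀ c : Fin k, Equiv.Perm (Fin (mcl n k (c : ℕ)))) =>
      x ^ (∑ c : Fin k, dd (p.2 c)))
    (fun σ => x ^ desA n k (bval n σ fun _ => false))
    (fun p => by
      show x ^ (∑ c : Fin k, dd (p.2 c))
        = x ^ desA n k (bval n (bigF hk0 hkn' p) fun _ => false)
      rw [stepA (bigF hk0 hkn' p)]
      congr 1
      exact Finset.sum_congr rfl fun c _ => (class_card hk0 hkn' p.1.2 p.2 c).symm)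
  rw [← e1, Fintype.sum_prod_type]
  have e2 : ∀ σ₀ : {σ₀ : Equiv.Perm (Fin n) // IncOn n k σ₀},
      (∑ τ : (∀ c : Fin k, Equiv.Perm (Fin (mcl n k (c : ℕ)))),
        x ^ (∑ c : Fin k, dd (τ c)))
      = ∏ c : Fin k, EulA (mcl n k (c : ℕ)) x := by
    intro σ₀
    calc (∑ τ : (∀ c : Fin k, Equiv.Perm (Fin (mcl n k (c : ℕ)))),
            x ^ (∑ c : Fin k, dd (τ c)))
        = ∑ τ : (∀ c : Fin k, Equiv.Perm (Fin (mcl n k (c : ℕ)))),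
            ∏ c : Fin k, x ^ dd (τ c) :=
          Finset.sum_congr rfl fun τ _ => (Finset.prod_pow_eq_pow_sum _ _ _).symm
      _ = ∏ c : Fin k, ∑ τc : Equiv.Perm (Fin (mcl n k (c : ℕ))), x ^ dd τc := by
          rw [Finset.prod_univ_sum, Fintype.piFinset_univ]
      _ = ∏ c : Fin k, EulA (mcl n k (c : ℕ)) x :=
          Finset.prod_congr rfl fun c _ => (EulA_eq _ x).symm
  rw [Finset.sum_congr rfl (fun σ₀ _ => e2 σ₀), Finset.sum_const, Finset.card_univ,
    nsmul_eq_mul, prod_split hk0 (fun m => EulA m x)]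
  have hcard : Fintype.card {σ₀ : Equiv.Perm (Fin n) // IncOn n k σ₀}
      * ((n / k + 1).factorial ^ (n % k) * (n / k).factorial ^ (k - n % k))
      = n.factorial := by
    have hc := Fintype.card_of_bijective hbij
    rw [Fintype.card_prod, Fintype.card_pi, Fintype.card_perm, Fintype.card_fin] at hc
    rw [Finset.prod_congr rfl
      (fun c _ => by rw [Fintype.card_perm, Fintype.card_fin])] at hc
    rw [prod_split hk0 Nat.factorial] at hc
    exact hc
  have hM : Mnk n k = Fintype.card {σ₀ : Equiv.Perm (Fin n) // IncOn n k σ₀} := by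
    unfold Mnk
    rw [← hcard, Nat.mul_div_cancel]
    positivity
  rw [hM]
  ring
end

section
/- For all n ≥ 1 and 1 ≤ k ≤ n-1, the width-k type-A Eulerian polynomial is gamma-positive: Σ_{σ ∈ S_n} x^{des_k^A(σ)} = Σ_{p=0}^{⌊(n-k)/2⌋} γ_{n,k,p}^A x^p (1+x)^{n-k-2p}, where γ_{n,k,p}^A is the number of permutations σ ∈ S_n with des_k^A(σ) = p and no width-k double descents (ddes_k^A(σ) = 0). -/
open Finset

/-- Number of width-`k` double descents of `σ ∈ S_n`: indices `i ∈ [n]` with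
`σ(i-k) > σ(i) > σ(i+k)`, convention `σ(j) = ∞` for `j ≤ 0` or `j > n` (so the
left comparison holds automatically when `i ≤ k`, and the right one fails when `i+k > n`). -/
def ddesA (n k : ℕ) (π : ℤ → ℤ) : ℕ :=
  ((Finset.Icc 1 n).filter fun i : ℕ =>
    (i + k ≤ n ∧ π i > π ((i : ℤ) + k)) ∧ (i ≤ k ∨ π ((i : ℤ) - k) > π i)).card

namespace S6
variable (n k : ℕ)

def entry (σ : Equiv.Perm (Fin n)) (i : ℕ) : ℕ :=
  if h : i < n then ((σ ⟨i, h⟩ : Fin n) : ℕ) + 1 else 0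

variable {n k}

lemma entry_mul_swap (σ : Equiv.Perm (Fin n)) (a b : Fin n) (p : ℕ) :
    entry n (σ * Equiv.swap a b) p =
      if p = (a:ℕ) then entry n σ b else if p = (b:ℕ) then entry n σ a else entry n σ p := by
  by_cases hp : p < n
  · have hh : (σ * Equiv.swap a b) ⟨p, hp⟩ = σ (Equiv.swap a b ⟨p, hp⟩) := rfl
    by_cases h1 : p = (a:ℕ)
    · have he : (⟨p, hp⟩ : Fin n) = a := Fin.ext h1
      simp [entry, hp, hh, he, h1, Equiv.swap_apply_left]
    · by_cases h2 : p = (b:ℕ)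
      · have he : (⟨p, hp⟩ : Fin n) = b := Fin.ext h2
        have hba : ¬((b:ℕ) = (a:ℕ)) := h2 ▸ h1
        simp [entry, hp, hh, he, h1, h2, hba, Equiv.swap_apply_right]
      · have ha : (⟨p, hp⟩ : Fin n) ≠ a := fun h => h1 (congrArg Fin.val h)
        have hb : (⟨p, hp⟩ : Fin n) ≠ b := fun h => h2 (congrArg Fin.val h)
        simp [entry, hp, hh, h1, h2, Equiv.swap_apply_of_ne_of_ne ha hb]
  · have h1 : p ≠ (a:ℕ) := by have := a.2; omega
    have h2 : p ≠ (b:ℕ) := by have := b.2; omega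
    simp [entry, hp, h1, h2]


lemma entry_pos {σ : Equiv.Perm (Fin n)} {i : ℕ} (h : i < n) : 0 < entry n σ i := by
  simp [entry, h]

lemma entry_eq_zero {σ : Equiv.Perm (Fin n)} {i : ℕ} (h : ¬ i < n) : entry n σ i = 0 := by
  simp [entry, h]

lemma entry_le_n {σ : Equiv.Perm (Fin n)} {i : ℕ} : entry n σ i ≤ n := by
  unfold entry; split
  · exact (σ _).2
  · omega

lemma entry_inj {σ : Equiv.Perm (Fin n)} {i j : ℕ} (hi : i < n) (hj : j < n)
    (h : entry n σ i = entry n σ j) : i = j := by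
  simp only [entry, dif_pos hi, dif_pos hj] at h
  have h2 : σ ⟨i, hi⟩ = σ ⟨j, hj⟩ := Fin.ext (by omega)
  simpa using congrArg Fin.val (σ.injective h2)

lemma entry_ext {σ τ : Equiv.Perm (Fin n)} (h : ∀ p, entry n σ p = entry n τ p) : σ = τ := by
  apply Equiv.ext; intro x
  have h2 := h x
  simp only [entry, dif_pos x.2, Fin.eta] at h2
  exact Fin.ext (by omega)

def posOf (σ : Equiv.Perm (Fin n)) (v : Fin n) : ℕ := ((σ.symm v : Fin n) : ℕ)

lemma posOf_lt (σ : Equiv.Perm (Fin n)) (v : Fin n) : posOf σ v < n := (σ.symm v).2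

lemma entry_posOf (σ : Equiv.Perm (Fin n)) (v : Fin n) : entry n σ (posOf σ v) = (v : ℕ) + 1 := by
  simp [entry, posOf, dif_pos (posOf_lt σ v)]

lemma posOf_eq {σ : Equiv.Perm (Fin n)} {v : Fin n} {p : ℕ} (hp : p < n)
    (h : entry n σ p = (v : ℕ) + 1) : posOf σ v = p :=
  entry_inj (posOf_lt σ v) hp (by rw [entry_posOf, h])

variable (n k)

def hopR : ℕ → Equiv.Perm (Fin n) → ℕ → Equiv.Perm (Fin n)
  | 0, σ, _ => σ
  | f+1, σ, i =>
    if h : i + k < n ∧ entry n σ (i+k) < entry n σ i then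
      hopR f (σ * Equiv.swap ⟨i, by omega⟩ ⟨i+k, h.1⟩) (i+k)
    else σ

def hopL : ℕ → Equiv.Perm (Fin n) → ℕ → Equiv.Perm (Fin n)
  | 0, σ, _ => σ
  | f+1, σ, i =>
    if h : k ≤ i ∧ i < n ∧ entry n σ (i-k) < entry n σ i then
      hopL f (σ * Equiv.swap ⟨i, h.2.1⟩ ⟨i-k, by omega⟩) (i-k)
    else σ

variable {n k}

lemma hopR_spec (hk : 0 < k) (t : ℕ) : ∀ (f : ℕ) (σ : Equiv.Perm (Fin n)) (i : ℕ),
    i < n → t ≤ f →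
    (∀ m, 1 ≤ m → m ≤ t → i + m*k < n ∧ entry n σ (i+m*k) < entry n σ i) →
    ¬(i + (t+1)*k < n ∧ entry n σ (i+(t+1)*k) < entry n σ i) →
    (∀ l, l < t → entry n (hopR n k f σ i) (i+l*k) = entry n σ (i+(l+1)*k)) ∧
    entry n (hopR n k f σ i) (i+t*k) = entry n σ i ∧
    (∀ p, (∀ l, l ≤ t → p ≠ i + l*k) → entry n (hopR n k f σ i) p = entry n σ p) := by
  induction t with
  | zero =>
    intro f σ i hi hf h1 h2
    have h2' : ¬(i + k < n ∧ entry n σ (i+k) < entry n σ i) := by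
      simpa using h2
    have heq : hopR n k f σ i = σ := by
      cases f with
      | zero => rfl
      | succ f => simp only [hopR, dif_neg h2']
    rw [heq]
    exact ⟨fun l hl => absurd hl (by omega), by simp, fun p _ => rfl⟩
  | succ t ih =>
    intro f σ i hi hf h1 h2
    have hcond : i + k < n ∧ entry n σ (i+k) < entry n σ i := by
      have := h1 1 le_rfl (by omega); simpa using this
    obtain ⟨f', rfl⟩ : ∃ f', f = f'+1 := ⟨f-1, by omega⟩
    have heq : hopR n k (f'+1) σ i
        = hopR n k f' (σ * Equiv.swap ⟨i, by omega⟩ ⟨i+k, hcond.1⟩) (i+k) := by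
      simp only [hopR, dif_pos hcond]
    set σ₁ := σ * Equiv.swap (⟨i, by omega⟩ : Fin n) ⟨i+k, hcond.1⟩ with hσ₁
    have e1 : ∀ p, entry n σ₁ p
        = if p = i then entry n σ (i+k) else if p = i+k then entry n σ i else entry n σ p := by
      intro p; rw [hσ₁, entry_mul_swap]
    have eik : entry n σ₁ (i+k) = entry n σ i := by
      rw [e1]; rw [if_neg (by omega), if_pos rfl]
    have eout : ∀ p, p ≠ i → p ≠ i + k → entry n σ₁ p = entry n σ p := by
      intro p hp1 hp2; rw [e1, if_neg hp1, if_neg hp2]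
    have key := ih f' σ₁ (i+k) hcond.1 (by omega)
      (by
        intro m hm1 hm2
        have harith : i + k + m*k = i + (m+1)*k := by ring
        have := h1 (m+1) (by omega) (by omega)
        refine ⟨by omega, ?_⟩
        rw [harith, eik, eout _ (by omega) (by nlinarith)]
        exact this.2)
      (by
        have harith : i + k + (t+1)*k = i + (t+1+1)*k := by ring
        rw [harith, eik, eout _ (by omega) (by nlinarith)]
        exact h2)
    obtain ⟨A, B, C⟩ := key
    rw [heq]
    refine ⟨?_, ?_, ?_⟩
    · intro l hl
      cases l with
      | zero =>
        have hC := C i (by intro l hl; omega)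
        have ha0 : i + 0*k = i := by ring
        have ha1 : i + (0+1)*k = i + k := by ring
        rw [ha0, ha1, hC, e1, if_pos rfl]
      | succ l' =>
        have hA := A l' (by omega)
        have harith : i + k + l'*k = i + (l'+1)*k := by ring
        have harith2 : i + k + (l'+1)*k = i + (l'+1+1)*k := by ring
        rw [harith, harith2] at hA
        rw [hA, eout _ (by nlinarith) (by nlinarith)]
    · have harith : i + k + t*k = i + (t+1)*k := by ring
      rw [harith] at B
      rw [B, eik]
    · intro p hp
      have hC := C p (by
        intro l hl
        have harith : i + k + l*k = i + (l+1)*k := by ring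
        rw [harith]
        exact hp (l+1) (by omega))
      rw [hC, eout p (by simpa using hp 0 (by omega)) (by simpa using hp 1 (by omega))]



lemma hopL_spec (hk : 0 < k) (t : ℕ) : ∀ (f : ℕ) (σ : Equiv.Perm (Fin n)) (i : ℕ),
    i < n → t ≤ f →
    (∀ m, 1 ≤ m → m ≤ t → m*k ≤ i ∧ entry n σ (i - m*k) < entry n σ i) →
    ¬((t+1)*k ≤ i ∧ entry n σ (i-(t+1)*k) < entry n σ i) →
    (∀ l, l < t → entry n (hopL n k f σ i) (i-l*k) = entry n σ (i-(l+1)*k)) ∧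
    entry n (hopL n k f σ i) (i-t*k) = entry n σ i ∧
    (∀ p, (∀ l, l ≤ t → p ≠ i - l*k) → entry n (hopL n k f σ i) p = entry n σ p) := by
  induction t with
  | zero =>
    intro f σ i hi hf h1 h2
    have h2' : ¬(k ≤ i ∧ i < n ∧ entry n σ (i-k) < entry n σ i) := by
      intro hc
      exact h2 ⟨by simpa using hc.1, by simpa using hc.2.2⟩
    have heq : hopL n k f σ i = σ := by
      cases f with
      | zero => rfl
      | succ f => simp only [hopL, dif_neg h2']
    rw [heq]
    exact ⟨fun l hl => absurd hl (by omega), by simp, fun p _ => rfl⟩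
  | succ t ih =>
    intro f σ i hi hf h1 h2
    have hcond0 := h1 1 le_rfl (by omega)
    have hcond : k ≤ i ∧ i < n ∧ entry n σ (i-k) < entry n σ i := by
      constructor
      · have := hcond0.1; omega
      · exact ⟨hi, by have := hcond0.2; simpa using this⟩
    obtain ⟨f', rfl⟩ : ∃ f', f = f'+1 := ⟨f-1, by omega⟩
    have heq : hopL n k (f'+1) σ i
        = hopL n k f' (σ * Equiv.swap ⟨i, hcond.2.1⟩ ⟨i-k, by omega⟩) (i-k) := by
      simp only [hopL, dif_pos hcond]
    set σ₁ := σ * Equiv.swap (⟨i, hcond.2.1⟩ : Fin n) ⟨i-k, by omega⟩ with hσ₁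
    have e1 : ∀ p, entry n σ₁ p
        = if p = i then entry n σ (i-k) else if p = i-k then entry n σ i else entry n σ p := by
      intro p; rw [hσ₁, entry_mul_swap]
    have hik : i - k < i := by omega
    have eik : entry n σ₁ (i-k) = entry n σ i := by
      rw [e1]; rw [if_neg (by omega), if_pos rfl]
    have eout : ∀ p, p ≠ i → p ≠ i - k → entry n σ₁ p = entry n σ p := by
      intro p hp1 hp2; rw [e1, if_neg hp1, if_neg hp2]
    have key := ih f' σ₁ (i-k) (by omega) (by omega)
      (by
        intro m hm1 hm2
        have hmk : (m+1)*k = m*k + k := by ring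
        have hmge : k ≤ m*k := Nat.le_mul_of_pos_left k (by omega)
        have hle := (h1 (m+1) (by omega) (by omega)).1
        have hlt := (h1 (m+1) (by omega) (by omega)).2
        have harith : i - k - m*k = i - (m+1)*k := by omega
        refine ⟨by omega, ?_⟩
        rw [harith, eik, eout _ (by omega) (by omega)]
        exact hlt)
      (by
        have hmk : (t+1+1)*k = (t+1)*k + k := by ring
        have hmge : k ≤ (t+1)*k := Nat.le_mul_of_pos_left k (by omega)
        intro hcontra
        apply h2
        have harith : i - k - (t+1)*k = i - (t+1+1)*k := by omega
        rw [harith, eik] at hcontra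
        obtain ⟨hc1, hc2⟩ := hcontra
        refine ⟨by omega, ?_⟩
        rwa [eout (i - (t+1+1)*k) (by omega) (by omega)] at hc2)
    obtain ⟨A, B, C⟩ := key
    rw [heq]
    have hki : k ≤ i := hcond.1
    refine ⟨?_, ?_, ?_⟩
    · intro l hl
      cases l with
      | zero =>
        have hC := C i (by intro l hl; omega)
        have ha0 : i - 0*k = i := by omega
        have ha1 : i - (0+1)*k = i - k := by omega
        rw [ha0, ha1, hC, e1, if_pos rfl]
      | succ l' =>
        have hA := A l' (by omega)
        have hl2 := (h1 (l'+1+1) (by omega) (by omega)).1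
        have hmk1 : (l'+1)*k = l'*k + k := by ring
        have hmk2 : (l'+1+1)*k = (l'+1)*k + k := by ring
        have harith : i - k - l'*k = i - (l'+1)*k := by omega
        have harith2 : i - k - (l'+1)*k = i - (l'+1+1)*k := by omega
        rw [harith, harith2] at hA
        rw [hA, eout _ (by omega) (by omega)]
    · have hl2 := (h1 (t+1) (by omega) (by omega)).1
      have hmk2 : (t+1)*k = t*k + k := by ring
      have harith : i - k - t*k = i - (t+1)*k := by omega
      rw [harith] at B
      rw [B, eik]
    · intro p hp
      have hC := C p (by
        intro l hl
        have hmk1 : (l+1)*k = l*k + k := by ring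
        have harith : i - k - l*k = i - (l+1)*k := by omega
        rw [harith]
        exact hp (l+1) (by omega))
      have hp0 := hp 0 (by omega)
      have hp1 := hp 1 (by omega)
      rw [hC, eout p (by omega) (by simpa using hp1)]


variable (n k)

def descP (σ : Equiv.Perm (Fin n)) (i : ℕ) : Prop := i+k < n ∧ entry n σ (i+k) < entry n σ i
def lbigP (σ : Equiv.Perm (Fin n)) (i : ℕ) : Prop := i < k ∨ entry n σ i < entry n σ (i-k)
def ddP (σ : Equiv.Perm (Fin n)) (i : ℕ) : Prop := descP n k σ i ∧ lbigP n k σ i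
def daP (σ : Equiv.Perm (Fin n)) (i : ℕ) : Prop := ¬descP n k σ i ∧ ¬lbigP n k σ i

instance (σ : Equiv.Perm (Fin n)) (i : ℕ) : Decidable (descP n k σ i) := by
  unfold descP; infer_instance
instance (σ : Equiv.Perm (Fin n)) (i : ℕ) : Decidable (lbigP n k σ i) := by
  unfold lbigP; infer_instance
instance (σ : Equiv.Perm (Fin n)) (i : ℕ) : Decidable (ddP n k σ i) := by
  unfold ddP; infer_instance
instance (σ : Equiv.Perm (Fin n)) (i : ℕ) : Decidable (daP n k σ i) := by
  unfold daP; infer_instance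

def desN (σ : Equiv.Perm (Fin n)) : ℕ := ((range n).filter fun p => descP n k σ p).card

variable {n k}

lemma hopR_main (hk : 0 < k) (σ σ' : Equiv.Perm (Fin n)) (v : Fin n)
    (hdd : ddP n k σ (posOf σ v)) (hσ' : σ' = hopR n k n σ (posOf σ v)) :
    daP n k σ' (posOf σ' v) ∧
    (∀ u : Fin n, u ≠ v →
      ((ddP n k σ' (posOf σ' u) ↔ ddP n k σ (posOf σ u)) ∧
       (daP n k σ' (posOf σ' u) ↔ daP n k σ (posOf σ u)))) ∧
    desN n k σ' + 1 = desN n k σ ∧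
    hopL n k n σ' (posOf σ' v) = σ := by
  classical
  set i := posOf σ v with hidef
  have hi : i < n := posOf_lt σ v
  have hv : entry n σ i = (v:ℕ)+1 := entry_posOf σ v
  obtain ⟨hdesc, hlb⟩ := hdd
  rw [S6.descP] at hdesc
  rw [S6.lbigP] at hlb
  have hPex : ∃ t : ℕ, ¬(i + (t+1)*k < n ∧ entry n σ (i+(t+1)*k) < entry n σ i) := by
    refine ⟨n, fun hc => ?_⟩
    have : n ≤ (n+1)*k := by nlinarith
    omega
  set t := Nat.find hPex with htdef
  have ht : ¬(i + (t+1)*k < n ∧ entry n σ (i+(t+1)*k) < entry n σ i) := Nat.find_spec hPex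
  have hmin : ∀ m, m < t → (i + (m+1)*k < n ∧ entry n σ (i+(m+1)*k) < entry n σ i) := by
    intro m hm
    have := Nat.find_min hPex hm
    exact not_not.mp this
  have ht1 : 1 ≤ t := by
    rcases Nat.eq_zero_or_pos t with h0 | h
    · exfalso; rw [h0] at ht; exact ht (by simpa using hdesc)
    · exact h
  have hwin : ∀ m, 1 ≤ m → m ≤ t → i + m*k < n ∧ entry n σ (i+m*k) < entry n σ i := by
    intro m h1 h2
    have h3 := hmin (m-1) (by omega)
    rwa [(by omega : m-1+1 = m)] at h3
  have htn : t ≤ n := by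
    have h1 := (hwin t ht1 le_rfl).1
    have h2 : t ≤ t*k := Nat.le_mul_of_pos_right t hk
    omega
  obtain ⟨EA, EB, EC⟩ := hopR_spec hk t n σ i hi htn hwin ht
  rw [← hσ'] at EA EB EC
  set j := i + t*k with hjdef
  have hjn : j < n := (hwin t ht1 le_rfl).1
  have hEB : entry n σ' j = (v:ℕ)+1 := by rw [EB, hv]
  have hposv' : posOf σ' v = j := posOf_eq hjn hEB
  have hwne : ∀ a l : ℕ, a ≠ l → i + a*k ≠ i + l*k := by
    intro a l hne heq
    have h2 : a*k = l*k := by omega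
    exact hne (Nat.eq_of_mul_eq_mul_right hk h2)
  have hkm : ∀ m : ℕ, 1 ≤ m → k ≤ m*k := fun m hm => Nat.le_mul_of_pos_left k (by omega)
  have hmono : ∀ a b : ℕ, a ≤ b → a*k ≤ b*k := fun a b h => Nat.mul_le_mul_right k h
  have hEAt : ∀ m, 1 ≤ m → m ≤ t → entry n σ' (i+(m-1)*k) = entry n σ (i+m*k) := by
    intro m h1 h2
    have h3 := EA (m-1) (by omega)
    rwa [(by omega : m-1+1 = m)] at h3
  have hsubk : ∀ m : ℕ, 1 ≤ m → i + (m-1)*k + k = i + m*k := by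
    intro m h1
    have h2 : (m-1)*k = m*k - k := by rw [Nat.sub_mul, one_mul]
    have h3 := hkm m h1
    omega
  have hvalsmall : ∀ m, 1 ≤ m → m ≤ t → entry n σ (i+m*k) < (v:ℕ)+1 := by
    intro m h1 h2; rw [← hv]; exact (hwin m h1 h2).2
  have hvalbig : i + (t+1)*k < n → (v:ℕ)+1 < entry n σ (i+(t+1)*k) := by
    intro hlt
    have h1 : ¬ entry n σ (i+(t+1)*k) < entry n σ i := fun hc => ht ⟨hlt, hc⟩
    have h2 : entry n σ (i+(t+1)*k) ≠ (v:ℕ)+1 := by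
      intro hc
      have := entry_inj hlt hi (by rw [hc, hv])
      exact absurd this (by
        have := hkm (t+1) (by omega)
        omega)
    rw [hv] at h1; omega
  -- out-of-window entries
  have hout_entry : ∀ q, (∀ l, l ≤ t → q ≠ i + l*k) → entry n σ' q = entry n σ q := EC
  -- v is a double ascent at j in σ'
  have hdescj : ¬ descP n k σ' j := by
    rw [S6.descP]
    rintro ⟨h1, h2⟩
    have harith : j + k = i + (t+1)*k := by
      rw [hjdef]; ring
    rw [harith] at h1 h2
    rw [hout_entry _ (fun l hl => hwne (t+1) l (by omega)), hEB] at h2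
    exact absurd (hvalbig h1) (by omega)
  have hlbigj : ¬ lbigP n k σ' j := by
    rw [S6.lbigP]
    rintro (h1 | h2)
    · have := hkm t ht1; omega
    · have harith : j - k = i + (t-1)*k := by
        have h2 : (t-1)*k = t*k - k := by rw [Nat.sub_mul, one_mul]
        have h3 := hkm t ht1
        omega
      rw [harith, hEAt t ht1 le_rfl, hEB] at h2
      exact absurd (hvalsmall t ht1 le_rfl) (by omega)
  -- desc iff, in-window (shifted)
  have Din : ∀ m, 1 ≤ m → m ≤ t → (descP n k σ' (i+(m-1)*k) ↔ descP n k σ (i+m*k)) := by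
    intro m h1 h2
    rw [S6.descP, S6.descP, hsubk m h1, hEAt m h1 h2]
    rcases Nat.lt_or_ge m t with hmt | hmt
    · have hA := EA m hmt
      have harith : i + m*k + k = i + (m+1)*k := by ring
      have c1 := (hwin m h1 h2).1
      have c2 := (hwin (m+1) (by omega) (by omega)).1
      rw [hA, harith]
      exact ⟨fun h => ⟨c2, h.2⟩, fun h => ⟨c1, h.2⟩⟩
    · have hmeq : m = t := by omega
      rw [hmeq]
      have hEB2 := hEB
      rw [hjdef] at hEB2
      rw [hEB2]
      have hsm : entry n σ (i+t*k) < (v:ℕ)+1 := hvalsmall t ht1 le_rfl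
      refine iff_of_false ?_ ?_
      · rintro ⟨hh1, hh2⟩; omega
      · rintro ⟨hh1, hh2⟩
        have harith : i + t*k + k = i + (t+1)*k := by ring
        rw [harith] at hh1 hh2
        have := hvalbig hh1
        omega
  -- lbig iff, in-window (shifted)
  have LBin : ∀ m, 1 ≤ m → m ≤ t → (lbigP n k σ' (i+(m-1)*k) ↔ lbigP n k σ (i+m*k)) := by
    intro m h1 h2
    rw [S6.lbigP, S6.lbigP, hEAt m h1 h2]
    rcases Nat.lt_or_ge 1 m with hm2 | hm2
    · -- m ≥ 2
      have hge1 : k ≤ (m-1)*k := hkm (m-1) (by omega)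
      have hgem : k ≤ m*k := hkm m (by omega)
      have harith : i + (m-1)*k - k = i + (m-1-1)*k := by
        have hx : (m-1-1)*k = (m-1)*k - k := by rw [Nat.sub_mul, one_mul]
        omega
      have harith2 : i + m*k - k = i + (m-1)*k := by
        have hx : (m-1)*k = m*k - k := by rw [Nat.sub_mul, one_mul]
        omega
      rw [harith, harith2]
      have hEprev : entry n σ' (i+(m-1-1)*k) = entry n σ (i+(m-1)*k) :=
        hEAt (m-1) (by omega) (by omega)
      rw [hEprev]
      constructor
      · rintro (hh | hh)
        · omega
        · exact Or.inr hh
      · rintro (hh | hh)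
        · omega
        · exact Or.inr hh
    · -- m = 1
      have hmeq : m = 1 := by omega
      subst hmeq
      simp only [show (1:ℕ)-1 = 0 from rfl, Nat.zero_mul, Nat.add_zero, one_mul]
      have hikk : i + k - k = i := by omega
      rw [hikk]
      refine iff_of_true ?_ (Or.inr ?_)
      · rcases Nat.lt_or_ge i k with hik | hik
        · exact Or.inl hik
        · right
          have hine : ∀ l, l ≤ t → i - k ≠ i + l*k := by
            intro l hl; omega
          rw [hout_entry _ hine]
          have hlb2 : entry n σ i < entry n σ (i-k) := by
            rcases hlb with h | h
            · omega
            · exact h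
          have hsm := hvalsmall 1 le_rfl ht1
          rw [one_mul] at hsm
          rw [hv] at hlb2
          omega
      · rw [hv]
        have hsm := hvalsmall 1 le_rfl ht1
        rw [one_mul] at hsm
        exact hsm
  -- desc iff, out of window
  have Dout : ∀ q, (∀ l, l ≤ t → q ≠ i + l*k) → (descP n k σ' q ↔ descP n k σ q) := by
    intro q hq
    rw [S6.descP, S6.descP, hout_entry q hq]
    by_cases hqi : q + k = i
    · have hik : k ≤ i := by omega
      have hE0 : entry n σ' i = entry n σ (i+k) := by
        have := hEAt 1 le_rfl ht1
        simpa using this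
      rw [hqi, hE0]
      have hsm := hvalsmall 1 le_rfl ht1
      rw [one_mul] at hsm
      have hlb2 : entry n σ i < entry n σ (i-k) := by
        rcases hlb with h | h
        · omega
        · exact h
      have hqik : q = i - k := by omega
      rw [← hqik] at hlb2
      rw [hv] at hlb2
      refine iff_of_true ⟨by omega, by omega⟩ ⟨by omega, by omega⟩
    · have hq2 : ∀ l, l ≤ t → q + k ≠ i + l*k := by
        intro l hl heq
        rcases Nat.eq_zero_or_pos l with h0 | hpos
        · rw [h0] at heq; simp at heq; omega
        · have hx : l*k = (l-1)*k + k := by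
            have : (l-1)*k = l*k - k := by rw [Nat.sub_mul, one_mul]
            have := hkm l hpos
            omega
          exact hq (l-1) (by omega) (by omega)
      rw [hout_entry _ hq2]
  -- lbig iff, out of window
  have LBout : ∀ q, q < n → (∀ l, l ≤ t → q ≠ i + l*k) → (lbigP n k σ' q ↔ lbigP n k σ q) := by
    intro q hqn hq
    rw [S6.lbigP, S6.lbigP, hout_entry q hq]
    by_cases hqj : q = i + (t+1)*k
    · have hkq : k ≤ q := by
        have := hkm (t+1) (by omega)
        omega
      have harith : q - k = i + t*k := by
        have hx : (t+1)*k = t*k + k := by ring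
        omega
      have hEB2 := hEB
      rw [hjdef] at hEB2
      rw [harith, hEB2]
      have hbig : (v:ℕ)+1 < entry n σ q := by rw [hqj]; exact hvalbig (by omega)
      have hsm : entry n σ (i + t*k) < (v:ℕ)+1 := hvalsmall t ht1 le_rfl
      refine iff_of_false ?_ ?_
      · rintro (hh | hh)
        · omega
        · omega
      · rintro (hh | hh)
        · omega
        · omega
    · rcases Nat.lt_or_ge q k with hqk | hqk
      · refine iff_of_true (Or.inl hqk) (Or.inl hqk)
      · have hq2 : ∀ l, l ≤ t → q - k ≠ i + l*k := by
          intro l hl heq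
          rcases Nat.lt_or_ge l t with hlt | hge
          · exact hq (l+1) (by omega) (by
              have hx : (l+1)*k = l*k + k := by ring
              omega)
          · have hleq : l = t := by omega
            rw [hleq] at heq
            exact hqj (by
              have hx : (t+1)*k = t*k + k := by ring
              omega)
        rw [hout_entry _ hq2]
  -- type preservation for other values
  have PRES : ∀ u : Fin n, u ≠ v →
      ((descP n k σ' (posOf σ' u) ↔ descP n k σ (posOf σ u)) ∧
       (lbigP n k σ' (posOf σ' u) ↔ lbigP n k σ (posOf σ u))) := by
    intro u hu
    have hqn : posOf σ u < n := posOf_lt σ u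
    have hque : entry n σ (posOf σ u) = (u:ℕ)+1 := entry_posOf σ u
    have hqnei : posOf σ u ≠ i := by
      intro hc
      rw [hc, hv] at hque
      exact hu (Fin.ext (by omega))
    by_cases hin : ∃ m, 1 ≤ m ∧ m ≤ t ∧ posOf σ u = i + m*k
    · obtain ⟨m, hm1, hm2, hmeq⟩ := hin
      have hpos' : posOf σ' u = i + (m-1)*k := by
        refine posOf_eq ?_ ?_
        · have h1 : (m-1)*k ≤ m*k := hmono (m-1) m (by omega)
          have := (hwin m hm1 hm2).1
          omega
        · rw [hEAt m hm1 hm2, ← hmeq, hque]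
      rw [hpos', hmeq]
      exact ⟨Din m hm1 hm2, LBin m hm1 hm2⟩
    · have hout : ∀ l, l ≤ t → posOf σ u ≠ i + l*k := by
        intro l hl heq
        rcases Nat.eq_zero_or_pos l with h0 | hpos
        · rw [h0] at heq; simp at heq; exact hqnei heq
        · exact hin ⟨l, hpos, hl, heq⟩
      have hpos' : posOf σ' u = posOf σ u := by
        refine posOf_eq hqn ?_
        rw [hout_entry _ hout, hque]
      rw [hpos']
      exact ⟨Dout _ hout, LBout _ hqn hout⟩
  -- top descent is false in σ
  have hdesc_top : ¬ descP n k σ (i+t*k) := by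
    rw [S6.descP]
    rintro ⟨h1, h2⟩
    have hx : i + t*k + k = i + (t+1)*k := by ring
    rw [hx] at h1 h2
    have := hvalbig h1
    have := hvalsmall t ht1 le_rfl
    omega
  have hi_mem : i ∈ (range n).filter fun p => descP n k σ p := by
    refine mem_filter.mpr ⟨mem_range.mpr hi, ?_⟩
    rw [S6.descP]; exact hdesc
  -- descent count
  have hdes : desN n k σ' + 1 = desN n k σ := by
    have hclass : ∀ p : ℕ, (∃ m, 1 ≤ m ∧ m ≤ t ∧ p = i+(m-1)*k) ∨ p = j ∨
        (∀ l, l ≤ t → p ≠ i + l*k) := by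
      intro p
      by_cases h : ∃ l, l ≤ t ∧ p = i + l*k
      · obtain ⟨l, hl, rfl⟩ := h
        by_cases hlt : l = t
        · right; left; rw [hjdef, hlt]
        · left; exact ⟨l+1, by omega, by omega, by simp⟩
      · push_neg at h
        right; right; exact h
    have hcard : ((range n).filter fun p => descP n k σ' p).card
        = (((range n).filter fun p => descP n k σ p).erase i).card := by
      apply Finset.card_bij'
        (i := fun p _ => if ∃ m, 1 ≤ m ∧ m ≤ t ∧ p = i+(m-1)*k then p+k else p)
        (j := fun q _ => if ∃ m, 1 ≤ m ∧ m ≤ t ∧ q = i+m*k then q-k else q)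
      · -- hi : maps into erase
        intro p hp
        obtain ⟨hpn, hpd⟩ := mem_filter.mp hp
        rcases hclass p with hSW | hpj | hout
        · rw [if_pos hSW]
          obtain ⟨m, h1, h2, rfl⟩ := hSW
          rw [hsubk m h1]
          refine Finset.mem_erase.mpr ⟨hwne m 0 (by omega) ∘ (by simpa using ·), ?_⟩
          refine mem_filter.mpr ⟨mem_range.mpr (hwin m h1 h2).1, ?_⟩
          exact (Din m h1 h2).mp hpd
        · exact absurd (hpj ▸ hpd) hdescj
        · have hnSW : ¬ ∃ m, 1 ≤ m ∧ m ≤ t ∧ p = i+(m-1)*k := by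
            rintro ⟨m, h1, h2, heq⟩
            exact hout (m-1) (by omega) heq
          rw [if_neg hnSW]
          refine Finset.mem_erase.mpr ⟨by simpa using hout 0 (by omega), ?_⟩
          exact mem_filter.mpr ⟨hpn, (Dout p hout).mp hpd⟩
      · -- hj : maps back into s
        intro q hq
        obtain ⟨hqne, hqmem⟩ := Finset.mem_erase.mp hq
        obtain ⟨hqn, hqd⟩ := mem_filter.mp hqmem
        by_cases hFW : ∃ m, 1 ≤ m ∧ m ≤ t ∧ q = i+m*k
        · rw [if_pos hFW]
          obtain ⟨m, h1, h2, rfl⟩ := hFW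
          have harith : i + m*k - k = i + (m-1)*k := by
            have := hsubk m h1; omega
          rw [harith]
          refine mem_filter.mpr ⟨mem_range.mpr ?_, (Din m h1 h2).mpr hqd⟩
          have := hmono (m-1) m (by omega)
          have := (hwin m h1 h2).1
          omega
        · rw [if_neg hFW]
          have hout : ∀ l, l ≤ t → q ≠ i + l*k := by
            intro l hl heq
            rcases Nat.eq_zero_or_pos l with h0 | hpos
            · rw [h0] at heq; simp at heq; exact hqne heq
            · exact hFW ⟨l, hpos, hl, heq⟩
          exact mem_filter.mpr ⟨hqn, (Dout q hout).mpr hqd⟩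
      · -- left inverse
        intro p hp
        obtain ⟨hpn, hpd⟩ := mem_filter.mp hp
        rcases hclass p with hSW | hpj | hout
        · rw [if_pos hSW]
          obtain ⟨m, h1, h2, rfl⟩ := hSW
          have hFW : ∃ m', 1 ≤ m' ∧ m' ≤ t ∧ i+(m-1)*k+k = i+m'*k :=
            ⟨m, h1, h2, by rw [hsubk m h1]⟩
          rw [if_pos hFW]
          omega
        · exact absurd (hpj ▸ hpd) hdescj
        · have hnSW : ¬ ∃ m, 1 ≤ m ∧ m ≤ t ∧ p = i+(m-1)*k := by
            rintro ⟨m, h1, h2, heq⟩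
            exact hout (m-1) (by omega) heq
          rw [if_neg hnSW]
          have hnFW : ¬ ∃ m, 1 ≤ m ∧ m ≤ t ∧ p = i+m*k := by
            rintro ⟨m, h1, h2, heq⟩
            exact hout m h2 heq
          rw [if_neg hnFW]
      · -- right inverse
        intro q hq
        obtain ⟨hqne, hqmem⟩ := Finset.mem_erase.mp hq
        by_cases hFW : ∃ m, 1 ≤ m ∧ m ≤ t ∧ q = i+m*k
        · rw [if_pos hFW]
          obtain ⟨m, h1, h2, rfl⟩ := hFW
          have harith : i + m*k - k = i + (m-1)*k := by
            have := hsubk m h1; omega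
          rw [harith]
          have hSW : ∃ m', 1 ≤ m' ∧ m' ≤ t ∧ i+(m-1)*k = i+(m'-1)*k := ⟨m, h1, h2, rfl⟩
          rw [if_pos hSW, hsubk m h1]
        · rw [if_neg hFW]
          have hnSW : ¬ ∃ m, 1 ≤ m ∧ m ≤ t ∧ q = i+(m-1)*k := by
            rintro ⟨m, h1, h2, heq⟩
            rcases Nat.lt_or_ge (m-1) 1 with hm0 | hm1
            · have : m = 1 := by omega
              rw [this] at heq; simp at heq; exact hqne heq
            · exact hFW ⟨m-1, hm1, by omega, heq⟩
          rw [if_neg hnSW]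
    have h1 : desN n k σ' = desN n k σ - 1 := by
      rw [S6.desN, S6.desN, hcard, Finset.card_erase_of_mem hi_mem]
    have h2 : 1 ≤ desN n k σ := by
      rw [S6.desN]
      exact Finset.card_pos.mpr ⟨i, hi_mem⟩
    omega
  -- hopL undoes hopR
  have hundo : hopL n k n σ' j = σ := by
    have hwin2 : ∀ m, 1 ≤ m → m ≤ t → m*k ≤ j ∧ entry n σ' (j - m*k) < entry n σ' j := by
      intro m h1 h2
      have hle : m*k ≤ t*k := hmono m t h2
      refine ⟨by omega, ?_⟩
      have harith : j - m*k = i + (t-m)*k := by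
        have hx : (t-m)*k = t*k - m*k := by rw [Nat.sub_mul]
        omega
      rw [harith, hEB]
      have hE := hEAt (t-m+1) (by omega) (by omega)
      rw [(by omega : t-m+1-1 = t-m)] at hE
      rw [hE]
      exact hvalsmall (t-m+1) (by omega) (by omega)
    have hstop : ¬((t+1)*k ≤ j ∧ entry n σ' (j-(t+1)*k) < entry n σ' j) := by
      rintro ⟨h1, h2⟩
      have hx : (t+1)*k = t*k + k := by ring
      have hik : k ≤ i := by omega
      have harith : j - (t+1)*k = i - k := by omega
      rw [harith, hEB] at h2
      have hine : ∀ l, l ≤ t → i - k ≠ i + l*k := by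
        intro l hl; omega
      rw [hout_entry _ hine] at h2
      have hlb2 : entry n σ i < entry n σ (i-k) := by
        rcases hlb with h | h
        · omega
        · exact h
      rw [hv] at hlb2; omega
    obtain ⟨A2, B2, C2⟩ := hopL_spec hk t n σ' j hjn htn hwin2 hstop
    apply entry_ext
    intro p
    by_cases hw : ∃ l, l ≤ t ∧ p = i + l*k
    · obtain ⟨l, hl, rfl⟩ := hw
      rcases Nat.eq_zero_or_pos l with h0 | hpos
      · rw [h0]
        simp only [Nat.zero_mul, Nat.add_zero]
        have hB := B2
        have harith : j - t*k = i := by omega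
        rw [harith, hEB] at hB
        rw [hB, hv]
      · have hA := A2 (t-l) (by omega)
        have hlk : l*k ≤ t*k := hmono l t hl
        have harith : j - (t-l)*k = i + l*k := by
          have hx : (t-l)*k = t*k - l*k := by rw [Nat.sub_mul]
          omega
        have harith2 : j - (t-l+1)*k = i + (l-1)*k := by
          have hx : (t-l+1)*k = (t-l)*k + k := by ring
          have hx2 : (t-l)*k = t*k - l*k := by rw [Nat.sub_mul]
          have hx3 := hsubk l hpos
          have hx4 := hkm l hpos
          omega
        rw [harith, harith2] at hA
        rw [hA, hEAt l hpos hl]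
    · push_neg at hw
      have hout2 : ∀ l, l ≤ t → p ≠ j - l*k := by
        intro l hl heq
        have hlk : l*k ≤ t*k := hmono l t hl
        have harith : j - l*k = i + (t-l)*k := by
          have hx : (t-l)*k = t*k - l*k := by rw [Nat.sub_mul]
          omega
        rw [harith] at heq
        exact hw (t-l) (by omega) heq
      rw [C2 p hout2, hout_entry p hw]
  refine ⟨?_, ?_, hdes, ?_⟩
  · rw [hposv', S6.daP]
    exact ⟨hdescj, hlbigj⟩
  · intro u hu
    have hP := PRES u hu
    constructor
    · rw [S6.ddP, S6.ddP]
      exact and_congr hP.1 hP.2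
    · rw [S6.daP, S6.daP]
      exact and_congr (not_congr hP.1) (not_congr hP.2)
  · rw [hposv']
    exact hundo
lemma hopL_main (hk : 0 < k) (σ σ' : Equiv.Perm (Fin n)) (v : Fin n)
    (hda : daP n k σ (posOf σ v)) (hσ' : σ' = hopL n k n σ (posOf σ v)) :
    ddP n k σ' (posOf σ' v) ∧ hopR n k n σ' (posOf σ' v) = σ := by
  classical
  set i := posOf σ v with hidef
  have hi : i < n := posOf_lt σ v
  have hv : entry n σ i = (v:ℕ)+1 := entry_posOf σ v
  obtain ⟨hnd, hnlb⟩ := hda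
  rw [S6.descP] at hnd
  rw [S6.lbigP] at hnlb
  push_neg at hnlb
  obtain ⟨hki, hge⟩ := hnlb
  have hkipos : 0 < i := by omega
  have hlbs : entry n σ (i-k) < entry n σ i := by
    rcases Nat.lt_or_ge (entry n σ (i-k)) (entry n σ i) with h | h
    · exact h
    · have heq : entry n σ (i-k) = entry n σ i := by omega
      have := entry_inj (by omega : i-k < n) hi heq
      omega
  have hPex : ∃ t : ℕ, ¬((t+1)*k ≤ i ∧ entry n σ (i-(t+1)*k) < entry n σ i) := by
    refine ⟨n, fun hc => ?_⟩
    have : n+1 ≤ (n+1)*k := Nat.le_mul_of_pos_right (n+1) hk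
    omega
  set t := Nat.find hPex with htdef
  have ht : ¬((t+1)*k ≤ i ∧ entry n σ (i-(t+1)*k) < entry n σ i) := Nat.find_spec hPex
  have hmin : ∀ m, m < t → ((m+1)*k ≤ i ∧ entry n σ (i-(m+1)*k) < entry n σ i) := by
    intro m hm
    exact not_not.mp (Nat.find_min hPex hm)
  have ht1 : 1 ≤ t := by
    rcases Nat.eq_zero_or_pos t with h0 | h
    · exfalso; rw [h0] at ht
      exact ht (by simpa using ⟨hki, hlbs⟩)
    · exact h
  have hwin : ∀ m, 1 ≤ m → m ≤ t → m*k ≤ i ∧ entry n σ (i-m*k) < entry n σ i := by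
    intro m h1 h2
    have h3 := hmin (m-1) (by omega)
    rwa [(by omega : m-1+1 = m)] at h3
  have htn : t ≤ n := by
    have h1 := (hwin t ht1 le_rfl).1
    have h2 : t ≤ t*k := Nat.le_mul_of_pos_right t hk
    omega
  have htk : t*k ≤ i := (hwin t ht1 le_rfl).1
  have hkm : ∀ m : ℕ, 1 ≤ m → k ≤ m*k := fun m hm => Nat.le_mul_of_pos_left k (by omega)
  have hmono : ∀ a b : ℕ, a ≤ b → a*k ≤ b*k := fun a b h => Nat.mul_le_mul_right k h
  obtain ⟨EA, EB, EC⟩ := hopL_spec hk t n σ i hi htn hwin ht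
  rw [← hσ'] at EA EB EC
  set j := i - t*k with hjdef
  have hjn : j < n := by omega
  have hEB : entry n σ' j = (v:ℕ)+1 := by rw [EB, hv]
  have hposv' : posOf σ' v = j := posOf_eq hjn hEB
  have hvalsmall : ∀ m, 1 ≤ m → m ≤ t → entry n σ (i-m*k) < (v:ℕ)+1 := by
    intro m h1 h2; rw [← hv]; exact (hwin m h1 h2).2
  have hEAt : ∀ m, 1 ≤ m → m ≤ t → entry n σ' (i-(m-1)*k) = entry n σ (i-m*k) := by
    intro m h1 h2
    have h3 := EA (m-1) (by omega)
    rwa [(by omega : m-1+1 = m)] at h3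
  have hout_entry : ∀ q, (∀ l, l ≤ t → q ≠ i - l*k) → entry n σ' q = entry n σ q := EC
  -- v is a double descent at j in σ'
  have hdescj : descP n k σ' j := by
    rw [S6.descP]
    have hx : (t-1)*k = t*k - k := by rw [Nat.sub_mul, one_mul]
    have hk1 := hkm t ht1
    have harith : j + k = i - (t-1)*k := by omega
    have hE := hEAt t ht1 le_rfl
    rw [harith, hE, hEB]
    exact ⟨by omega, hvalsmall t ht1 le_rfl⟩
  have hlbigj : lbigP n k σ' j := by
    rw [S6.lbigP]
    by_cases hc : (t+1)*k ≤ i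
    · right
      have hx : (t+1)*k = t*k + k := by ring
      have harith : j - k = i - (t+1)*k := by omega
      have hne : ∀ l, l ≤ t → i-(t+1)*k ≠ i - l*k := by
        intro l hl
        have := hmono l t hl
        omega
      rw [harith, hout_entry _ hne, hEB]
      have h1 : ¬ entry n σ (i-(t+1)*k) < entry n σ i := fun hcc => ht ⟨hc, hcc⟩
      have h2 : entry n σ (i-(t+1)*k) ≠ entry n σ i := by
        intro hcc
        have := entry_inj (by omega : i-(t+1)*k < n) hi hcc
        omega
      rw [hv] at h1 h2
      omega
    · left
      have hx : (t+1)*k = t*k + k := by ring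
      omega
  -- hopR undoes hopL
  have hundo : hopR n k n σ' j = σ := by
    have hwin3 : ∀ m, 1 ≤ m → m ≤ t → j + m*k < n ∧ entry n σ' (j+m*k) < entry n σ' j := by
      intro m h1 h2
      have hle : m*k ≤ t*k := hmono m t h2
      have harith : j + m*k = i - (t-m)*k := by
        have hx : (t-m)*k = t*k - m*k := by rw [Nat.sub_mul]
        omega
      refine ⟨by omega, ?_⟩
      rw [harith, hEB]
      have hE := hEAt (t-m+1) (by omega) (by omega)
      rw [(by omega : t-m+1-1 = t-m)] at hE
      rw [hE]
      exact hvalsmall (t-m+1) (by omega) (by omega)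
    have hstop3 : ¬(j + (t+1)*k < n ∧ entry n σ' (j+(t+1)*k) < entry n σ' j) := by
      rintro ⟨h1, h2⟩
      have hx : (t+1)*k = t*k + k := by ring
      have harith : j + (t+1)*k = i + k := by omega
      have hne : ∀ l, l ≤ t → i + k ≠ i - l*k := by
        intro l hl; omega
      rw [harith, hout_entry _ hne, hEB] at h2
      rw [harith] at h1
      rw [hv] at hnd
      exact hnd ⟨h1, h2⟩
    obtain ⟨A3, B3, C3⟩ := hopR_spec hk t n σ' j hjn htn hwin3 hstop3
    apply entry_ext
    intro p
    by_cases hw : ∃ l, l ≤ t ∧ p = i - l*k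
    · obtain ⟨l, hl, rfl⟩ := hw
      have hlk : l*k ≤ t*k := hmono l t hl
      rcases Nat.eq_zero_or_pos l with h0 | hpos
      · rw [h0]
        simp only [Nat.zero_mul, Nat.sub_zero]
        have hB := B3
        have harith : j + t*k = i := by omega
        rw [harith, hEB] at hB
        rw [hB, hv]
      · have hA := A3 (t-l) (by omega)
        have hx : (t-l)*k = t*k - l*k := by rw [Nat.sub_mul]
        have hx2 : (t-l+1)*k = (t-l)*k + k := by ring
        have hx3 := hkm l hpos
        have hx4 : (l-1)*k = l*k - k := by rw [Nat.sub_mul, one_mul]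
        have harith : j + (t-l)*k = i - l*k := by omega
        have harith2 : j + (t-l+1)*k = i - (l-1)*k := by omega
        rw [harith, harith2] at hA
        rw [hA, hEAt l hpos hl]
    · push_neg at hw
      have hout2 : ∀ l, l ≤ t → p ≠ j + l*k := by
        intro l hl heq
        have hlk : l*k ≤ t*k := hmono l t hl
        have hx : (t-l)*k = t*k - l*k := by rw [Nat.sub_mul]
        have harith : j + l*k = i - (t-l)*k := by omega
        rw [harith] at heq
        exact hw (t-l) (by omega) heq
      rw [C3 p hout2, hout_entry p hw]
  refine ⟨?_, ?_⟩
  · rw [hposv', S6.ddP]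
    exact ⟨hdescj, hlbigj⟩
  · rw [hposv']
    exact hundo

variable (n k)

def ddset (σ : Equiv.Perm (Fin n)) : Finset (Fin n) :=
  univ.filter fun v => ddP n k σ (posOf σ v)
def daset (σ : Equiv.Perm (Fin n)) : Finset (Fin n) :=
  univ.filter fun v => daP n k σ (posOf σ v)
def hopRv (v : Fin n) (σ : Equiv.Perm (Fin n)) : Equiv.Perm (Fin n) :=
  if ddP n k σ (posOf σ v) then hopR n k n σ (posOf σ v) else σ
def hopLv (v : Fin n) (σ : Equiv.Perm (Fin n)) : Equiv.Perm (Fin n) :=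
  if daP n k σ (posOf σ v) then hopL n k n σ (posOf σ v) else σ
def cfold (L : List (Fin n)) (σ : Equiv.Perm (Fin n)) : Equiv.Perm (Fin n) :=
  L.foldl (fun τ v => hopRv n k v τ) σ
def efold (L : List (Fin n)) (S : Finset (Fin n)) (w : Equiv.Perm (Fin n)) : Equiv.Perm (Fin n) :=
  L.foldr (fun v τ => if v ∈ S then hopLv n k v τ else τ) w

variable {n k}

lemma mem_ddset {σ : Equiv.Perm (Fin n)} {v : Fin n} :
    v ∈ ddset n k σ ↔ ddP n k σ (posOf σ v) := by simp [ddset]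

lemma mem_daset {σ : Equiv.Perm (Fin n)} {v : Fin n} :
    v ∈ daset n k σ ↔ daP n k σ (posOf σ v) := by simp [daset]

lemma not_ddP_of_daP {σ : Equiv.Perm (Fin n)} {p : ℕ} (h : daP n k σ p) : ¬ ddP n k σ p := by
  rw [S6.daP] at h; rw [S6.ddP]; exact fun hd => h.1 hd.1

lemma hopRv_notdd {σ : Equiv.Perm (Fin n)} {v : Fin n} (h : ¬ ddP n k σ (posOf σ v)) :
    hopRv n k v σ = σ := if_neg h

lemma hopLv_notda {σ : Equiv.Perm (Fin n)} {v : Fin n} (h : ¬ daP n k σ (posOf σ v)) :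
    hopLv n k v σ = σ := if_neg h

lemma hopRv_spec (hk : 0 < k) {σ : Equiv.Perm (Fin n)} {v : Fin n}
    (h : ddP n k σ (posOf σ v)) :
    ddset n k (hopRv n k v σ) = (ddset n k σ).erase v ∧
    daset n k (hopRv n k v σ) = insert v (daset n k σ) ∧
    desN n k (hopRv n k v σ) + 1 = desN n k σ ∧
    hopLv n k v (hopRv n k v σ) = σ := by
  classical
  have hσ' : hopRv n k v σ = hopR n k n σ (posOf σ v) := if_pos h
  obtain ⟨hda', hpres, hdes, hundo⟩ := hopR_main hk σ (hopRv n k v σ) v h hσ'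
  refine ⟨?_, ?_, hdes, ?_⟩
  · ext u
    rw [mem_ddset, Finset.mem_erase, mem_ddset]
    by_cases hu : u = v
    · subst hu
      exact iff_of_false (not_ddP_of_daP hda') (fun hc => hc.1 rfl)
    · rw [(hpres u hu).1]
      simp [hu]
  · ext u
    rw [mem_daset, Finset.mem_insert, mem_daset]
    by_cases hu : u = v
    · subst hu
      exact iff_of_true hda' (Or.inl rfl)
    · rw [(hpres u hu).2]
      simp [hu]
  · rw [S6.hopLv, if_pos hda']
    exact hundo

lemma hopLv_spec (hk : 0 < k) {σ : Equiv.Perm (Fin n)} {v : Fin n}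
    (h : daP n k σ (posOf σ v)) :
    ddset n k (hopLv n k v σ) = insert v (ddset n k σ) ∧
    daset n k (hopLv n k v σ) = (daset n k σ).erase v ∧
    desN n k σ + 1 = desN n k (hopLv n k v σ) ∧
    hopRv n k v (hopLv n k v σ) = σ := by
  classical
  have hσ' : hopLv n k v σ = hopL n k n σ (posOf σ v) := if_pos h
  obtain ⟨hdd', hundo⟩ := hopL_main hk σ (hopLv n k v σ) v h hσ'
  obtain ⟨_, hpres, hdes, _⟩ := hopR_main hk (hopLv n k v σ) σ v hdd' hundo.symm
  refine ⟨?_, ?_, hdes, ?_⟩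
  · ext u
    rw [mem_ddset, Finset.mem_insert, mem_ddset]
    by_cases hu : u = v
    · subst hu
      exact iff_of_true hdd' (Or.inl rfl)
    · rw [← (hpres u hu).1]
      simp [hu]
  · ext u
    rw [mem_daset, Finset.mem_erase, mem_daset]
    by_cases hu : u = v
    · subst hu
      exact iff_of_false (fun hc => (not_ddP_of_daP hc) hdd') (fun hc => hc.1 rfl)
    · rw [← (hpres u hu).2]
      simp [hu]
  · rw [S6.hopRv, if_pos hdd']
    exact hundo

lemma ddset_hopRv (hk : 0 < k) (v : Fin n) (σ : Equiv.Perm (Fin n)) :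
    ddset n k (hopRv n k v σ) = (ddset n k σ).erase v := by
  classical
  by_cases h : ddP n k σ (posOf σ v)
  · exact (hopRv_spec hk h).1
  · rw [hopRv_notdd h, Finset.erase_eq_of_notMem (by rw [mem_ddset]; exact h)]

lemma cfold_dd (hk : 0 < k) : ∀ (L : List (Fin n)) (σ : Equiv.Perm (Fin n)),
    ddset n k (cfold n k L σ) = ddset n k σ \ L.toFinset := by
  classical
  intro L
  induction L with
  | nil => intro σ; simp [cfold]
  | cons v L ih =>
    intro σ
    have : cfold n k (v :: L) σ = cfold n k L (hopRv n k v σ) := rfl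
    rw [this, ih, ddset_hopRv hk]
    ext u
    simp only [Finset.mem_sdiff, Finset.mem_erase, List.toFinset_cons, Finset.mem_insert]
    tauto

lemma cfold_des (hk : 0 < k) : ∀ (L : List (Fin n)) (σ : Equiv.Perm (Fin n)), L.Nodup →
    desN n k (cfold n k L σ) + (ddset n k σ ∩ L.toFinset).card = desN n k σ := by
  classical
  intro L
  induction L with
  | nil => intro σ _; simp [cfold]
  | cons v L ih =>
    intro σ hnd
    obtain ⟨hv, hnd'⟩ := List.nodup_cons.mp hnd
    have hstep : cfold n k (v :: L) σ = cfold n k L (hopRv n k v σ) := rfl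
    have hinter : ddset n k (hopRv n k v σ) ∩ L.toFinset = ddset n k σ ∩ L.toFinset := by
      rw [ddset_hopRv hk]
      ext u
      simp only [Finset.mem_inter, Finset.mem_erase, List.mem_toFinset]
      constructor
      · rintro ⟨⟨_, h1⟩, h2⟩; exact ⟨h1, h2⟩
      · rintro ⟨h1, h2⟩
        exact ⟨⟨fun hc => hv (hc ▸ h2), h1⟩, h2⟩
    have hih := ih (hopRv n k v σ) hnd'
    rw [hinter] at hih
    by_cases h : ddP n k σ (posOf σ v)
    · have hd := (hopRv_spec hk h).2.2.1
      have hc : ddset n k σ ∩ (v :: L).toFinset = insert v (ddset n k σ ∩ L.toFinset) := by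
        ext u
        simp only [Finset.mem_inter, List.toFinset_cons, Finset.mem_insert, mem_ddset,
          List.mem_toFinset]
        constructor
        · rintro ⟨h1, h2 | h2⟩
          · exact Or.inl h2
          · exact Or.inr ⟨h1, h2⟩
        · rintro (rfl | ⟨h1, h2⟩)
          · exact ⟨h, Or.inl rfl⟩
          · exact ⟨h1, Or.inr h2⟩
      have hvnot : v ∉ ddset n k σ ∩ L.toFinset := by
        simp only [Finset.mem_inter, List.mem_toFinset]
        exact fun hc => hv hc.2
      rw [hstep, hc, Finset.card_insert_of_notMem hvnot]
      omega
    · have hc : ddset n k σ ∩ (v :: L).toFinset = ddset n k σ ∩ L.toFinset := by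
        ext u
        simp only [Finset.mem_inter, List.toFinset_cons, Finset.mem_insert, mem_ddset,
          List.mem_toFinset]
        constructor
        · rintro ⟨h1, h2 | h2⟩
          · exact absurd (h2 ▸ h1) h
          · exact ⟨h1, h2⟩
        · rintro ⟨h1, h2⟩; exact ⟨h1, Or.inr h2⟩
      rw [hopRv_notdd h] at hih
      rw [hstep, hopRv_notdd h, hc]
      exact hih

lemma daset_hopRv (hk : 0 < k) (v : Fin n) (σ : Equiv.Perm (Fin n)) :
    daset n k (hopRv n k v σ) = daset n k σ ∪ (ddset n k σ ∩ {v}) := by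
  classical
  by_cases h : ddP n k σ (posOf σ v)
  · rw [(hopRv_spec hk h).2.1]
    ext u
    simp only [Finset.mem_insert, Finset.mem_union, Finset.mem_inter, Finset.mem_singleton]
    constructor
    · rintro (rfl | hu)
      · exact Or.inr ⟨mem_ddset.mpr h, rfl⟩
      · exact Or.inl hu
    · rintro (hu | ⟨_, rfl⟩)
      · exact Or.inr hu
      · exact Or.inl rfl
  · rw [hopRv_notdd h]
    have : ddset n k σ ∩ {v} = ∅ := by
      ext u
      simp only [Finset.mem_inter, Finset.mem_singleton, Finset.notMem_empty, iff_false,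
        mem_ddset]
      rintro ⟨h1, rfl⟩; exact h h1
    rw [this, Finset.union_empty]

lemma cfold_da (hk : 0 < k) : ∀ (L : List (Fin n)) (σ : Equiv.Perm (Fin n)),
    daset n k (cfold n k L σ) = daset n k σ ∪ (ddset n k σ ∩ L.toFinset) := by
  classical
  intro L
  induction L with
  | nil => intro σ; simp [cfold]
  | cons v L ih =>
    intro σ
    have hstep : cfold n k (v :: L) σ = cfold n k L (hopRv n k v σ) := rfl
    rw [hstep, ih, daset_hopRv hk, ddset_hopRv hk]
    ext u
    simp only [Finset.mem_union, Finset.mem_inter, Finset.mem_singleton, Finset.mem_erase,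
      List.toFinset_cons, Finset.mem_insert, List.mem_toFinset]
    by_cases hu : u = v
    · subst hu; tauto
    · tauto

lemma efold_congr : ∀ (L : List (Fin n)) (S S' : Finset (Fin n)) (w : Equiv.Perm (Fin n)),
    (∀ u ∈ L, (u ∈ S ↔ u ∈ S')) → efold n k L S w = efold n k L S' w := by
  intro L
  induction L with
  | nil => intro S S' w _; rfl
  | cons v L ih =>
    intro S S' w h
    have hstep : ∀ T : Finset (Fin n), efold n k (v :: L) T w
        = if v ∈ T then hopLv n k v (efold n k L T w) else efold n k L T w := fun T => rfl
    rw [hstep, hstep, ih S S' w (fun u hu => h u (List.mem_cons_of_mem v hu))]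
    have := h v (List.mem_cons_self)
    by_cases hv : v ∈ S
    · rw [if_pos hv, if_pos (this.mp hv)]
    · rw [if_neg hv, if_neg (fun hc => hv (this.mpr hc))]

lemma efold_cfold (hk : 0 < k) : ∀ (L : List (Fin n)) (σ : Equiv.Perm (Fin n))
    (S : Finset (Fin n)), L.Nodup → (∀ v ∈ L, (v ∈ S ↔ v ∈ ddset n k σ)) →
    efold n k L S (cfold n k L σ) = σ := by
  classical
  intro L
  induction L with
  | nil => intro σ S _ _; rfl
  | cons v L ih =>
    intro σ S hnd hS
    obtain ⟨hv, hnd'⟩ := List.nodup_cons.mp hnd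
    have hstep : efold n k (v :: L) S (cfold n k (v :: L) σ)
        = if v ∈ S then hopLv n k v (efold n k L S (cfold n k L (hopRv n k v σ)))
          else efold n k L S (cfold n k L (hopRv n k v σ)) := rfl
    have hinner : efold n k L S (cfold n k L (hopRv n k v σ)) = hopRv n k v σ := by
      apply ih _ _ hnd'
      intro u hu
      rw [hS u (List.mem_cons_of_mem v hu), ddset_hopRv hk, Finset.mem_erase]
      have : u ≠ v := fun hc => hv (hc ▸ hu)
      simp [this]
    rw [hstep, hinner]
    have hSv := hS v (List.mem_cons_self)
    by_cases hvS : v ∈ S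
    · rw [if_pos hvS]
      have hdd : ddP n k σ (posOf σ v) := mem_ddset.mp (hSv.mp hvS)
      exact (hopRv_spec hk hdd).2.2.2
    · rw [if_neg hvS]
      exact hopRv_notdd (fun hc => hvS (hSv.mpr (mem_ddset.mpr hc)))

lemma cfold_efold (hk : 0 < k) : ∀ (L : List (Fin n)) (w : Equiv.Perm (Fin n))
    (S : Finset (Fin n)), L.Nodup → (∀ v ∈ S, v ∈ L) → (∀ v ∈ S, v ∈ daset n k w) →
    ddset n k w = ∅ →
    cfold n k L (efold n k L S w) = w ∧ ddset n k (efold n k L S w) = S ∧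
    daset n k (efold n k L S w) = daset n k w \ S ∧
    desN n k (efold n k L S w) = desN n k w + S.card := by
  classical
  intro L
  induction L with
  | nil =>
    intro w S _ hSL _ hdd
    have hS : S = ∅ := Finset.eq_empty_of_forall_notMem (fun v hv => by simpa using hSL v hv)
    subst hS
    simpa [efold, cfold] using hdd
  | cons v L ih =>
    intro w S hnd hSL hSda hdd
    obtain ⟨hv, hnd'⟩ := List.nodup_cons.mp hnd
    have hτeq : efold n k L S w = efold n k L (S.erase v) w := by
      apply efold_congr
      intro u hu
      have : u ≠ v := fun hc => hv (hc ▸ hu)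
      simp [Finset.mem_erase, this]
    have hih := ih w (S.erase v) hnd'
      (fun u hu => by
        have h1 := Finset.mem_of_mem_erase hu
        have h2 := Finset.ne_of_mem_erase hu
        rcases List.mem_cons.mp (hSL u h1) with hc | hc
        · exact absurd hc h2
        · exact hc)
      (fun u hu => hSda u (Finset.mem_of_mem_erase hu)) hdd
    obtain ⟨ih1, ih2, ih3, ih4⟩ := hih
    set τ := efold n k L (S.erase v) w with hτ
    have hstep : efold n k (v :: L) S w
        = if v ∈ S then hopLv n k v (efold n k L S w) else efold n k L S w := rfl
    have hcstep : ∀ ρ, cfold n k (v :: L) ρ = cfold n k L (hopRv n k v ρ) := fun ρ => rfl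
    by_cases hvS : v ∈ S
    · rw [hstep, if_pos hvS, hτeq]
      have hvda : v ∈ daset n k τ := by
        rw [ih3, Finset.mem_sdiff]
        exact ⟨hSda v hvS, fun hc => (Finset.ne_of_mem_erase hc) rfl⟩
      have hda : daP n k τ (posOf τ v) := mem_daset.mp hvda
      obtain ⟨sp1, sp2, sp3, sp4⟩ := hopLv_spec hk hda
      refine ⟨?_, ?_, ?_, ?_⟩
      · rw [hcstep, sp4, ih1]
      · rw [sp1, ih2]
        ext u
        simp only [Finset.mem_insert, Finset.mem_erase]
        by_cases hu : u = v
        · subst hu; simpa using hvS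
        · simp [hu]
      · rw [sp2, ih3]
        ext u
        simp only [Finset.mem_erase, Finset.mem_sdiff]
        by_cases hu : u = v
        · subst hu; simp [hvS]
        · simp [hu]
      · rw [← sp3, ih4, Finset.card_erase_of_mem hvS]
        have : 1 ≤ S.card := Finset.card_pos.mpr ⟨v, hvS⟩
        omega
    · have hSe : S.erase v = S := Finset.erase_eq_of_notMem hvS
      rw [hstep, if_neg hvS, hτeq]
      rw [hSe] at ih2 ih3 ih4
      have hnotdd : ¬ ddP n k τ (posOf τ v) := by
        rw [← mem_ddset, ih2]
        exact hvS
      refine ⟨?_, ih2, ih3, ih4⟩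
      rw [hcstep, hopRv_notdd hnotdd, ih1]

lemma card_posfilter (σ : Equiv.Perm (Fin n)) (P : ℕ → Prop) [DecidablePred P] :
    (univ.filter fun v : Fin n => P (posOf σ v)).card = ((range n).filter P).card := by
  classical
  have h1 : (univ.filter fun v : Fin n => P (posOf σ v)).card
      = (univ.filter fun u : Fin n => P (u : ℕ)).card := by
    apply Finset.card_equiv σ.symm
    intro v
    simp only [Finset.mem_filter, Finset.mem_univ, true_and]
    simp [posOf]
  have h2 : ((range n).filter P)
      = Finset.map Fin.valEmbedding (univ.filter fun u : Fin n => P (u:ℕ)) := by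
    rw [← Nat.Iio_eq_range, ← Fin.map_valEmbedding_univ, Finset.filter_map]
    rfl
  rw [h1, h2, Finset.card_map]

lemma lbig_card (hkn : k < n) (σ : Equiv.Perm (Fin n)) :
    ((range n).filter fun p => lbigP n k σ p).card = k + desN n k σ := by
  classical
  have hsplit : (range n).filter (fun p => lbigP n k σ p)
      = (range k) ∪ ((range n).filter fun p => k ≤ p ∧ entry n σ p < entry n σ (p-k)) := by
    ext p
    simp only [mem_filter, mem_range, Finset.mem_union]
    simp only [S6.lbigP]
    constructor
    · rintro ⟨h1, h2 | h2⟩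
      · exact Or.inl h2
      · rcases Nat.lt_or_ge p k with h3 | h3
        · exact Or.inl h3
        · exact Or.inr ⟨h1, h3, h2⟩
    · rintro (h | ⟨h1, h2, h3⟩)
      · exact ⟨by omega, Or.inl h⟩
      · exact ⟨h1, Or.inr h3⟩
  have hdisj : Disjoint (range k)
      ((range n).filter fun p => k ≤ p ∧ entry n σ p < entry n σ (p-k)) := by
    rw [Finset.disjoint_left]
    intro p hp hp2
    have := mem_range.mp hp
    have := (mem_filter.mp hp2).2.1
    omega
  rw [hsplit, Finset.card_union_of_disjoint hdisj, Finset.card_range]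
  congr 1
  rw [S6.desN]
  symm
  apply Finset.card_bij' (i := fun q _ => q + k) (j := fun p _ => p - k)
  · intro q hq
    obtain ⟨hq1, hq2⟩ := mem_filter.mp hq
    rw [S6.descP] at hq2
    refine mem_filter.mpr ⟨mem_range.mpr hq2.1, by omega, ?_⟩
    rw [(by omega : q + k - k = q)]
    exact hq2.2
  · intro p hp
    obtain ⟨hp1, hp2, hp3⟩ := mem_filter.mp hp
    refine mem_filter.mpr ⟨mem_range.mpr (by have := mem_range.mp hp1; omega), ?_⟩
    rw [S6.descP]
    constructor
    · have := mem_range.mp hp1; omega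
    · rw [(by omega : p - k + k = p)]
      exact hp3
  · intro q _; omega
  · intro p hp
    have := (mem_filter.mp hp).2.1
    omega

lemma type_partition (hkn : k < n) (σ : Equiv.Perm (Fin n)) (hdd : ddset n k σ = ∅) :
    (daset n k σ).card = n - k - 2 * desN n k σ ∧ 2 * desN n k σ + k ≤ n := by
  classical
  have h0 : ((range n).filter fun p => ddP n k σ p).card = 0 := by
    have h1 : (ddset n k σ).card = 0 := by rw [hdd]; rfl
    rw [S6.ddset] at h1
    rw [← card_posfilter σ (ddP n k σ), h1]
  set Dp := (range n).filter fun p => descP n k σ p with hDp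
  set Lp := (range n).filter fun p => lbigP n k σ p with hLp
  have hDL : (range n).filter (fun p => ddP n k σ p) = Dp ∩ Lp := by
    ext p
    simp only [hDp, hLp, Finset.mem_inter, mem_filter]
    simp only [S6.ddP]
    tauto
  have hDaP : (range n).filter (fun p => daP n k σ p) = range n \ (Dp ∪ Lp) := by
    ext p
    simp only [hDp, hLp, Finset.mem_sdiff, Finset.mem_union, mem_filter]
    simp only [S6.daP]
    tauto
  have hsub : Dp ∪ Lp ⊆ range n := by
    apply Finset.union_subset <;> exact Finset.filter_subset _ _
  have hcard1 : (Dp ∪ Lp).card + (Dp ∩ Lp).card = Dp.card + Lp.card :=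
    Finset.card_union_add_card_inter Dp Lp
  have hDpcard : Dp.card = desN n k σ := rfl
  have hLpcard : Lp.card = k + desN n k σ := lbig_card hkn σ
  have hDLcard : (Dp ∩ Lp).card = 0 := by rw [← hDL]; exact h0
  have hUcard : (Dp ∪ Lp).card = 2 * desN n k σ + k := by omega
  have hUle : (Dp ∪ Lp).card ≤ n := by
    have := Finset.card_le_card hsub
    simpa using this
  have hdacard : (daset n k σ).card = n - (2 * desN n k σ + k) := by
    rw [S6.daset, card_posfilter σ (daP n k σ), hDaP, Finset.card_sdiff_of_subset hsub,
      Finset.card_range, hUcard]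
  constructor
  · omega
  · omega

lemma master (hk : 0 < k) (hkn : k < n) (R : Type*) [CommRing R] (x : R) :
    ∑ σ : Equiv.Perm (Fin n), x ^ desN n k σ =
    ∑ p ∈ range ((n-k)/2 + 1),
      ((univ.filter fun σ : Equiv.Perm (Fin n) =>
          desN n k σ = p ∧ ddset n k σ = ∅).card : R) * x ^ p * (1+x) ^ (n - k - 2*p) := by
  classical
  set T : Finset (Equiv.Perm (Fin n) × Finset (Fin n)) :=
    univ.filter fun q => ddset n k q.1 = ∅ ∧ q.2 ⊆ daset n k q.1 with hT
  have hL : List.Nodup (List.finRange n) := List.nodup_finRange n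
  have step1 : ∑ σ : Equiv.Perm (Fin n), x ^ desN n k σ
      = ∑ q ∈ T, x ^ (desN n k q.1 + q.2.card) := by
    apply Finset.sum_nbij' (i := fun σ => (cfold n k (List.finRange n) σ, ddset n k σ))
      (j := fun q => efold n k (List.finRange n) q.2 q.1)
    · intro σ _
      rw [hT, mem_filter]
      refine ⟨mem_univ _, ?_, ?_⟩
      · rw [cfold_dd hk, List.toFinset_finRange]
        simp
      · intro v hv
        rw [cfold_da hk, List.toFinset_finRange]
        simp only [Finset.inter_univ, Finset.mem_union]
        exact Or.inr hv
    · intro q _; exact mem_univ _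
    · intro σ _
      exact efold_cfold hk _ σ (ddset n k σ) hL (fun v _ => Iff.rfl)
    · intro q hq
      rw [hT, mem_filter] at hq
      obtain ⟨_, h1, h2⟩ := hq
      obtain ⟨e1, e2, _, _⟩ := cfold_efold hk (List.finRange n) q.1 q.2 hL
        (fun v _ => List.mem_finRange v) (fun v hv => h2 hv) h1
      exact Prod.ext e1 e2
    · intro σ _
      have hc := cfold_des hk (List.finRange n) σ hL
      rw [List.toFinset_finRange, Finset.inter_univ] at hc
      rw [hc]
  set Nfil : Finset (Equiv.Perm (Fin n)) := univ.filter fun w => ddset n k w = ∅ with hNfil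
  have hTbi : T = Nfil.biUnion
      (fun w => (daset n k w).powerset.image fun S => (w, S)) := by
    ext q
    simp only [hT, hNfil, mem_filter, mem_univ, true_and, Finset.mem_biUnion,
      Finset.mem_image, Finset.mem_powerset]
    constructor
    · rintro ⟨h1, h2⟩
      exact ⟨q.1, h1, q.2, h2, rfl⟩
    · rintro ⟨w, hw, S, hS, rfl⟩
      exact ⟨hw, hS⟩
  have hdisj : (Nfil : Set (Equiv.Perm (Fin n))).PairwiseDisjoint
      (fun w => (daset n k w).powerset.image fun S => (w, S)) := by
    intro w1 _ w2 _ hne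
    simp only [Function.onFun]
    rw [Finset.disjoint_left]
    rintro q hq1 hq2
    obtain ⟨S1, _, rfl⟩ := Finset.mem_image.mp hq1
    obtain ⟨S2, _, heq⟩ := Finset.mem_image.mp hq2
    exact hne (congrArg Prod.fst heq).symm
  have hpow : ∀ F : Finset (Fin n), ∑ S ∈ F.powerset, x ^ S.card = (1+x) ^ F.card := by
    intro F
    have h1 := Finset.prod_add (fun _ : Fin n => x) (fun _ : Fin n => 1) F
    rw [Finset.prod_const] at h1
    rw [show (1+x) = (x+1) by ring, h1]
    apply Finset.sum_congr rfl
    intro S _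
    rw [Finset.prod_const, Finset.prod_const, one_pow, mul_one]
  have step2 : ∑ q ∈ T, x ^ (desN n k q.1 + q.2.card)
      = ∑ w ∈ Nfil, x ^ desN n k w * (1+x) ^ (daset n k w).card := by
    rw [hTbi, Finset.sum_biUnion hdisj]
    apply Finset.sum_congr rfl
    intro w _
    rw [Finset.sum_image (by intro S1 _ S2 _ h; exact (Prod.ext_iff.mp h).2)]
    rw [← hpow (daset n k w), Finset.mul_sum]
    apply Finset.sum_congr rfl
    intro S _
    rw [pow_add]
  have step3 : ∑ w ∈ Nfil, x ^ desN n k w * (1+x) ^ (daset n k w).card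
      = ∑ w ∈ Nfil, x ^ desN n k w * (1+x) ^ (n - k - 2 * desN n k w) := by
    apply Finset.sum_congr rfl
    intro w hw
    rw [(type_partition hkn w (mem_filter.mp hw).2).1]
  have hmaps : ∀ w ∈ Nfil, desN n k w ∈ range ((n-k)/2 + 1) := by
    intro w hw
    have := (type_partition hkn w (mem_filter.mp hw).2).2
    rw [mem_range]
    omega
  rw [step1, step2, step3, ← Finset.sum_fiberwise_of_maps_to hmaps]
  apply Finset.sum_congr rfl
  intro p _
  have hfe : Nfil.filter (fun w => desN n k w = p)
      = univ.filter fun σ : Equiv.Perm (Fin n) => desN n k σ = p ∧ ddset n k σ = ∅ := by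
    rw [hNfil, Finset.filter_filter]
    apply Finset.filter_congr
    intro w _
    tauto
  rw [← hfe]
  have : ∀ w ∈ Nfil.filter (fun w => desN n k w = p),
      x ^ desN n k w * (1+x) ^ (n - k - 2 * desN n k w) = x ^ p * (1+x) ^ (n - k - 2*p) := by
    intro w hw
    rw [(mem_filter.mp hw).2]
  rw [Finset.sum_congr rfl this, Finset.sum_const, nsmul_eq_mul, mul_assoc]

lemma bval_eq (σ : Equiv.Perm (Fin n)) (i : ℕ) (h1 : 1 ≤ i) (h2 : i ≤ n) :
    bval n σ (fun _ => false) (i:ℤ) = (entry n σ (i-1) : ℤ) := by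
  have hna : ((i:ℤ)).natAbs = i := Int.natAbs_natCast i
  have hsign : Int.sign (i:ℤ) = 1 := Int.sign_eq_one_of_pos (by exact_mod_cast h1)
  simp only [bval, entry, hna, hsign]
  rw [dif_pos ⟨h1, h2⟩, dif_pos (by omega : i-1 < n)]
  simp only [Bool.false_eq_true, if_false, one_mul]
  push_cast
  ring

lemma desA_eq (_hkn : k < n) (σ : Equiv.Perm (Fin n)) :
    desA n k (bval n σ fun _ => false) = desN n k σ := by
  classical
  rw [desA, S6.desN]
  apply Finset.card_nbij' (i := fun i => i - 1) (j := fun p => p + 1)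
  all_goals simp only [Set.MapsTo, Set.LeftInvOn, Set.RightInvOn, Finset.mem_coe]
  · intro a ha
    obtain ⟨hmem, hcmp⟩ := mem_filter.mp ha
    rw [mem_Icc] at hmem
    refine mem_filter.mpr ⟨mem_range.mpr (by omega), ?_⟩
    rw [S6.descP]
    refine ⟨by omega, ?_⟩
    rw [bval_eq σ a (by omega) (by omega)] at hcmp
    have hik : (a:ℤ) + k = ((a + k : ℕ) : ℤ) := by push_cast; ring
    rw [hik, bval_eq σ (a+k) (by omega) (by omega)] at hcmp
    have : a + k - 1 = a - 1 + k := by omega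
    rw [this] at hcmp
    exact_mod_cast hcmp
  · intro p hp
    obtain ⟨hmem, hd⟩ := mem_filter.mp hp
    rw [mem_range] at hmem
    rw [S6.descP] at hd
    obtain ⟨hd1, hd2⟩ := hd
    refine mem_filter.mpr ⟨mem_Icc.mpr ⟨by omega, by omega⟩, ?_⟩
    rw [bval_eq σ (p+1) (by omega) (by omega)]
    have hik : ((p+1 : ℕ):ℤ) + k = ((p + 1 + k : ℕ) : ℤ) := by push_cast; ring
    rw [hik, bval_eq σ (p+1+k) (by omega) (by omega)]
    have e1 : p + 1 - 1 = p := by omega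
    have e2 : p + 1 + k - 1 = p + k := by omega
    rw [e1, e2]
    exact_mod_cast hd2
  · intro a ha
    obtain ⟨hmem, _⟩ := mem_filter.mp ha
    rw [mem_Icc] at hmem
    omega
  · intro p _
    omega

lemma ddesA_eq (hkn : k < n) (σ : Equiv.Perm (Fin n)) :
    ddesA n k (bval n σ fun _ => false) = (ddset n k σ).card := by
  classical
  rw [ddesA, S6.ddset, card_posfilter σ (ddP n k σ)]
  apply Finset.card_nbij' (i := fun i => i - 1) (j := fun p => p + 1)
  all_goals simp only [Set.MapsTo, Set.LeftInvOn, Set.RightInvOn, Finset.mem_coe]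
  · intro a ha
    obtain ⟨hmem, hcmp⟩ := mem_filter.mp ha
    rw [mem_Icc] at hmem
    obtain ⟨⟨hc1, hc2⟩, hc3⟩ := hcmp
    refine mem_filter.mpr ⟨mem_range.mpr (by omega), ?_⟩
    rw [S6.ddP]
    constructor
    · rw [S6.descP]
      refine ⟨by omega, ?_⟩
      rw [bval_eq σ a (by omega) (by omega)] at hc2
      have hik : (a:ℤ) + k = ((a + k : ℕ) : ℤ) := by push_cast; ring
      rw [hik, bval_eq σ (a+k) (by omega) (by omega)] at hc2
      have : a + k - 1 = a - 1 + k := by omega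
      rw [this] at hc2
      exact_mod_cast hc2
    · rw [S6.lbigP]
      rcases hc3 with hc3 | hc3
      · exact Or.inl (by omega)
      · rcases Nat.lt_or_ge (a-1) k with hak | hak
        · exact Or.inl hak
        · right
          have hik : (a:ℤ) - k = ((a - k : ℕ) : ℤ) := by omega
          rw [bval_eq σ a (by omega) (by omega), hik,
            bval_eq σ (a-k) (by omega) (by omega)] at hc3
          have he : a - k - 1 = a - 1 - k := by omega
          rw [he] at hc3
          exact_mod_cast hc3
  · intro p hp
    obtain ⟨hmem, hd⟩ := mem_filter.mp hp
    rw [mem_range] at hmem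
    rw [S6.ddP] at hd
    obtain ⟨hd1, hd2⟩ := hd
    rw [S6.descP] at hd1
    rw [S6.lbigP] at hd2
    refine mem_filter.mpr ⟨mem_Icc.mpr ⟨by omega, by omega⟩, ?_⟩
    constructor
    · refine ⟨by omega, ?_⟩
      rw [bval_eq σ (p+1) (by omega) (by omega)]
      have hik : ((p+1 : ℕ):ℤ) + k = ((p + 1 + k : ℕ) : ℤ) := by push_cast; ring
      rw [hik, bval_eq σ (p+1+k) (by omega) (by omega)]
      have e1 : p + 1 - 1 = p := by omega
      have e2 : p + 1 + k - 1 = p + k := by omega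
      rw [e1, e2]
      exact_mod_cast hd1.2
    · rcases Nat.lt_or_ge p k with hpk | hpk
      · exact Or.inl (by omega)
      · have hd2' : entry n σ p < entry n σ (p-k) := by
          rcases hd2 with h | h
          · omega
          · exact h
        right
        rw [bval_eq σ (p+1) (by omega) (by omega)]
        have hik : ((p+1 : ℕ):ℤ) - k = ((p + 1 - k : ℕ) : ℤ) := by omega
        rw [hik, bval_eq σ (p+1-k) (by omega) (by omega)]
        have e1 : p + 1 - 1 = p := by omega
        have e2 : p + 1 - k - 1 = p - k := by omega
        rw [e1, e2]
        exact_mod_cast hd2'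
  · intro a ha
    obtain ⟨hmem, _⟩ := mem_filter.mp ha
    rw [mem_Icc] at hmem
    omega
  · intro p _
    omega

end S6

/-- Theorem 13: gamma-positivity of the width-`k` type-A Eulerian
polynomial, with `γ_{n,k,p}^A` the number of `σ ∈ S_n` with `des_k^A(σ) = p` and no
width-`k` double descents. -/
theorem stmt6 (n k : ℕ) (hn : 1 ≤ n) (hk : 1 ≤ k) (hkn : k ≤ n - 1)
    (R : Type*) [CommRing R] (x : R) :
    ∑ σ : Equiv.Perm (Fin n), x ^ desA n k (bval n σ fun _ => false) =
      ∑ p ∈ Finset.range ((n - k) / 2 + 1),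
        (Fintype.card {σ : Equiv.Perm (Fin n) //
            desA n k (bval n σ fun _ => false) = p ∧
            ddesA n k (bval n σ fun _ => false) = 0} : R) *
          x ^ p * (1 + x) ^ (n - k - 2 * p) := by
  classical
  have hkn' : k < n := by omega
  have hk0 : 0 < k := hk
  have hdes : ∀ σ : Equiv.Perm (Fin n),
      desA n k (bval n σ fun _ => false) = S6.desN n k σ :=
    fun σ => S6.desA_eq hkn' σ
  have hdd : ∀ σ : Equiv.Perm (Fin n),
      ddesA n k (bval n σ fun _ => false) = (S6.ddset n k σ).card :=
    fun σ => S6.ddesA_eq hkn' σ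
  calc ∑ σ : Equiv.Perm (Fin n), x ^ desA n k (bval n σ fun _ => false)
      = ∑ σ : Equiv.Perm (Fin n), x ^ S6.desN n k σ :=
        Finset.sum_congr rfl fun σ _ => by rw [hdes σ]
    _ = ∑ p ∈ Finset.range ((n - k) / 2 + 1),
        ((univ.filter fun σ : Equiv.Perm (Fin n) =>
          S6.desN n k σ = p ∧ S6.ddset n k σ = ∅).card : R) * x ^ p
            * (1 + x) ^ (n - k - 2 * p) :=
        S6.master hk0 hkn' R x
    _ = _ := by
        apply Finset.sum_congr rfl
        intro p _
        have hcard : (univ.filter fun σ : Equiv.Perm (Fin n) =>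
            S6.desN n k σ = p ∧ S6.ddset n k σ = ∅).card
            = Fintype.card {σ : Equiv.Perm (Fin n) //
                desA n k (bval n σ fun _ => false) = p ∧
                ddesA n k (bval n σ fun _ => false) = 0} := by
          rw [Fintype.card_subtype]
          apply congrArg Finset.card
          apply Finset.filter_congr
          intro σ _
          rw [hdes σ, hdd σ, Finset.card_eq_zero]
        rw [hcard]
end

section
/- For k = 1, the type-B Eulerian polynomial satisfies B_n(x) = Σ_{p=0}^{⌊n/2⌋} 4^p · lp(n,p) · x^p (1+x)^{n-2p}, where lp(n,p) is the number of permutations in S_n with exactly p left peaks. -/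
open Finset

/-- Number of width-`k` left peaks: indices `k ≤ i ≤ n-k` with `π(i-k) < π(i) > π(i+k)`,
convention `π(0) = 0`. -/
def lpeakk (n k : ℕ) (π : ℤ → ℤ) : ℕ :=
  ((Finset.Icc k (n - k)).filter fun i : ℕ =>
    π ((i : ℤ) - k) < π i ∧ π i > π ((i : ℤ) + k)).card

namespace Stmt11Aux

/-- extend a sign vector on `Fin n` to `ℕ` by `false`. -/
def ext (n : ℕ) (s : Fin n → Bool) : ℕ → Bool := fun i => if h : i < n then s ⟨i, h⟩ else false

/-- signed value at position `i` (positions `1..n` carry values `a i`, position 0 is 0). -/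
def w (a : ℕ → ℤ) (s : ℕ → Bool) (i : ℕ) : ℤ :=
  if i = 0 then 0 else if s (i - 1) then -a i else a i

/-- descent count over edges `0→1, …, (n-1)→n`. -/
def D (n : ℕ) (a : ℕ → ℤ) (s : ℕ → Bool) : ℕ :=
  ((range n).filter fun i => w a s (i + 1) < w a s i).card

/-- left-peak count of the word `0, a 1, …, a n`. -/
def P (n : ℕ) (a : ℕ → ℤ) : ℕ :=
  ((Icc 1 (n - 1)).filter fun i => a (i - 1) < a i ∧ a (i + 1) < a i).card

variable {R : Type*} [CommRing R]

/-- generating function of descents over sign vectors whose last sign is `b`. -/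
def G (x : R) (a : ℕ → ℤ) (n : ℕ) (b : Bool) : R :=
  ∑ s : Fin n → Bool, if ext n s (n - 1) = b then x ^ D n a (ext n s) else 0

lemma w_congr (a : ℕ → ℤ) {s₁ s₂ : ℕ → Bool} {n : ℕ} (h : ∀ j, j < n → s₁ j = s₂ j)
    {i : ℕ} (hi : i ≤ n) : w a s₁ i = w a s₂ i := by
  unfold w
  rcases Nat.eq_zero_or_pos i with h0 | h0
  · simp [h0]
  · rw [h (i - 1) (by omega)]

lemma D_congr (a : ℕ → ℤ) {s₁ s₂ : ℕ → Bool} {n : ℕ} (h : ∀ j, j < n → s₁ j = s₂ j) :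
    D n a s₁ = D n a s₂ := by
  unfold D
  congr 1
  apply Finset.filter_congr
  intro i hi
  simp only [mem_range] at hi
  rw [w_congr a h (by omega), w_congr a h (by omega)]

lemma ext_snoc (n : ℕ) (s : Fin n → Bool) (b : Bool) (i : ℕ) :
    ext (n + 1) (Fin.snoc s b) i = if i = n then b else ext n s i := by
  unfold ext
  rcases lt_trichotomy i n with h | h | h
  · rw [dif_pos (by omega), if_neg (by omega), dif_pos h]
    have : (⟨i, by omega⟩ : Fin (n+1)) = Fin.castSucc ⟨i, h⟩ := rfl
    rw [this, Fin.snoc_castSucc]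
  · subst h
    rw [dif_pos (by omega), if_pos rfl]
    have : (⟨i, by omega⟩ : Fin (i+1)) = Fin.last i := rfl
    rw [this, Fin.snoc_last]
  · rw [dif_neg (by omega), if_neg (by omega), dif_neg (by omega)]

/-- the snoc equivalence. -/
def snocEquiv (n : ℕ) : (Fin n → Bool) × Bool ≃ (Fin (n + 1) → Bool) where
  toFun p := Fin.snoc p.1 p.2
  invFun f := (fun i => f i.castSucc, f (Fin.last n))
  left_inv p := by
    refine Prod.ext ?_ ?_
    · funext i; simp
    · simp
  right_inv f := by
    funext i
    induction i using Fin.lastCases <;> simp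

lemma D_succ (n : ℕ) (a : ℕ → ℤ) (s : ℕ → Bool) :
    D (n + 1) a s = D n a s + (if w a s (n + 1) < w a s n then 1 else 0) := by
  unfold D
  rw [Finset.range_add_one, Finset.filter_insert]
  split
  · rw [Finset.card_insert_of_notMem (by simp)]
  · omega

lemma P_succ (n : ℕ) (hn : 1 ≤ n) (a : ℕ → ℤ) :
    P (n + 1) a = P n a + (if a (n - 1) < a n ∧ a (n + 1) < a n then 1 else 0) := by
  unfold P
  have h1 : (n + 1) - 1 = n := rfl
  rw [h1]
  have h2 : Icc 1 n = insert n (Icc 1 (n - 1)) := by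
    ext j; simp only [mem_Icc, mem_insert]; omega
  rw [h2, Finset.filter_insert]
  split
  · rw [Finset.card_insert_of_notMem (by simp [mem_Icc]; omega)]
  · omega

/-- edge-weight exponent for transition from sign `c` at position `n` to sign `b` at `n+1`. -/
def ind (a : ℕ → ℤ) (n : ℕ) (c b : Bool) : ℕ :=
  if (if b then -a (n + 1) else a (n + 1)) < (if c then -a n else a n) then 1 else 0

lemma G_succ (x : R) (a : ℕ → ℤ) (n : ℕ) (hn : 1 ≤ n) (b : Bool) :
    G x a (n + 1) b =
      x ^ ind a n false b * G x a n false + x ^ ind a n true b * G x a n true := by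
  unfold G
  rw [← Equiv.sum_comp (snocEquiv n), Fintype.sum_prod_type]
  have key : ∀ (s : Fin n → Bool) (b' : Bool),
      (if ext (n+1) (snocEquiv n (s, b')) ((n+1) - 1) = b then
        x ^ D (n+1) a (ext (n+1) (snocEquiv n (s, b'))) else 0) =
      (if b' = b then x ^ ind a n (ext n s (n - 1)) b' * x ^ D n a (ext n s) else 0) := by
    intro s b'
    have hs : ∀ j, j < n → ext (n+1) (Fin.snoc s b') j = ext n s j := by
      intro j hj
      rw [ext_snoc, if_neg (by omega)]
    have hlast : ext (n+1) (Fin.snoc s b') n = b' := by rw [ext_snoc, if_pos rfl]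
    have hshow : snocEquiv n (s, b') = Fin.snoc s b' := rfl
    rw [hshow]
    have h1 : (n + 1) - 1 = n := rfl
    rw [h1, hlast]
    congr 1
    rw [D_succ, D_congr a hs, pow_add]
    rw [mul_comm]
    congr 2
    unfold ind w
    rw [if_neg (by omega : ¬ n + 1 = 0), if_neg (by omega : ¬ n = 0)]
    have e1 : (n + 1) - 1 = n := rfl
    rw [e1, hlast]
    have e2 : ext (n+1) (Fin.snoc s b') (n - 1) = ext n s (n - 1) := hs (n-1) (by omega)
    rw [e2]
  calc ∑ s : Fin n → Bool, ∑ b' : Bool,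
        (if ext (n+1) (snocEquiv n (s, b')) ((n+1) - 1) = b then
          x ^ D (n+1) a (ext (n+1) (snocEquiv n (s, b'))) else 0)
      = ∑ s : Fin n → Bool, x ^ ind a n (ext n s (n - 1)) b * x ^ D n a (ext n s) := by
        apply Fintype.sum_congr
        intro s
        rw [Fintype.sum_bool]
        rw [key s true, key s false]
        cases b <;> simp
    _ = _ := by
        rw [Finset.mul_sum, Finset.mul_sum, ← Finset.sum_add_distrib]
        apply Fintype.sum_congr
        intro s
        cases hc : ext n s (n - 1)
        · simp [hc]
        · simp [hc]


lemma G_one (x : R) (a : ℕ → ℤ) (h0 : a 0 = 0) (h1 : 0 < a 1) :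
    G x a 1 false = 1 ∧ G x a 1 true = x := by
  have hD : ∀ s : ℕ → Bool, D 1 a s = if w a s 1 < w a s 0 then 1 else 0 := by
    intro s
    rw [show (1:ℕ) = 0 + 1 from rfl, D_succ]
    simp [D]
  have hext : ∀ (c : Bool) (j : ℕ), ext 1 (fun _ => c) j = if j < 1 then c else false := by
    intro c j
    unfold ext
    split <;> simp_all
  have hsum : ∀ b : Bool, G x a 1 b =
      (if (false : Bool) = b then x ^ D 1 a (ext 1 (fun _ => false)) else 0) +
      (if (true : Bool) = b then x ^ D 1 a (ext 1 (fun _ => true)) else 0) := by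
    intro b
    unfold G
    rw [← Equiv.sum_comp (Equiv.funUnique (Fin 1) Bool).symm, Fintype.sum_bool]
    have e1 : ∀ c : Bool, (Equiv.funUnique (Fin 1) Bool).symm c = fun _ => c := fun _ => rfl
    rw [e1, e1]
    have e2 : ∀ c : Bool, ext 1 (fun _ => c) (1 - 1) = c := by intro c; rw [hext]; simp
    rw [e2, e2, add_comm]
  have hw0 : ∀ s : ℕ → Bool, w a s 0 = 0 := by intro s; simp [w]
  have hwf : w a (ext 1 (fun _ => false)) 1 = a 1 := by
    unfold w; rw [if_neg one_ne_zero, hext]; simp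
  have hwt : w a (ext 1 (fun _ => true)) 1 = -a 1 := by
    unfold w; rw [if_neg one_ne_zero, hext]; simp
  have hDf : D 1 a (ext 1 (fun _ => false)) = 0 := by
    rw [hD, hw0, hwf, if_neg (by omega)]
  have hDt : D 1 a (ext 1 (fun _ => true)) = 1 := by
    rw [hD, hw0, hwt, if_pos (by omega)]
  constructor
  · rw [hsum false, hDf]; simp
  · rw [hsum true, hDt]; simp

lemma core (x : R) (a : ℕ → ℤ) (h0 : a 0 = 0) :
    ∀ n, 1 ≤ n → (∀ i, 1 ≤ i → i ≤ n → 0 < a i) → (∀ i, 1 ≤ i → i < n → a i ≠ a (i + 1)) →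
    ((a (n - 1) < a n →
       G x a n false = 4 ^ P n a * x ^ P n a * (1 + x) ^ (n - 1 - 2 * P n a) ∧
       G x a n true = x * G x a n false ∧ 2 * P n a ≤ n - 1) ∧
     (¬ a (n - 1) < a n →
       G x a n false = G x a n true ∧
       G x a n false = 2 * 4 ^ (P n a - 1) * x ^ P n a * (1 + x) ^ (n - 2 * P n a) ∧
       1 ≤ P n a ∧ 2 * P n a ≤ n)) := by
  intro n hn
  induction n, hn using Nat.le_induction with
  | base =>
    intro hpos _
    have ha1 : 0 < a 1 := hpos 1 le_rfl le_rfl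
    have hP : P 1 a = 0 := by
      unfold P
      rw [show (1:ℕ) - 1 = 0 from rfl, Finset.Icc_eq_empty (by omega)]
      simp
    obtain ⟨g1, g2⟩ := G_one x a h0 ha1
    constructor
    · intro _
      refine ⟨?_, ?_, by omega⟩
      · rw [g1, hP]; norm_num
      · rw [g1, g2, mul_one]
    · intro hc
      exact absurd (h0 ▸ ha1) hc
  | succ n hn ih =>
    intro hpos hadj
    have hpos' : ∀ i, 1 ≤ i → i ≤ n → 0 < a i := fun i h1 h2 => hpos i h1 (by omega)
    have hadj' : ∀ i, 1 ≤ i → i < n → a i ≠ a (i + 1) := fun i h1 h2 => hadj i h1 (by omega)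
    obtain ⟨ihA, ihD⟩ := ih hpos' hadj'
    have hpn : 0 < a n := hpos n hn (by omega)
    have hpn1 : 0 < a (n + 1) := hpos (n + 1) (by omega) le_rfl
    have hne : a n ≠ a (n + 1) := hadj n hn (by omega)
    have hd1 : (n + 1) - 1 = n := rfl
    have iff0 : ind a n false false = (if a (n+1) < a n then 1 else 0) := by simp [ind]
    have ift : ind a n false true = 1 := by
      have h : -a (n+1) < a n := by omega
      simp [ind, h]
    have itf : ind a n true false = 0 := by
      have h : ¬ a (n+1) < -a n := by omega
      simp [ind, h]
    have itt : ind a n true true = (if a n < a (n+1) then 1 else 0) := by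
      simp [ind, neg_lt_neg_iff]
    rw [hd1]
    rcases lt_or_gt_of_ne hne with hAsc | hDes
    · -- last edge ascending
      have hGf : G x a (n+1) false = G x a n false + G x a n true := by
        rw [G_succ x a n hn false, iff0, if_neg (by omega), itf]; ring
      have hGt : G x a (n+1) true = x * G x a n false + x * G x a n true := by
        rw [G_succ x a n hn true, ift, itt, if_pos hAsc]; ring
      have hPs : P (n+1) a = P n a := by
        rw [P_succ n hn a, if_neg (by omega), add_zero]
      constructor
      · intro _
        by_cases h1 : a (n - 1) < a n
        · obtain ⟨e1, e2, e3⟩ := ihA h1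
          refine ⟨?_, ?_, by omega⟩
          · rw [hGf, e2, e1, hPs,
              show n - 2 * P n a = (n - 1 - 2 * P n a) + 1 from by omega, pow_succ]
            ring
          · rw [hGt, hGf]; ring
        · obtain ⟨e1, e2, e3, e4⟩ := ihD h1
          have h4 : (4:R) ^ P n a = 4 ^ (P n a - 1) * 4 := by
            rw [← pow_succ]; congr 1; omega
          refine ⟨?_, ?_, by omega⟩
          · rw [hGf, ← e1, e2, hPs, h4]
            ring
          · rw [hGt, hGf]; ring
      · intro hc; exact absurd hAsc hc
    · -- last edge descending
      have hDes' : a (n + 1) < a n := hDes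
      have hGf : G x a (n+1) false = x * G x a n false + G x a n true := by
        rw [G_succ x a n hn false, iff0, if_pos hDes', itf]; ring
      have hGt : G x a (n+1) true = x * G x a n false + G x a n true := by
        rw [G_succ x a n hn true, ift, itt, if_neg (by omega)]; ring
      constructor
      · intro hc; exact absurd hc (by omega)
      · intro _
        by_cases h1 : a (n - 1) < a n
        · obtain ⟨e1, e2, e3⟩ := ihA h1
          have hPs : P (n+1) a = P n a + 1 := by
            rw [P_succ n hn a, if_pos ⟨h1, hDes'⟩]
          refine ⟨by rw [hGf, hGt], ?_, by omega, by omega⟩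
          rw [hGf, e2, e1, hPs, show P n a + 1 - 1 = P n a from rfl,
            show n + 1 - 2 * (P n a + 1) = n - 1 - 2 * P n a from by omega, pow_succ]
          ring
        · obtain ⟨e1, e2, e3, e4⟩ := ihD h1
          have hPs : P (n+1) a = P n a := by
            rw [P_succ n hn a, if_neg (by omega), add_zero]
          refine ⟨by rw [hGf, hGt], ?_, by omega, by omega⟩
          rw [hGf, ← e1, e2, hPs,
            show n + 1 - 2 * P n a = (n - 2 * P n a) + 1 from by omega, pow_succ]
          ring

lemma total (x : R) (a : ℕ → ℤ) (h0 : a 0 = 0) (n : ℕ) (hn : 1 ≤ n)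
    (hpos : ∀ i, 1 ≤ i → i ≤ n → 0 < a i)
    (hadj : ∀ i, 1 ≤ i → i < n → a i ≠ a (i + 1)) :
    (∑ s : Fin n → Bool, x ^ D n a (ext n s)) =
      4 ^ P n a * x ^ P n a * (1 + x) ^ (n - 2 * P n a) ∧ 2 * P n a ≤ n := by
  obtain ⟨hA, hD⟩ := core x a h0 n hn hpos hadj
  have hsum : (∑ s : Fin n → Bool, x ^ D n a (ext n s)) = G x a n false + G x a n true := by
    unfold G
    rw [← Finset.sum_add_distrib]
    apply Fintype.sum_congr
    intro s
    cases h : ext n s (n - 1) <;> simp [h]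
  by_cases h : a (n - 1) < a n
  · obtain ⟨e1, e2, e3⟩ := hA h
    refine ⟨?_, by omega⟩
    rw [hsum, e2, e1, show n - 2 * P n a = (n - 1 - 2 * P n a) + 1 from by omega, pow_succ]
    ring
  · obtain ⟨e1, e2, e3, e4⟩ := hD h
    refine ⟨?_, by omega⟩
    have h4 : (4:R) ^ P n a = 4 ^ (P n a - 1) * 4 := by
      rw [← pow_succ]; congr 1; omega
    rw [hsum, ← e1, e2, h4]
    ring

/-- the word of values of the permutation `σ`. -/
def aperm (n : ℕ) (σ : Equiv.Perm (Fin n)) : ℕ → ℤ := fun i =>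
  if h : 1 ≤ i ∧ i ≤ n then (((σ ⟨i - 1, by omega⟩ : Fin n) : ℕ) : ℤ) + 1 else 0

lemma aperm_zero (n : ℕ) (σ : Equiv.Perm (Fin n)) : aperm n σ 0 = 0 := by
  unfold aperm
  rw [dif_neg (by omega)]

lemma aperm_pos (n : ℕ) (σ : Equiv.Perm (Fin n)) (i : ℕ) (h1 : 1 ≤ i) (h2 : i ≤ n) :
    0 < aperm n σ i := by
  unfold aperm
  rw [dif_pos ⟨h1, h2⟩]
  positivity

lemma aperm_adj (n : ℕ) (σ : Equiv.Perm (Fin n)) (i : ℕ) (h1 : 1 ≤ i) (h2 : i < n) :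
    aperm n σ i ≠ aperm n σ (i + 1) := by
  unfold aperm
  rw [dif_pos ⟨h1, by omega⟩, dif_pos ⟨by omega, by omega⟩]
  intro h
  have h3 : ((σ ⟨i - 1, by omega⟩ : Fin n) : ℕ) = ((σ ⟨i + 1 - 1, by omega⟩ : Fin n) : ℕ) := by
    exact_mod_cast add_right_cancel h
  have h4 : σ ⟨i - 1, by omega⟩ = σ ⟨i + 1 - 1, by omega⟩ := Fin.val_injective h3
  have h5 := σ.injective h4
  have h6 : i - 1 = i + 1 - 1 := congrArg Fin.val h5
  omega

lemma bval_eq (n : ℕ) (σ : Equiv.Perm (Fin n)) (ε : Fin n → Bool) (i : ℕ) (hi : i ≤ n) :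
    bval n σ ε (i : ℤ) = w (aperm n σ) (ext n ε) i := by
  rcases Nat.eq_zero_or_pos i with h0 | h0
  · subst h0; simp [bval, w]
  · unfold bval w aperm
    simp only [Int.natAbs_natCast]
    rw [if_neg (show ¬ i = 0 by omega), dif_pos ⟨h0, hi⟩, dif_pos ⟨h0, hi⟩]
    have hsign : Int.sign (i : ℤ) = 1 := Int.sign_eq_one_of_pos (by exact_mod_cast h0)
    rw [hsign, one_mul]
    have hext : ext n ε (i - 1) = ε ⟨i - 1, by omega⟩ := by
      unfold ext
      rw [dif_pos (by omega)]
    rw [hext]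

lemma desB_eq (n : ℕ) (hn : 1 ≤ n) (σ : Equiv.Perm (Fin n)) (ε : Fin n → Bool) :
    desB n 1 (bval n σ ε) = D n (aperm n σ) (ext n ε) := by
  unfold desB D
  rw [show n - 1 + 1 = n from by omega]
  congr 1
  apply Finset.filter_congr
  intro i hi
  simp only [mem_range] at hi
  have h1 : ((i : ℤ) + ((1:ℕ) : ℤ)) = (((i + 1 : ℕ)) : ℤ) := by push_cast; ring
  rw [gt_iff_lt, h1, bval_eq n σ ε i (by omega), bval_eq n σ ε (i + 1) (by omega)]

lemma w_false (a : ℕ → ℤ) (h0 : a 0 = 0) (n j : ℕ) : w a (ext n (fun _ => false)) j = a j := by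
  unfold w ext
  rcases Nat.eq_zero_or_pos j with h | h
  · subst h; simp [h0]
  · rw [if_neg (by omega)]
    split <;> simp_all

lemma lpeak_eq (n : ℕ) (hn : 1 ≤ n) (σ : Equiv.Perm (Fin n)) :
    lpeakk n 1 (bval n σ (fun _ => false)) = P n (aperm n σ) := by
  unfold lpeakk P
  congr 1
  apply Finset.filter_congr
  intro i hi
  simp only [mem_Icc] at hi
  have e0 : ((i : ℤ) - ((1:ℕ) : ℤ)) = (((i - 1 : ℕ)) : ℤ) := by
    have := hi.1
    push_cast [this]
    ring
  have e1 : ((i : ℤ) + ((1:ℕ) : ℤ)) = (((i + 1 : ℕ)) : ℤ) := by push_cast; ring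
  rw [gt_iff_lt, e0, e1,
    bval_eq n σ (fun _ => false) (i - 1) (by omega),
    bval_eq n σ (fun _ => false) i (by omega),
    bval_eq n σ (fun _ => false) (i + 1) (by omega),
    w_false _ (aperm_zero n σ), w_false _ (aperm_zero n σ), w_false _ (aperm_zero n σ)]

end Stmt11Aux

/-- Theorem 14 / Petersen: `B_n(x) = Σ_p 4^p lp(n,p) x^p (1+x)^{n-2p}`,
where `lp(n,p)` counts permutations in `S_n` with exactly `p` left peaks. -/
theorem stmt11 (n : ℕ) (hn : 1 ≤ n) (R : Type*) [CommRing R] (x : R) :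
    ∑ σ : Equiv.Perm (Fin n), ∑ ε : Fin n → Bool, x ^ desB n 1 (bval n σ ε) =
      ∑ p ∈ Finset.range (n / 2 + 1),
        (4 : R) ^ p *
          (Fintype.card {σ : Equiv.Perm (Fin n) //
            lpeakk n 1 (bval n σ fun _ => false) = p} : R) *
          x ^ p * (1 + x) ^ (n - 2 * p) := by
  classical
  set lp : Equiv.Perm (Fin n) → ℕ := fun σ => lpeakk n 1 (bval n σ fun _ => false) with hlp
  have key : ∀ σ : Equiv.Perm (Fin n),
      (∑ ε : Fin n → Bool, x ^ desB n 1 (bval n σ ε)) =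
        4 ^ lp σ * x ^ lp σ * (1 + x) ^ (n - 2 * lp σ) ∧ 2 * lp σ ≤ n := by
    intro σ
    have htot := Stmt11Aux.total x (Stmt11Aux.aperm n σ) (Stmt11Aux.aperm_zero n σ) n hn
      (Stmt11Aux.aperm_pos n σ) (Stmt11Aux.aperm_adj n σ)
    have hP : lp σ = Stmt11Aux.P n (Stmt11Aux.aperm n σ) := Stmt11Aux.lpeak_eq n hn σ
    have hsum : (∑ ε : Fin n → Bool, x ^ desB n 1 (bval n σ ε)) =
        ∑ s : Fin n → Bool, x ^ Stmt11Aux.D n (Stmt11Aux.aperm n σ) (Stmt11Aux.ext n s) := by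
      apply Fintype.sum_congr
      intro ε
      rw [Stmt11Aux.desB_eq n hn σ ε]
    rw [hsum, hP]
    exact htot
  calc ∑ σ : Equiv.Perm (Fin n), ∑ ε : Fin n → Bool, x ^ desB n 1 (bval n σ ε)
      = ∑ σ : Equiv.Perm (Fin n), 4 ^ lp σ * x ^ lp σ * (1 + x) ^ (n - 2 * lp σ) := by
        apply Fintype.sum_congr; intro σ; exact (key σ).1
    _ = ∑ p ∈ Finset.range (n / 2 + 1), ∑ σ ∈ Finset.univ.filter (fun σ => lp σ = p),
          4 ^ lp σ * x ^ lp σ * (1 + x) ^ (n - 2 * lp σ) := by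
        refine (Finset.sum_fiberwise_of_maps_to (fun σ _ => ?_) _).symm
        simp only [Finset.mem_range]
        have := (key σ).2
        omega
    _ = _ := by
        apply Finset.sum_congr rfl
        intro p hp
        have hterm : ∀ σ ∈ Finset.univ.filter (fun σ => lp σ = p),
            (4:R) ^ lp σ * x ^ lp σ * (1 + x) ^ (n - 2 * lp σ) =
            4 ^ p * x ^ p * (1 + x) ^ (n - 2 * p) := by
          intro σ hσ
          rw [(Finset.mem_filter.1 hσ).2]
        rw [Finset.sum_congr rfl hterm, Finset.sum_const, nsmul_eq_mul]
        have hcard : (Finset.univ.filter (fun σ => lp σ = p)).card =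
            Fintype.card {σ : Equiv.Perm (Fin n) // lp σ = p} := (Fintype.card_subtype _).symm
        rw [hcard]
        ring
end

section
/- For any signed permutation π ∈ B_n and 1 ≤ k ≤ n, the generating function of the width-k type-B order polynomial is Σ_{p ≥ 0} Ω_B(π, k, p) x^p = x^{des_k^B(π)} / (1-x)^{n-k+2}. -/
/-!
Let `c s` be the number of descents at positions `≤ s`. Subtracting `c` from a chain counted by
`Ω_B(π, k, p)` leaves a weakly increasing map `{0, …, N} → {0, …, p - des}` (here `N = n - k`),
and adding the identity to that makes it strictly increasing into `{0, …, p - des + N}`, i.e. an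
`(N + 1)`-subset. Hence `Ω_B(π, k, p) = C(p - des + N + 1, N + 1)` for `p ≥ des` and `0` otherwise,
which are the coefficients of `X ^ des / (1 - X) ^ (N + 2)`.
-/

open Finset

/-- The width-`k` type-B order polynomial `Ω_B(π,k,p)`: the number of chains
`0 ≤ g_1 ≤ … ≤ g_{n-k+1} ≤ p` with a strict increase at step `s` (and `0 < g_1` for `s = 0`)
precisely when `s ∈ {0,…,n-k}` is a width-`k` type-B descent of `π`. -/
def OmegaB (n k p : ℕ) (π : ℤ → ℤ) : ℕ :=
  Fintype.card {g : Fin (n - k + 1) → Fin (p + 1) //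
    (∀ a b : Fin (n - k + 1), a ≤ b → g a ≤ g b) ∧
    ∀ s : Fin (n - k + 1), π (s : ℕ) > π (((s : ℕ) : ℤ) + k) →
      (((s : ℕ) = 0 → (0 : ℕ) < g s) ∧
       (0 < (s : ℕ) →
         (g ⟨(s : ℕ) - 1, lt_of_le_of_lt (Nat.sub_le _ _) s.isLt⟩ : ℕ) < (g s : ℕ)))}

theorem card_strictMono_fin (m M : ℕ) :
    Nat.card {f : Fin m → Fin M // StrictMono f} = M.choose m := by
  have e : {f : Fin m → Fin M // StrictMono f} ≃ {s : Finset (Fin M) // s.card = m} :=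
    { toFun := fun f => ⟨univ.image f.1, by
        rw [card_image_of_injective _ f.2.injective, card_univ, Fintype.card_fin]⟩
      invFun := fun s => ⟨orderEmbOfFin s.1 s.2, (orderEmbOfFin s.1 s.2).strictMono⟩
      left_inv := fun f => Subtype.ext
        ((orderEmbOfFin_unique _ (fun x => mem_image_of_mem _ (mem_univ x)) f.2).symm)
      right_inv := fun s => Subtype.ext <| by
        rw [← coe_inj, coe_image, coe_univ, Set.image_univ, range_orderEmbOfFin] }
  rw [Nat.card_congr e, Nat.card_eq_fintype_card, Fintype.card_finset_len, Fintype.card_fin]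

theorem strictMono_iff_monotone_sub_val {N M : ℕ} {f : Fin (N + 1) → Fin M} :
    StrictMono f ↔ Monotone fun s => (f s : ℤ) - s := by
  rw [Fin.strictMono_iff_lt_succ, Fin.monotone_iff_le_succ]
  refine forall_congr' fun i => ?_
  simp only [Fin.lt_def, Fin.val_castSucc, Fin.val_succ]
  omega

def monotoneSubEquiv {N p : ℕ} (c : Fin (N + 1) → ℕ) (hc : Monotone c)
    (hp : c (Fin.last N) ≤ p) :
    {g : Fin (N + 1) → Fin (p + 1) // c 0 ≤ g 0 ∧ Monotone fun s => (g s : ℤ) - c s} ≃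
      {h : Fin (N + 1) → Fin (p - c (Fin.last N) + 1) // Monotone h} where
  toFun g := ⟨fun s => ⟨g.1 s - c s, by
      have h0 := g.2.2 (Fin.zero_le s)
      have hN := g.2.2 (Fin.le_last s)
      have := (g.1 (Fin.last N)).isLt
      have := g.2.1
      simp only at h0 hN
      omega⟩, fun a b hab => by
      have h0 := g.2.2 (Fin.zero_le a)
      have hab := g.2.2 hab
      have := g.2.1
      simp only [Fin.mk_le_mk] at h0 hab ⊢
      omega⟩
  invFun h := ⟨fun s => ⟨h.1 s + c s, by
      have := (h.1 s).isLt
      have := hc (Fin.le_last s)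
      omega⟩, by simp, fun a b hab => by simpa using h.2 hab⟩
  left_inv g := by
    ext s
    have h0 := g.2.2 (Fin.zero_le s)
    have := g.2.1
    simp only at h0 ⊢
    omega
  right_inv h := by
    ext s
    simp

theorem card_monotone_fin (N q : ℕ) :
    Nat.card {h : Fin (N + 1) → Fin (q + 1) // Monotone h} = (q + (N + 1)).choose (N + 1) := by
  have e := monotoneSubEquiv (p := q + N) (fun s : Fin (N + 1) => (s : ℕ)) (fun _ _ h => h)
    (by simp)
  rw [Fin.val_last, add_tsub_cancel_right] at e
  simp only [Fin.val_zero, zero_le, true_and, ← strictMono_iff_monotone_sub_val] at e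
  rw [← Nat.card_congr e, card_strictMono_fin, add_assoc]

def IsDescentChain (P : ℕ → Prop) {N p : ℕ} (g : Fin (N + 1) → Fin (p + 1)) : Prop :=
  (∀ a b : Fin (N + 1), a ≤ b → g a ≤ g b) ∧
    ∀ s : Fin (N + 1), P s →
      (((s : ℕ) = 0 → (0 : ℕ) < g s) ∧
       (0 < (s : ℕ) →
         (g ⟨(s : ℕ) - 1, lt_of_le_of_lt (Nat.sub_le _ _) s.isLt⟩ : ℕ) < (g s : ℕ)))

theorem isDescentChain_iff {P : ℕ → Prop} [DecidablePred P] {N p : ℕ}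
    {g : Fin (N + 1) → Fin (p + 1)} :
    IsDescentChain P g ↔
      Nat.count P 1 ≤ g 0 ∧ Monotone fun s : Fin (N + 1) => (g s : ℤ) - Nat.count P (s + 1) := by
  constructor
  · rintro ⟨hmono, hdesc⟩
    refine ⟨?_, Fin.monotone_iff_le_succ.2 fun i => ?_⟩
    · rw [Nat.count_one]
      split_ifs with h0
      exacts [(hdesc 0 h0).1 rfl, Nat.zero_le _]
    · simp only [Fin.val_castSucc, Fin.val_succ, Nat.count_succ _ ((i : ℕ) + 1)]
      split_ifs with hi
      · have := (hdesc i.succ hi).2 i.succ_pos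
        simp only [Fin.val_succ, Nat.add_sub_cancel] at this
        change (g i.castSucc : ℕ) < g i.succ at this
        push_cast
        omega
      · have := hmono _ _ (Fin.castSucc_le_succ i)
        rw [Fin.le_def] at this
        push_cast
        omega
  · rintro ⟨h0, hmono⟩
    refine ⟨fun a b hab => ?_, fun s hs => ⟨fun hs0 => ?_, fun hspos => ?_⟩⟩
    · have := hmono hab
      have := Nat.count_monotone P (Nat.succ_le_succ (Fin.le_def.1 hab))
      simp only [Fin.le_def, Nat.succ_eq_add_one] at *
      omega
    · obtain rfl : s = 0 := Fin.ext hs0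
      rw [Fin.val_zero] at hs
      rw [Nat.count_one, if_pos hs] at h0
      exact h0
    · have := hmono
        (show (⟨s - 1, by omega⟩ : Fin (N + 1)) ≤ s from Fin.le_def.2 (Nat.sub_le _ _))
      have hcount : Nat.count P (s + 1) = Nat.count P (s - 1 + 1) + 1 := by
        rw [Nat.count_succ, Nat.sub_add_cancel hspos, if_pos hs]
      simp only at this
      omega

theorem card_isDescentChain (P : ℕ → Prop) [DecidablePred P] (N p : ℕ) :
    Nat.card {g : Fin (N + 1) → Fin (p + 1) // IsDescentChain P g} =
      if Nat.count P (N + 1) ≤ p then (p - Nat.count P (N + 1) + (N + 1)).choose (N + 1)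
      else 0 := by
  split_ifs with hp
  · rw [← card_monotone_fin]
    exact Nat.card_congr <| (Equiv.subtypeEquivRight fun _ => isDescentChain_iff).trans
      (monotoneSubEquiv (fun s => Nat.count P (s + 1))
        (fun a b hab => Nat.count_monotone P (Nat.succ_le_succ hab)) hp)
  · rw [Nat.card_eq_zero]
    left
    refine ⟨fun ⟨g, hg⟩ => hp ?_⟩
    obtain ⟨h0, hmono⟩ := isDescentChain_iff.1 hg
    have := hmono (Fin.zero_le (Fin.last N))
    have := (g (Fin.last N)).isLt
    simp only [Fin.val_last, Fin.val_zero, zero_add] at *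
    omega

theorem mk_card_isDescentChain_mul_one_sub_pow {R : Type*} [CommRing R] (P : ℕ → Prop)
    [DecidablePred P] (N : ℕ) :
    PowerSeries.mk (fun p =>
        (Nat.card {g : Fin (N + 1) → Fin (p + 1) // IsDescentChain P g} : R)) *
        (1 - PowerSeries.X) ^ (N + 2) =
      PowerSeries.X ^ Nat.count P (N + 1) := by
  have hmk : PowerSeries.mk (fun p =>
      (Nat.card {g : Fin (N + 1) → Fin (p + 1) // IsDescentChain P g} : R)) =
      PowerSeries.X ^ Nat.count P (N + 1) *
        PowerSeries.mk fun q => ((N + 1 + q).choose (N + 1) : R) := by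
    ext p
    rw [PowerSeries.coeff_mk, PowerSeries.coeff_X_pow_mul', card_isDescentChain]
    split_ifs
    · rw [PowerSeries.coeff_mk, add_comm (N + 1)]
    · exact Nat.cast_zero
  rw [hmk, mul_assoc, PowerSeries.mk_add_choose_mul_one_sub_pow_eq_one, mul_one]

theorem stmt12_general (n k : ℕ)
    (σ : Equiv.Perm (Fin n)) (ε : Fin n → Bool) :
    PowerSeries.mk (fun p => (OmegaB n k p (bval n σ ε) : ℤ)) *
        (1 - PowerSeries.X) ^ (n - k + 2) =
      PowerSeries.X ^ desB n k (bval n σ ε) := by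
  have hOmega : ∀ p, OmegaB n k p (bval n σ ε) =
      Nat.card {g : Fin (n - k + 1) → Fin (p + 1) //
        IsDescentChain (fun i : ℕ => bval n σ ε i > bval n σ ε ((i : ℤ) + k)) g} :=
    fun p => Nat.card_eq_fintype_card.symm
  have hdes : desB n k (bval n σ ε) =
      Nat.count (fun i : ℕ => bval n σ ε i > bval n σ ε ((i : ℤ) + k)) (n - k + 1) :=
    (Nat.count_eq_card_filter_range _ _).symm
  simp only [hOmega, hdes]
  exact mk_card_isDescentChain_mul_one_sub_pow _ _

/-- Theorem 20: `Σ_{p ≥ 0} Ω_B(π,k,p) x^p = x^{des_k^B(π)}/(1-x)^{n-k+2}`,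
as an identity of formal power series (denominator cleared). -/
theorem stmt12 (n k : ℕ) (hk : 1 ≤ k) (hkn : k ≤ n)
    (σ : Equiv.Perm (Fin n)) (ε : Fin n → Bool) :
    PowerSeries.mk (fun p => (OmegaB n k p (bval n σ ε) : ℤ)) *
        (1 - PowerSeries.X) ^ (n - k + 2) =
      PowerSeries.X ^ desB n k (bval n σ ε) :=
  stmt12_general n k σ ε
end
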